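/- arXiv:1707.05069 — 3 statements merged into one kernel-verified Lean document; each statement's English description precedes it below -/
import Mathlib

section
/- Let P be a finite projective plane and M_P the associated simple rank-3 matroid. There exists a countably infinite simple ∧-matroid M_*(P) of rank 3 omitting M_P such that: (universality) every finite simple ∧-matroid of rank ≤ 3 omitting M_P embeds into M_*(P); and (homogeneity) every isomorphism between finite substructures of M_*(P) extends to an automorphism of M_*(P). -/
namespace PaoliniMatroids

open Function Set

/-- The "line" through `a` and `b` determined by a ternary collinearity relation `R`:
the set `{a, b} ∪ {x | R a b x}`. -/
def lineOf {V : Type*} (R : V → V → V → Prop) (a b : V) : Set V :=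
  {a, b} ∪ {x | R a b x}

/-- A simple ∧-matroid of rank ≤ 3, with domain `carrier` inside the ambient type `V`.
`R` is the ternary dependency (collinearity) relation and `wedge` is the 4-ary
intersection-of-lines function determined by `R`. -/
structure WM (V : Type*) where
  carrier : Set V
  R : V → V → V → Prop
  wedge : V → V → V → V → V
  R_mem : ∀ a b c, R a b c → a ∈ carrier ∧ b ∈ carrier ∧ c ∈ carrier
  wedge_mem : ∀ a b c d, a ∈ carrier → b ∈ carrier → c ∈ carrier → d ∈ carrier →
      wedge a b c d ∈ carrier
  irrefl : ∀ a b c, R a b c → a ≠ b ∧ a ≠ c ∧ b ≠ c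
  symm_swap : ∀ a b c, R a b c → R b a c
  symm_rot : ∀ a b c, R a b c → R b c a
  exchange : ∀ a b c d, R a b c → R a b d → ∀ x y z,
      x ∈ ({a, b, c, d} : Set V) → y ∈ ({a, b, c, d} : Set V) → z ∈ ({a, b, c, d} : Set V) →
      x ≠ y → x ≠ z → y ≠ z → R x y z
  wedge_det : ∀ a b c d, a ∈ carrier → b ∈ carrier → c ∈ carrier → d ∈ carrier →
      (a ≠ b ∧ c ≠ d ∧ lineOf R a b ≠ lineOf R c d ∧
        wedge a b c d ∈ lineOf R a b ∧ wedge a b c d ∈ lineOf R c d ∧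
        wedge a b c d ∉ ({a, b, c, d} : Set V)) ∨
      (wedge a b c d = a ∧ ¬ ∃ p, a ≠ b ∧ c ≠ d ∧ lineOf R a b ≠ lineOf R c d ∧
        p ∈ lineOf R a b ∧ p ∈ lineOf R c d ∧ p ∉ ({a, b, c, d} : Set V))

/-- An embedding of ∧-matroids: an injective map (on the domain) preserving `R`
in both directions and preserving the ∧-function. -/
structure IsEmb {V W : Type*} (M : WM V) (N : WM W) (f : V → W) : Prop where
  maps : ∀ x ∈ M.carrier, f x ∈ N.carrier
  inj : ∀ x ∈ M.carrier, ∀ y ∈ M.carrier, f x = f y → x = y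
  rel : ∀ a ∈ M.carrier, ∀ b ∈ M.carrier, ∀ c ∈ M.carrier,
      (M.R a b c ↔ N.R (f a) (f b) (f c))
  wedge : ∀ a ∈ M.carrier, ∀ b ∈ M.carrier, ∀ c ∈ M.carrier, ∀ d ∈ M.carrier,
      f (M.wedge a b c d) = N.wedge (f a) (f b) (f c) (f d)

/-- An isomorphism of ∧-matroids: an embedding which is onto the target domain. -/
def IsIso {V W : Type*} (M : WM V) (N : WM W) (f : V → W) : Prop :=
  IsEmb M N f ∧ N.carrier ⊆ f '' M.carrier

/-- `M` is a substructure of `N`: the domain of `M` is a subset of that of `N`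
(necessarily closed under the ∧-function of `N`) and `R`, `∧` are induced. -/
structure Sub {V : Type*} (M N : WM V) : Prop where
  sub : M.carrier ⊆ N.carrier
  rel : ∀ a ∈ M.carrier, ∀ b ∈ M.carrier, ∀ c ∈ M.carrier, (M.R a b c ↔ N.R a b c)
  wedge : ∀ a ∈ M.carrier, ∀ b ∈ M.carrier, ∀ c ∈ M.carrier, ∀ d ∈ M.carrier,
      M.wedge a b c d = N.wedge a b c d

/-- The matroid has rank 3: there are three (pairwise distinct) non-collinear points. -/
def Rank3 {V : Type*} (M : WM V) : Prop :=
  ∃ a ∈ M.carrier, ∃ b ∈ M.carrier, ∃ c ∈ M.carrier,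
    a ≠ b ∧ a ≠ c ∧ b ≠ c ∧ ¬ M.R a b c

/-- An automorphism of a ∧-matroid: a bijection of the domain preserving `R` in both
directions and preserving the ∧-function. -/
def IsAut {V : Type*} (M : WM V) (g : V → V) : Prop :=
  Set.BijOn g M.carrier M.carrier ∧
  (∀ a ∈ M.carrier, ∀ b ∈ M.carrier, ∀ c ∈ M.carrier,
      (M.R a b c ↔ M.R (g a) (g b) (g c))) ∧
  (∀ a ∈ M.carrier, ∀ b ∈ M.carrier, ∀ c ∈ M.carrier, ∀ d ∈ M.carrier,
      g (M.wedge a b c d) = M.wedge (g a) (g b) (g c) (g d))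

/-- A projective plane: a point-line incidence system where two distinct points lie on a
unique common line, two distinct lines meet in a unique point, and there are four points
no three of which are collinear. -/
structure ProjPlane where
  Point : Type
  Line : Type
  incid : Point → Line → Prop
  unique_line : ∀ p q : Point, p ≠ q → ∃! l : Line, incid p l ∧ incid q l
  unique_point : ∀ l m : Line, l ≠ m → ∃! p : Point, incid p l ∧ incid p m
  nondeg : ∃ p₁ p₂ p₃ p₄ : Point, p₁ ≠ p₂ ∧ p₁ ≠ p₃ ∧ p₁ ≠ p₄ ∧ p₂ ≠ p₃ ∧ p₂ ≠ p₄ ∧ p₃ ≠ p₄ ∧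
    ∀ l : Line, ¬(incid p₁ l ∧ incid p₂ l ∧ incid p₃ l) ∧
      ¬(incid p₁ l ∧ incid p₂ l ∧ incid p₄ l) ∧
      ¬(incid p₁ l ∧ incid p₃ l ∧ incid p₄ l) ∧
      ¬(incid p₂ l ∧ incid p₃ l ∧ incid p₄ l)

/-- The ternary relation of the simple rank-3 matroid `M_P` associated with a projective
plane: `R a b c` iff `a, b, c` are pairwise distinct collinear points. -/
def ProjPlane.Rmat (P : ProjPlane) (a b c : P.Point) : Prop :=
  a ≠ b ∧ a ≠ c ∧ b ≠ c ∧ ∃ l : P.Line, P.incid a l ∧ P.incid b l ∧ P.incid c l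

/-- `N` omits the matroid `M_P` of the projective plane `P`: no subset of the domain of `N`,
with the induced ternary relation, is isomorphic (as a matroid) to `M_P`. -/
def Omits {V : Type*} (N : WM V) (P : ProjPlane) : Prop :=
  ¬ ∃ e : P.Point → V, Function.Injective e ∧ (∀ p, e p ∈ N.carrier) ∧
      ∀ a b c, P.Rmat a b c ↔ N.R (e a) (e b) (e c)

/-! ### Basic lemmas about simple rank-≤3 matroids -/

section Basics

variable {V : Type*}

theorem mem_lineOf {R : V → V → V → Prop} {a b x : V} :
    x ∈ lineOf R a b ↔ x = a ∨ x = b ∨ R a b x := by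
  simp [lineOf, Set.mem_union, Set.mem_insert_iff, or_assoc]

theorem left_mem_lineOf {R : V → V → V → Prop} (a b : V) : a ∈ lineOf R a b :=
  mem_lineOf.2 (Or.inl rfl)

theorem right_mem_lineOf {R : V → V → V → Prop} (a b : V) : b ∈ lineOf R a b :=
  mem_lineOf.2 (Or.inr (Or.inl rfl))

theorem R_mem_lineOf {R : V → V → V → Prop} {a b x : V} (h : R a b x) : x ∈ lineOf R a b :=
  mem_lineOf.2 (Or.inr (Or.inr h))

namespace WM

variable (M : WM V)

theorem Rperm {a b c : V} (h : M.R a b c) :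
    M.R a c b ∧ M.R b a c ∧ M.R b c a ∧ M.R c a b ∧ M.R c b a := by
  have h1 := M.symm_rot _ _ _ h        -- R b c a
  have h2 := M.symm_rot _ _ _ h1       -- R c a b
  exact ⟨M.symm_swap _ _ _ h2, M.symm_swap _ _ _ h, h1, h2, M.symm_swap _ _ _ h1⟩

theorem mem_lineOf_carrier {a b x : V} (ha : a ∈ M.carrier) (hb : b ∈ M.carrier)
    (hx : x ∈ lineOf M.R a b) : x ∈ M.carrier := by
  rcases mem_lineOf.1 hx with rfl | rfl | h
  · exact ha
  · exact hb
  · exact (M.R_mem _ _ _ h).2.2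

theorem lineOf_subset_carrier {a b : V} (ha : a ∈ M.carrier) (hb : b ∈ M.carrier) :
    lineOf M.R a b ⊆ M.carrier := fun _ hx => M.mem_lineOf_carrier ha hb hx

/-- If `c, d` lie on the line through `a, b`, then every point of the line through `c, d`
lies on the line through `a, b`. -/
theorem lineOf_subset {a b c d : V} (hab : a ≠ b) (hcd : c ≠ d)
    (hc : c ∈ lineOf M.R a b) (hd : d ∈ lineOf M.R a b) :
    lineOf M.R c d ⊆ lineOf M.R a b := by
  intro x hx
  rcases mem_lineOf.1 hx with hx0 | hx0 | hR
  · exact hx0 ▸ hc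
  · exact hx0 ▸ hd
  obtain ⟨-, hcx, hdx⟩ := M.irrefl _ _ _ hR
  rcases eq_or_ne x a with rfl | hxa
  · exact left_mem_lineOf _ _
  rcases eq_or_ne x b with rfl | hxb
  · exact right_mem_lineOf _ _
  refine mem_lineOf.2 (Or.inr (Or.inr ?_))
  rcases mem_lineOf.1 hc with hc0 | hc0 | hc'
  · -- c = a
    rcases mem_lineOf.1 hd with hd0 | hd0 | hd'
    · exact absurd (hc0.trans hd0.symm) hcd
    · rw [hc0, hd0] at hR; exact hR
    · rw [hc0] at hR
      exact M.exchange a d b x (M.Rperm hd').1 hR a b x (by simp) (by simp) (by simp)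
        hab (Ne.symm hxa) (Ne.symm hxb)
  · -- c = b
    rcases mem_lineOf.1 hd with hd0 | hd0 | hd'
    · rw [hc0, hd0] at hR; exact (M.Rperm hR).2.1
    · exact absurd (hc0.trans hd0.symm) hcd
    · rw [hc0] at hR
      exact M.exchange b d a x (M.Rperm hd').2.2.1 hR a b x (by simp) (by simp) (by simp)
        hab (Ne.symm hxa) (Ne.symm hxb)
  · -- R a b c
    obtain ⟨-, hac, hbc⟩ := M.irrefl _ _ _ hc'
    rcases mem_lineOf.1 hd with hd0 | hd0 | hd'
    · -- d = a : R c a x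
      rw [hd0] at hR
      exact M.exchange a c b x (M.Rperm hc').1 ((M.Rperm hR).2.1) a b x
        (by simp) (by simp) (by simp) hab (Ne.symm hxa) (Ne.symm hxb)
    · -- d = b : R c b x
      rw [hd0] at hR
      exact M.exchange b c a x (M.Rperm hc').2.2.1 ((M.Rperm hR).2.1) a b x
        (by simp) (by simp) (by simp) hab (Ne.symm hxa) (Ne.symm hxb)
    · -- R a b c, R a b d, R c d x
      obtain ⟨-, had, hbd⟩ := M.irrefl _ _ _ hd'
      have hRcda : M.R c d a := M.exchange a b c d hc' hd' c d a (by simp) (by simp) (by simp)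
        hcd (Ne.symm hac) (Ne.symm had)
      have hRacx : M.R a c x := M.exchange c d a x hRcda hR a c x (by simp) (by simp)
        (by simp) hac (Ne.symm hxa) hcx
      exact M.exchange a c b x (M.Rperm hc').1 hRacx a b x (by simp) (by simp) (by simp)
        hab (Ne.symm hxa) (Ne.symm hxb)

theorem mem_lineOf_rev {a b c d : V} (hab : a ≠ b) (hcd : c ≠ d)
    (hc : c ∈ lineOf M.R a b) (hd : d ∈ lineOf M.R a b) :
    a ∈ lineOf M.R c d ∧ b ∈ lineOf M.R c d := by
  constructor
  · rcases eq_or_ne a c with hac | hac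
    · exact hac ▸ left_mem_lineOf _ _
    rcases eq_or_ne a d with had | had
    · exact had ▸ right_mem_lineOf _ _
    refine mem_lineOf.2 (Or.inr (Or.inr ?_))
    rcases mem_lineOf.1 hc with hc0 | hc0 | hc'
    · exact absurd hc0.symm hac
    · rcases mem_lineOf.1 hd with hd0 | hd0 | hd'
      · exact absurd hd0.symm had
      · exact absurd (hc0.trans hd0.symm) hcd
      · rw [hc0]; exact (M.Rperm hd').2.2.1
    · rcases mem_lineOf.1 hd with hd0 | hd0 | hd'
      · exact absurd hd0.symm had
      · rw [hd0]; exact (M.Rperm hc').2.2.2.2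
      · exact M.exchange a b c d hc' hd' c d a (by simp) (by simp) (by simp)
          hcd (Ne.symm hac) (Ne.symm had)
  · rcases eq_or_ne b c with hbc | hbc
    · exact hbc ▸ left_mem_lineOf _ _
    rcases eq_or_ne b d with hbd | hbd
    · exact hbd ▸ right_mem_lineOf _ _
    refine mem_lineOf.2 (Or.inr (Or.inr ?_))
    rcases mem_lineOf.1 hc with hc0 | hc0 | hc'
    · rcases mem_lineOf.1 hd with hd0 | hd0 | hd'
      · exact absurd (hc0.trans hd0.symm) hcd
      · exact absurd hd0.symm hbd
      · rw [hc0]; exact (M.Rperm hd').1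
    · exact absurd hc0.symm hbc
    · rcases mem_lineOf.1 hd with hd0 | hd0 | hd'
      · rw [hd0]; exact (M.Rperm hc').2.2.2.1
      · exact absurd hd0.symm hbd
      · exact M.exchange a b c d hc' hd' c d b (by simp) (by simp) (by simp)
          hcd (Ne.symm hbc) (Ne.symm hbd)

theorem lineOf_eq {a b c d : V} (hab : a ≠ b) (hcd : c ≠ d)
    (hc : c ∈ lineOf M.R a b) (hd : d ∈ lineOf M.R a b) :
    lineOf M.R c d = lineOf M.R a b := by
  obtain ⟨ha, hb⟩ := M.mem_lineOf_rev hab hcd hc hd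
  exact Set.Subset.antisymm (M.lineOf_subset hab hcd hc hd) (M.lineOf_subset hcd hab ha hb)

theorem line_trip {a b x y z : V} (hab : a ≠ b)
    (hx : x ∈ lineOf M.R a b) (hy : y ∈ lineOf M.R a b) (hz : z ∈ lineOf M.R a b)
    (hxy : x ≠ y) (hxz : x ≠ z) (hyz : y ≠ z) : M.R x y z := by
  have := M.lineOf_eq hab hxy hx hy
  rw [← this] at hz
  rcases mem_lineOf.1 hz with rfl | rfl | h
  · exact absurd rfl (Ne.symm hxz)
  · exact absurd rfl (Ne.symm hyz)
  · exact h

theorem lineOf_eq_of_two_mem {a b c d p q : V} (hab : a ≠ b) (hcd : c ≠ d) (hpq : p ≠ q)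
    (hp1 : p ∈ lineOf M.R a b) (hq1 : q ∈ lineOf M.R a b)
    (hp2 : p ∈ lineOf M.R c d) (hq2 : q ∈ lineOf M.R c d) :
    lineOf M.R a b = lineOf M.R c d :=
  (M.lineOf_eq hab hpq hp1 hq1).symm.trans (M.lineOf_eq hcd hpq hp2 hq2)

/-- If the two lines are distinct and `p` is a common point avoiding the four base points,
then the wedge equals `p`. -/
theorem wedge_eq_point {a b c d p : V} (ha : a ∈ M.carrier) (hb : b ∈ M.carrier)
    (hc : c ∈ M.carrier) (hd : d ∈ M.carrier) (hab : a ≠ b) (hcd : c ≠ d)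
    (hne : lineOf M.R a b ≠ lineOf M.R c d)
    (hp1 : p ∈ lineOf M.R a b) (hp2 : p ∈ lineOf M.R c d)
    (hp4 : p ∉ ({a, b, c, d} : Set V)) : M.wedge a b c d = p := by
  rcases M.wedge_det a b c d ha hb hc hd with ⟨-, -, -, hw1, hw2, hw4⟩ | ⟨-, hno⟩
  · by_contra hwp
    exact hne (M.lineOf_eq_of_two_mem hab hcd (Ne.symm hwp) hp1 hw1 hp2 hw2)
  · exact absurd ⟨p, hab, hcd, hne, hp1, hp2, hp4⟩ hno

/-- The wedge function is determined (on the carrier) by the carrier and the relation. -/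
theorem wedge_eq_wedge (M' : WM V) (hcar : M.carrier = M'.carrier) (hR : M.R = M'.R)
    {a b c d : V} (ha : a ∈ M.carrier) (hb : b ∈ M.carrier)
    (hc : c ∈ M.carrier) (hd : d ∈ M.carrier) :
    M.wedge a b c d = M'.wedge a b c d := by
  have ha' : a ∈ M'.carrier := hcar ▸ ha
  have hb' : b ∈ M'.carrier := hcar ▸ hb
  have hc' : c ∈ M'.carrier := hcar ▸ hc
  have hd' : d ∈ M'.carrier := hcar ▸ hd
  rcases M.wedge_det a b c d ha hb hc hd with ⟨hab, hcd, hne, hw1, hw2, hw4⟩ | ⟨hwa, hno⟩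
  · rw [hR] at hne hw1 hw2
    exact (M'.wedge_eq_point ha' hb' hc' hd' hab hcd hne hw1 hw2 hw4).symm
  · rcases M'.wedge_det a b c d ha' hb' hc' hd' with ⟨hab, hcd, hne, hw1, hw2, hw4⟩ | ⟨hwa', -⟩
    · rw [← hR] at hne hw1 hw2
      exact absurd ⟨M'.wedge a b c d, hab, hcd, hne, hw1, hw2, hw4⟩ hno
    · rw [hwa, hwa']

end WM

end Basics
/-! ### Basic lemmas about projective planes -/

namespace ProjPlane

variable (P : ProjPlane)

/-- The line through two distinct points. -/
noncomputable def lp {p q : P.Point} (h : p ≠ q) : P.Line :=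
  (P.unique_line p q h).choose

theorem incid_lp_left {p q : P.Point} (h : p ≠ q) : P.incid p (P.lp h) :=
  (P.unique_line p q h).choose_spec.1.1

theorem incid_lp_right {p q : P.Point} (h : p ≠ q) : P.incid q (P.lp h) :=
  (P.unique_line p q h).choose_spec.1.2

theorem lp_unique {p q : P.Point} (h : p ≠ q) {l : P.Line}
    (hp : P.incid p l) (hq : P.incid q l) : l = P.lp h :=
  (P.unique_line p q h).choose_spec.2 l ⟨hp, hq⟩

theorem line_eq_line {p q : P.Point} (h : p ≠ q) {l m : P.Line}
    (hpl : P.incid p l) (hql : P.incid q l) (hpm : P.incid p m) (hqm : P.incid q m) :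
    l = m := (P.lp_unique h hpl hql).trans (P.lp_unique h hpm hqm).symm

theorem point_eq_point {l m : P.Line} (h : l ≠ m) {p q : P.Point}
    (hpl : P.incid p l) (hpm : P.incid p m) (hql : P.incid q l) (hqm : P.incid q m) :
    p = q := by
  obtain ⟨x, -, hu⟩ := P.unique_point l m h
  rw [hu p ⟨hpl, hpm⟩, hu q ⟨hql, hqm⟩]

/-- Some point lies off any given line. -/
theorem exists_off_line (l : P.Line) : ∃ q, ¬ P.incid q l := by
  obtain ⟨p1, p2, p3, p4, h12, h13, h14, h23, h24, h34, hno⟩ := P.nondeg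
  by_cases hi1 : P.incid p1 l
  · by_cases hi2 : P.incid p2 l
    · by_cases hi3 : P.incid p3 l
      · exact absurd ⟨hi1, hi2, hi3⟩ (hno l).1
      · exact ⟨p3, hi3⟩
    · exact ⟨p2, hi2⟩
  · exact ⟨p1, hi1⟩

/-- Every line of a projective plane carries at least three distinct points. -/
theorem exists_three_on_line (l : P.Line) :
    ∃ x y z, x ≠ y ∧ x ≠ z ∧ y ≠ z ∧ P.incid x l ∧ P.incid y l ∧ P.incid z l := by
  obtain ⟨p1, p2, p3, p4, h12, h13, h14, h23, h24, h34, hno⟩ := P.nondeg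
  -- A generic step: `q` off `l` joined to three points in "general position".
  have sub : ∀ q a b c : P.Point, ¬ P.incid q l → q ≠ a → q ≠ b → q ≠ c →
      (∀ m, ¬ (P.incid q m ∧ P.incid a m ∧ P.incid b m)) →
      (∀ m, ¬ (P.incid q m ∧ P.incid a m ∧ P.incid c m)) →
      (∀ m, ¬ (P.incid q m ∧ P.incid b m ∧ P.incid c m)) →
      ∃ x y z, x ≠ y ∧ x ≠ z ∧ y ≠ z ∧ P.incid x l ∧ P.incid y l ∧ P.incid z l := by
    intro q a b c hq hqa hqb hqc nab nac nbc
    have hlqa : P.lp hqa ≠ l := fun h => hq (h ▸ P.incid_lp_left hqa)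
    have hlqb : P.lp hqb ≠ l := fun h => hq (h ▸ P.incid_lp_left hqb)
    have hlqc : P.lp hqc ≠ l := fun h => hq (h ▸ P.incid_lp_left hqc)
    have hab : P.lp hqa ≠ P.lp hqb := fun h =>
      nab (P.lp hqb) ⟨P.incid_lp_left hqb, h ▸ P.incid_lp_right hqa, P.incid_lp_right hqb⟩
    have hac : P.lp hqa ≠ P.lp hqc := fun h =>
      nac (P.lp hqc) ⟨P.incid_lp_left hqc, h ▸ P.incid_lp_right hqa, P.incid_lp_right hqc⟩
    have hbc : P.lp hqb ≠ P.lp hqc := fun h =>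
      nbc (P.lp hqc) ⟨P.incid_lp_left hqc, h ▸ P.incid_lp_right hqb, P.incid_lp_right hqc⟩
    obtain ⟨xa, ⟨hxa1, hxa2⟩, -⟩ := P.unique_point _ _ hlqa
    obtain ⟨xb, ⟨hxb1, hxb2⟩, -⟩ := P.unique_point _ _ hlqb
    obtain ⟨xc, ⟨hxc1, hxc2⟩, -⟩ := P.unique_point _ _ hlqc
    have hxaq : xa ≠ q := fun h => hq (h ▸ hxa2)
    have hxbq : xb ≠ q := fun h => hq (h ▸ hxb2)
    have hxcq : xc ≠ q := fun h => hq (h ▸ hxc2)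
    refine ⟨xa, xb, xc, ?_, ?_, ?_, hxa2, hxb2, hxc2⟩
    · intro h
      exact hxaq (P.point_eq_point hab hxa1 (h ▸ hxb1) (P.incid_lp_left hqa) (P.incid_lp_left hqb))
    · intro h
      exact hxaq (P.point_eq_point hac hxa1 (h ▸ hxc1) (P.incid_lp_left hqa) (P.incid_lp_left hqc))
    · intro h
      exact hxbq (P.point_eq_point hbc hxb1 (h ▸ hxc1) (P.incid_lp_left hqb) (P.incid_lp_left hqc))
  by_cases hi1 : P.incid p1 l
  · by_cases hi2 : P.incid p2 l
    · by_cases hi3 : P.incid p3 l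
      · exact absurd ⟨hi1, hi2, hi3⟩ (hno l).1
      · exact sub p3 p1 p2 p4 hi3 (Ne.symm h13) (Ne.symm h23) h34
          (fun m h => (hno m).1 ⟨h.2.1, h.2.2, h.1⟩)
          (fun m h => (hno m).2.2.1 ⟨h.2.1, h.1, h.2.2⟩)
          (fun m h => (hno m).2.2.2 ⟨h.2.1, h.1, h.2.2⟩)
    · exact sub p2 p1 p3 p4 hi2 (Ne.symm h12) h23 h24
        (fun m h => (hno m).1 ⟨h.2.1, h.1, h.2.2⟩)
        (fun m h => (hno m).2.1 ⟨h.2.1, h.1, h.2.2⟩)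
        (fun m h => (hno m).2.2.2 ⟨h.1, h.2.1, h.2.2⟩)
  · exact sub p1 p2 p3 p4 hi1 h12 h13 h14
      (fun m h => (hno m).1 ⟨h.1, h.2.1, h.2.2⟩)
      (fun m h => (hno m).2.1 ⟨h.1, h.2.1, h.2.2⟩)
      (fun m h => (hno m).2.2.1 ⟨h.1, h.2.1, h.2.2⟩)

theorem exists_ne_point (u : P.Point) : ∃ p, p ≠ u := by
  obtain ⟨p1, p2, -, -, h12, -⟩ := P.nondeg
  rcases eq_or_ne p1 u with rfl | h
  · exact ⟨p2, Ne.symm h12⟩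
  · exact ⟨p1, h⟩

/-- Through any point there is a line different from any given line. -/
theorem exists_line_ne (u : P.Point) (l : P.Line) : ∃ m, P.incid u m ∧ m ≠ l := by
  by_cases hu : P.incid u l
  · obtain ⟨q, hq⟩ := P.exists_off_line l
    have hqu : u ≠ q := fun h => hq (h ▸ hu)
    exact ⟨P.lp hqu, P.incid_lp_left hqu, fun h => hq (h ▸ P.incid_lp_right hqu)⟩
  · obtain ⟨p, hp⟩ := P.exists_ne_point u
    exact ⟨P.lp (Ne.symm hp), P.incid_lp_left _, fun h => hu (h ▸ P.incid_lp_left (Ne.symm hp))⟩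

/-- A collinear triple lies on the line through its first two points. -/
theorem incid_lp_of_Rmat {u v w : P.Point} (h : P.Rmat u v w) (huv : u ≠ v) :
    P.incid w (P.lp huv) := by
  obtain ⟨-, -, -, l, hul, hvl, hwl⟩ := h
  rwa [P.lp_unique huv hul hvl] at hwl

theorem Rmat_of_incid {u v w : P.Point} (huv : u ≠ v) (huw : u ≠ w) (hvw : v ≠ w)
    {l : P.Line} (hu : P.incid u l) (hv : P.incid v l) (hw : P.incid w l) :
    P.Rmat u v w := ⟨huv, huw, hvw, l, hu, hv, hw⟩

/-- A third point on the line through two distinct points. -/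
theorem exists_third (u v : P.Point) (huv : u ≠ v) :
    ∃ w, w ≠ u ∧ w ≠ v ∧ P.Rmat u v w := by
  obtain ⟨x, y, z, hxy, hxz, hyz, hx, hy, hz⟩ := P.exists_three_on_line (P.lp huv)
  have key : ∀ w, P.incid w (P.lp huv) → w ≠ u → w ≠ v → ∃ w', w' ≠ u ∧ w' ≠ v ∧ P.Rmat u v w' :=
    fun w hw h1 h2 => ⟨w, h1, h2,
      P.Rmat_of_incid huv (Ne.symm h1) (Ne.symm h2) (P.incid_lp_left huv) (P.incid_lp_right huv) hw⟩
  rcases eq_or_ne x u with rfl | hxu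
  · rcases eq_or_ne y v with rfl | hyv
    · exact key z hz (Ne.symm hxz) (Ne.symm hyz)
    · exact key y hy (Ne.symm hxy) hyv
  · rcases eq_or_ne x v with rfl | hxv
    · rcases eq_or_ne y u with rfl | hyu
      · exact key z hz (Ne.symm hyz) (Ne.symm hxz)
      · exact key y hy hyu (Ne.symm hxy)
    · exact key x hx hxu hxv

/-- Given a point `u` on a line `l`, there are two further points forming with `u` a
collinear triple meeting `l` only in `u`. -/
theorem exists_two_off (u : P.Point) (l : P.Line) (hu : P.incid u l) :
    ∃ x y, x ≠ y ∧ x ≠ u ∧ y ≠ u ∧ ¬ P.incid x l ∧ ¬ P.incid y l ∧ P.Rmat u x y := by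
  obtain ⟨m, hum, hml⟩ := P.exists_line_ne u l
  obtain ⟨x, y, z, hxy, hxz, hyz, hx, hy, hz⟩ := P.exists_three_on_line m
  have key : ∀ a b, a ≠ b → a ≠ u → b ≠ u → P.incid a m → P.incid b m →
      ∃ x y, x ≠ y ∧ x ≠ u ∧ y ≠ u ∧ ¬ P.incid x l ∧ ¬ P.incid y l ∧ P.Rmat u x y := by
    intro a b hab hau hbu ham hbm
    have hal : ¬ P.incid a l := fun h => hau (P.point_eq_point hml ham h hum hu)
    have hbl : ¬ P.incid b l := fun h => hbu (P.point_eq_point hml hbm h hum hu)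
    exact ⟨a, b, hab, hau, hbu, hal, hbl,
      P.Rmat_of_incid (Ne.symm hau) (Ne.symm hbu) hab hum ham hbm⟩
  rcases eq_or_ne x u with rfl | hxu
  · exact key y z hyz (Ne.symm hxy) (Ne.symm hxz) hy hz
  · rcases eq_or_ne y u with rfl | hyu
    · exact key x z hxz hxu (Ne.symm hyz) hx hz
    · exact key x y hxy hxu hyu hx hy

/-- There exists a collinear triple in a projective plane. -/
theorem exists_Rmat : ∃ u v w, P.Rmat u v w := by
  obtain ⟨p1, p2, -, -, h12, -⟩ := P.nondeg
  obtain ⟨w, -, -, h⟩ := P.exists_third p1 p2 h12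
  exact ⟨p1, p2, w, h⟩

end ProjPlane
/-! ### Structural lemmas: substructures, embeddings, restrictions, transports, closure -/

open scoped Classical

section Struct

variable {V W U : Type*}

theorem Sub.refl (M : WM V) : Sub M M := ⟨le_rfl, fun _ _ _ _ _ _ => Iff.rfl, fun _ _ _ _ _ _ _ _ => rfl⟩

theorem Sub.trans {A B C : WM V} (h1 : Sub A B) (h2 : Sub B C) : Sub A C where
  sub := h1.sub.trans h2.sub
  rel a ha b hb c hc := (h1.rel a ha b hb c hc).trans
    (h2.rel a (h1.sub ha) b (h1.sub hb) c (h1.sub hc))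
  wedge a ha b hb c hc d hd := (h1.wedge a ha b hb c hc d hd).trans
    (h2.wedge a (h1.sub ha) b (h1.sub hb) c (h1.sub hc) d (h1.sub hd))

theorem Sub.isEmb {A B : WM V} (h : Sub A B) : IsEmb A B id where
  maps x hx := h.sub hx
  inj _ _ _ _ hxy := hxy
  rel a ha b hb c hc := h.rel a ha b hb c hc
  wedge a ha b hb c hc d hd := h.wedge a ha b hb c hc d hd

theorem IsEmb.comp {M : WM V} {N : WM W} {O : WM U} {f : V → W} {g : W → U}
    (h1 : IsEmb M N f) (h2 : IsEmb N O g) : IsEmb M O (g ∘ f) where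
  maps x hx := h2.maps _ (h1.maps x hx)
  inj x hx y hy hxy := h1.inj x hx y hy (h2.inj _ (h1.maps x hx) _ (h1.maps y hy) hxy)
  rel a ha b hb c hc := (h1.rel a ha b hb c hc).trans
    (h2.rel _ (h1.maps a ha) _ (h1.maps b hb) _ (h1.maps c hc))
  wedge a ha b hb c hc d hd := by
    simp only [Function.comp_apply]
    rw [h1.wedge a ha b hb c hc d hd, h2.wedge _ (h1.maps a ha) _ (h1.maps b hb) _
      (h1.maps c hc) _ (h1.maps d hd)]

/-- An embedding between structures that share carrier, relation, and wedge data. -/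
theorem IsEmb.of_same {M M' : WM V} (hcar : M.carrier = M'.carrier) (hR : M.R = M'.R) :
    IsEmb M M' id where
  maps x hx := hcar ▸ hx
  inj _ _ _ _ h := h
  rel _ _ _ _ _ _ := hR ▸ Iff.rfl
  wedge a ha b hb c hc d hd := M.wedge_eq_wedge M' hcar hR ha hb hc hd

/-! #### Restriction of a structure to a wedge-closed subset -/

/-- The restricted structure on a wedge-closed subset `s` of the carrier of `B`. -/
noncomputable def restrWM (B : WM V) (s : Set V) (hs : s ⊆ B.carrier)
    (hcl : ∀ a b c d, a ∈ s → b ∈ s → c ∈ s → d ∈ s → B.wedge a b c d ∈ s) : WM V where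
  carrier := s
  R a b c := a ∈ s ∧ b ∈ s ∧ c ∈ s ∧ B.R a b c
  wedge a b c d := if a ∈ s ∧ b ∈ s ∧ c ∈ s ∧ d ∈ s then B.wedge a b c d else a
  R_mem a b c h := ⟨h.1, h.2.1, h.2.2.1⟩
  wedge_mem a b c d ha hb hc hd := by
    rw [if_pos ⟨ha, hb, hc, hd⟩]; exact hcl a b c d ha hb hc hd
  irrefl a b c h := B.irrefl a b c h.2.2.2
  symm_swap a b c h := ⟨h.2.1, h.1, h.2.2.1, B.symm_swap _ _ _ h.2.2.2⟩
  symm_rot a b c h := ⟨h.2.1, h.2.2.1, h.1, B.symm_rot _ _ _ h.2.2.2⟩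
  exchange a b c d h1 h2 x y z hx hy hz hxy hxz hyz := by
    have hmem : ∀ w ∈ ({a, b, c, d} : Set V), w ∈ s := by
      intro w hw
      rcases hw with rfl | rfl | rfl | rfl
      · exact h1.1
      · exact h1.2.1
      · exact h1.2.2.1
      · exact h2.2.2.1
    exact ⟨hmem x hx, hmem y hy, hmem z hz,
      B.exchange a b c d h1.2.2.2 h2.2.2.2 x y z hx hy hz hxy hxz hyz⟩
  wedge_det a b c d ha hb hc hd := by
    have hline : ∀ x y, x ∈ s → y ∈ s →
        lineOf (fun a b c => a ∈ s ∧ b ∈ s ∧ c ∈ s ∧ B.R a b c) x y = lineOf B.R x y ∩ s := by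
      intro x y hx hy
      ext u
      constructor
      · intro hu
        rcases mem_lineOf.1 hu with rfl | rfl | h
        · exact ⟨left_mem_lineOf _ _, hx⟩
        · exact ⟨right_mem_lineOf _ _, hy⟩
        · exact ⟨R_mem_lineOf h.2.2.2, h.2.2.1⟩
      · rintro ⟨hu, hus⟩
        rcases mem_lineOf.1 hu with rfl | rfl | h
        · exact left_mem_lineOf _ _
        · exact right_mem_lineOf _ _
        · exact mem_lineOf.2 (Or.inr (Or.inr ⟨hx, hy, hus, h⟩))
    rcases B.wedge_det a b c d (hs ha) (hs hb) (hs hc) (hs hd) with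
      ⟨hab, hcd, hne, hw1, hw2, hw4⟩ | ⟨hwa, hno⟩
    · left
      rw [if_pos ⟨ha, hb, hc, hd⟩, hline a b ha hb, hline c d hc hd]
      have hws : B.wedge a b c d ∈ s := hcl a b c d ha hb hc hd
      refine ⟨hab, hcd, ?_, ⟨hw1, hws⟩, ⟨hw2, hws⟩, hw4⟩
      intro h
      have hcmem : c ∈ lineOf B.R a b ∩ s := h ▸ ⟨left_mem_lineOf _ _, hc⟩
      have hdmem : d ∈ lineOf B.R a b ∩ s := h ▸ ⟨right_mem_lineOf _ _, hd⟩
      exact hne (B.lineOf_eq hab hcd hcmem.1 hdmem.1).symm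
    · right
      rw [if_pos ⟨ha, hb, hc, hd⟩, hwa]
      refine ⟨rfl, ?_⟩
      rintro ⟨p, hab, hcd, hne, hp1, hp2, hp4⟩
      rw [hline a b ha hb] at hp1 hne
      rw [hline c d hc hd] at hp2 hne
      refine hno ⟨p, hab, hcd, ?_, hp1.1, hp2.1, hp4⟩
      intro h
      exact hne (by rw [h])

theorem restr_sub (B : WM V) (s : Set V) (hs : s ⊆ B.carrier)
    (hcl : ∀ a b c d, a ∈ s → b ∈ s → c ∈ s → d ∈ s → B.wedge a b c d ∈ s) :
    Sub (restrWM B s hs hcl) B where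
  sub := hs
  rel a ha b hb c hc := ⟨fun h => h.2.2.2, fun h => ⟨ha, hb, hc, h⟩⟩
  wedge a ha b hb c hc d hd := if_pos ⟨ha, hb, hc, hd⟩

theorem restr_carrier (B : WM V) (s : Set V) (hs) (hcl) :
    (restrWM B s hs hcl).carrier = s := rfl

/-! #### The wedge-closure of a set -/

/-- Closure of a set under the wedge function of `B`. -/
def wcl (B : WM V) (s : Set V) : Set V :=
  ⋂₀ {t | s ⊆ t ∧ t ⊆ B.carrier ∧
    ∀ a b c d, a ∈ t → b ∈ t → c ∈ t → d ∈ t → B.wedge a b c d ∈ t}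

theorem subset_wcl (B : WM V) {s : Set V} : s ⊆ wcl B s :=
  fun _ hx _ ht => ht.1 hx

theorem wcl_subset_carrier (B : WM V) {s : Set V} (hs : s ⊆ B.carrier) :
    wcl B s ⊆ B.carrier :=
  Set.sInter_subset_of_mem ⟨hs, le_rfl, fun a b c d ha hb hc hd => B.wedge_mem a b c d ha hb hc hd⟩

theorem wcl_closed (B : WM V) {s : Set V} :
    ∀ a b c d, a ∈ wcl B s → b ∈ wcl B s → c ∈ wcl B s → d ∈ wcl B s →
      B.wedge a b c d ∈ wcl B s :=
  fun a b c d ha hb hc hd _ ht => ht.2.2 a b c d (ha _ ht) (hb _ ht) (hc _ ht) (hd _ ht)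

theorem wcl_finite (B : WM V) {s : Set V} (hs : s ⊆ B.carrier) (hfin : B.carrier.Finite) :
    (wcl B s).Finite := hfin.subset (wcl_subset_carrier B hs)

theorem wcl_eq_of_sub {B C : WM V} (hBC : Sub B C) {s : Set V} (hs : s ⊆ B.carrier) :
    wcl B s = wcl C s := by
  apply Set.Subset.antisymm
  · -- every C-admissible t yields the B-admissible t ∩ B.carrier
    intro x hx t ht
    have hBt : x ∈ t ∩ B.carrier := by
      refine hx _ ⟨fun y hy => ⟨ht.1 hy, hs hy⟩, Set.inter_subset_right, ?_⟩
      intro a b c d ha hb hc hd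
      refine ⟨?_, B.wedge_mem a b c d ha.2 hb.2 hc.2 hd.2⟩
      rw [hBC.wedge a ha.2 b hb.2 c hc.2 d hd.2]
      exact ht.2.2 a b c d ha.1 hb.1 hc.1 hd.1
    exact hBt.1
  · -- every B-admissible t is C-admissible
    intro x hx t ht
    refine hx _ ⟨ht.1, ht.2.1.trans hBC.sub, ?_⟩
    intro a b c d ha hb hc hd
    rw [← hBC.wedge a (ht.2.1 ha) b (ht.2.1 hb) c (ht.2.1 hc) d (ht.2.1 hd)]
    exact ht.2.2 a b c d ha hb hc hd

end Struct
/-! ### Transport of a structure along a map injective on the carrier -/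

section MapWM

open Function

variable {W V : Type*} [Nonempty W]

/-- Transported relation. -/
def mapR (N : WM W) (f : W → V) : V → V → V → Prop := fun x y z =>
  x ∈ f '' N.carrier ∧ y ∈ f '' N.carrier ∧ z ∈ f '' N.carrier ∧
  N.R (invFunOn f N.carrier x) (invFunOn f N.carrier y) (invFunOn f N.carrier z)

/-- Transported wedge. -/
noncomputable def mapW (N : WM W) (f : W → V) : V → V → V → V → V := fun x y z w =>
  if x ∈ f '' N.carrier ∧ y ∈ f '' N.carrier ∧ z ∈ f '' N.carrier ∧ w ∈ f '' N.carrier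
  then f (N.wedge (invFunOn f N.carrier x) (invFunOn f N.carrier y)
    (invFunOn f N.carrier z) (invFunOn f N.carrier w))
  else x

variable {N : WM W} {f : W → V}

theorem map_fg {x : V} (hx : x ∈ f '' N.carrier) : f (invFunOn f N.carrier x) = x := by
  obtain ⟨a, ha, rfl⟩ := hx
  exact invFunOn_eq ⟨a, ha, rfl⟩

theorem map_gmem {x : V} (hx : x ∈ f '' N.carrier) : invFunOn f N.carrier x ∈ N.carrier := by
  obtain ⟨a, ha, rfl⟩ := hx
  exact invFunOn_mem ⟨a, ha, rfl⟩

theorem map_gf (hf : Set.InjOn f N.carrier) {a : W} (ha : a ∈ N.carrier) :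
    invFunOn f N.carrier (f a) = a := hf.leftInvOn_invFunOn ha

theorem map_gInj {x y : V} (hx : x ∈ f '' N.carrier) (hy : y ∈ f '' N.carrier)
    (h : invFunOn f N.carrier x = invFunOn f N.carrier y) : x = y := by
  rw [← map_fg hx, ← map_fg hy, h]

theorem mapR_iff (hf : Set.InjOn f N.carrier) {a b c : W} (ha : a ∈ N.carrier)
    (hb : b ∈ N.carrier) (hc : c ∈ N.carrier) :
    mapR N f (f a) (f b) (f c) ↔ N.R a b c := by
  unfold mapR
  rw [map_gf hf ha, map_gf hf hb, map_gf hf hc]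
  exact ⟨fun h => h.2.2.2, fun h => ⟨Set.mem_image_of_mem f ha, Set.mem_image_of_mem f hb,
    Set.mem_image_of_mem f hc, h⟩⟩

theorem mapLine (hf : Set.InjOn f N.carrier) {a b : W} (ha : a ∈ N.carrier)
    (hb : b ∈ N.carrier) :
    lineOf (mapR N f) (f a) (f b) = f '' lineOf N.R a b := by
  ext u
  constructor
  · intro hu
    rcases mem_lineOf.1 hu with rfl | rfl | h
    · exact ⟨a, left_mem_lineOf _ _, rfl⟩
    · exact ⟨b, right_mem_lineOf _ _, rfl⟩
    · obtain ⟨t, htc, rfl⟩ := h.2.2.1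
      have := h.2.2.2
      rw [map_gf hf ha, map_gf hf hb, map_gf hf htc] at this
      exact ⟨t, R_mem_lineOf this, rfl⟩
  · rintro ⟨t, ht, rfl⟩
    rcases mem_lineOf.1 ht with rfl | rfl | h
    · exact left_mem_lineOf _ _
    · exact right_mem_lineOf _ _
    · refine mem_lineOf.2 (Or.inr (Or.inr ?_))
      have htc : t ∈ N.carrier := (N.R_mem _ _ _ h).2.2
      refine ⟨Set.mem_image_of_mem f ha, Set.mem_image_of_mem f hb,
        Set.mem_image_of_mem f htc, ?_⟩
      rw [map_gf hf ha, map_gf hf hb, map_gf hf htc]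
      exact h

/-- Transport of a whole structure along a map injective on the carrier. -/
noncomputable def mapWM (N : WM W) (f : W → V) (hf : Set.InjOn f N.carrier) : WM V where
  carrier := f '' N.carrier
  R := mapR N f
  wedge := mapW N f
  R_mem _ _ _ h := ⟨h.1, h.2.1, h.2.2.1⟩
  wedge_mem x y z w hx hy hz hw := by
    unfold mapW
    rw [if_pos ⟨hx, hy, hz, hw⟩]
    exact Set.mem_image_of_mem f (N.wedge_mem _ _ _ _ (map_gmem hx) (map_gmem hy)
      (map_gmem hz) (map_gmem hw))
  irrefl x y z h := by
    obtain ⟨d1, d2, d3⟩ := N.irrefl _ _ _ h.2.2.2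
    exact ⟨fun e => d1 (by rw [e]), fun e => d2 (by rw [e]), fun e => d3 (by rw [e])⟩
  symm_swap x y z h := ⟨h.2.1, h.1, h.2.2.1, N.symm_swap _ _ _ h.2.2.2⟩
  symm_rot x y z h := ⟨h.2.1, h.2.2.1, h.1, N.symm_rot _ _ _ h.2.2.2⟩
  exchange a b c d h1 h2 x y z hx hy hz hxy hxz hyz := by
    have mem4 : ∀ u ∈ ({a, b, c, d} : Set V), u ∈ f '' N.carrier := by
      intro u hu
      rcases hu with rfl | rfl | rfl | rfl
      · exact h1.1
      · exact h1.2.1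
      · exact h1.2.2.1
      · exact h2.2.2.1
    set g := invFunOn f N.carrier with hg
    have gmem4 : ∀ u ∈ ({a, b, c, d} : Set V), g u ∈ ({g a, g b, g c, g d} : Set W) := by
      intro u hu
      rcases hu with rfl | rfl | rfl | rfl
      · exact Set.mem_insert _ _
      · exact Set.mem_insert_of_mem _ (Set.mem_insert _ _)
      · exact Set.mem_insert_of_mem _ (Set.mem_insert_of_mem _ (Set.mem_insert _ _))
      · exact Set.mem_insert_of_mem _ (Set.mem_insert_of_mem _ (Set.mem_insert_of_mem _ rfl))
    refine ⟨mem4 x hx, mem4 y hy, mem4 z hz, ?_⟩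
    exact N.exchange (g a) (g b) (g c) (g d) h1.2.2.2 h2.2.2.2 (g x) (g y) (g z)
      (gmem4 x hx) (gmem4 y hy) (gmem4 z hz)
      (fun e => hxy (map_gInj (mem4 x hx) (mem4 y hy) e))
      (fun e => hxz (map_gInj (mem4 x hx) (mem4 z hz) e))
      (fun e => hyz (map_gInj (mem4 y hy) (mem4 z hz) e))
  wedge_det x y z w hx hy hz hw := by
    obtain ⟨a, ha, rfl⟩ := hx
    obtain ⟨b, hb, rfl⟩ := hy
    obtain ⟨c, hc, rfl⟩ := hz
    obtain ⟨d, hd, rfl⟩ := hw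
    have hcond : f a ∈ f '' N.carrier ∧ f b ∈ f '' N.carrier ∧ f c ∈ f '' N.carrier ∧
        f d ∈ f '' N.carrier :=
      ⟨Set.mem_image_of_mem f ha, Set.mem_image_of_mem f hb, Set.mem_image_of_mem f hc,
        Set.mem_image_of_mem f hd⟩
    rcases N.wedge_det a b c d ha hb hc hd with ⟨hab, hcd, hne, hw1, hw2, hw4⟩ | ⟨hwa, hno⟩
    · left
      have hwcar := N.wedge_mem a b c d ha hb hc hd
      unfold mapW
      rw [if_pos hcond, map_gf hf ha, map_gf hf hb, map_gf hf hc, map_gf hf hd,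
        mapLine hf ha hb, mapLine hf hc hd]
      refine ⟨fun e => hab (hf ha hb e), fun e => hcd (hf hc hd e), ?_,
        Set.mem_image_of_mem f hw1, Set.mem_image_of_mem f hw2, ?_⟩
      · intro e
        exact hne ((hf.image_eq_image_iff (N.lineOf_subset_carrier ha hb)
          (N.lineOf_subset_carrier hc hd)).1 e)
      · intro hmem
        simp only [Set.mem_insert_iff, Set.mem_singleton_iff] at hmem
        rcases hmem with e | e | e | e
        · exact hw4 (by rw [hf hwcar ha e]; simp)
        · exact hw4 (by rw [hf hwcar hb e]; simp)
        · exact hw4 (by rw [hf hwcar hc e]; simp)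
        · exact hw4 (by rw [hf hwcar hd e]; simp)
    · right
      constructor
      · unfold mapW
        rw [if_pos hcond, map_gf hf ha, map_gf hf hb, map_gf hf hc, map_gf hf hd, hwa]
      · rintro ⟨p, hfab, hfcd, hfne, hp1, hp2, hp4⟩
        rw [mapLine hf ha hb] at hp1 hfne
        rw [mapLine hf hc hd] at hp2 hfne
        obtain ⟨t, ht1, rfl⟩ := hp1
        obtain ⟨t', ht2, et⟩ := hp2
        have htt : t' = t := hf (N.mem_lineOf_carrier hc hd ht2) (N.mem_lineOf_carrier ha hb ht1) et
        rw [htt] at ht2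
        refine hno ⟨t, fun e => hfab (by rw [e]), fun e => hfcd (by rw [e]),
          fun e => hfne (by rw [e]), ht1, ht2, ?_⟩
        intro hmem
        apply hp4
        rcases hmem with rfl | rfl | rfl | rfl
        · simp
        · simp
        · simp
        · simp

theorem map_carrier (N : WM W) (f : W → V) (hf : Set.InjOn f N.carrier) :
    (mapWM N f hf).carrier = f '' N.carrier := rfl

theorem map_rel_iff (N : WM W) (f : W → V) (hf : Set.InjOn f N.carrier) {a b c : W}
    (ha : a ∈ N.carrier) (hb : b ∈ N.carrier) (hc : c ∈ N.carrier) :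
    (mapWM N f hf).R (f a) (f b) (f c) ↔ N.R a b c := mapR_iff hf ha hb hc

theorem map_wedge (N : WM W) (f : W → V) (hf : Set.InjOn f N.carrier) {a b c d : W}
    (ha : a ∈ N.carrier) (hb : b ∈ N.carrier) (hc : c ∈ N.carrier) (hd : d ∈ N.carrier) :
    (mapWM N f hf).wedge (f a) (f b) (f c) (f d) = f (N.wedge a b c d) := by
  show mapW N f _ _ _ _ = _
  unfold mapW
  rw [if_pos ⟨Set.mem_image_of_mem f ha, Set.mem_image_of_mem f hb, Set.mem_image_of_mem f hc,
    Set.mem_image_of_mem f hd⟩, map_gf hf ha, map_gf hf hb, map_gf hf hc, map_gf hf hd]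

theorem map_isEmb (N : WM W) (f : W → V) (hf : Set.InjOn f N.carrier) :
    IsEmb N (mapWM N f hf) f where
  maps x hx := Set.mem_image_of_mem f hx
  inj x hx y hy e := hf hx hy e
  rel a ha b hb c hc := (map_rel_iff N f hf ha hb hc).symm
  wedge a ha b hb c hc d hd := (map_wedge N f hf ha hb hc hd).symm

theorem map_omits (N : WM W) (f : W → V) (hf : Set.InjOn f N.carrier) (P : ProjPlane)
    (hN : Omits N P) : Omits (mapWM N f hf) P := by
  rintro ⟨e, einj, emem, erel⟩
  refine hN ⟨fun p => invFunOn f N.carrier (e p), ?_, fun p => map_gmem (emem p), ?_⟩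
  · intro p q h
    exact einj (map_gInj (emem p) (emem q) h)
  · intro a b c
    rw [erel a b c]
    exact ⟨fun h => h.2.2.2, fun h => ⟨emem a, emem b, emem c, h⟩⟩

theorem map_sub {A B : WM W} (hAB : Sub A B) (f : W → V) (hfB : Set.InjOn f B.carrier) :
    Sub (mapWM A f (hfB.mono hAB.sub)) (mapWM B f hfB) where
  sub := Set.image_mono hAB.sub
  rel x hx y hy z hz := by
    obtain ⟨a, ha, rfl⟩ := hx
    obtain ⟨b, hb, rfl⟩ := hy
    obtain ⟨c, hc, rfl⟩ := hz
    exact (map_rel_iff A f _ ha hb hc).trans ((hAB.rel a ha b hb c hc).trans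
      (map_rel_iff B f hfB (hAB.sub ha) (hAB.sub hb) (hAB.sub hc)).symm)
  wedge x hx y hy z hz w hw := by
    obtain ⟨a, ha, rfl⟩ := hx
    obtain ⟨b, hb, rfl⟩ := hy
    obtain ⟨c, hc, rfl⟩ := hz
    obtain ⟨d, hd, rfl⟩ := hw
    rw [map_wedge A f _ ha hb hc hd, map_wedge B f hfB (hAB.sub ha) (hAB.sub hb) (hAB.sub hc)
      (hAB.sub hd), hAB.wedge a ha b hb c hc d hd]

end MapWM
/-! ### The free amalgam of two structures over a common substructure -/

section GenW

variable {V : Type*}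

/-- The canonical wedge function determined by a ternary relation. -/
noncomputable def genW (R : V → V → V → Prop) : V → V → V → V → V := fun x y z w =>
  if h : ∃ p, x ≠ y ∧ z ≠ w ∧ lineOf R x y ≠ lineOf R z w ∧
      p ∈ lineOf R x y ∧ p ∈ lineOf R z w ∧ p ∉ ({x, y, z, w} : Set V)
  then h.choose else x

theorem genW_pos {R : V → V → V → Prop} {x y z w : V}
    (h : ∃ p, x ≠ y ∧ z ≠ w ∧ lineOf R x y ≠ lineOf R z w ∧
      p ∈ lineOf R x y ∧ p ∈ lineOf R z w ∧ p ∉ ({x, y, z, w} : Set V)) :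
    x ≠ y ∧ z ≠ w ∧ lineOf R x y ≠ lineOf R z w ∧
      genW R x y z w ∈ lineOf R x y ∧ genW R x y z w ∈ lineOf R z w ∧
      genW R x y z w ∉ ({x, y, z, w} : Set V) := by
  unfold genW
  rw [dif_pos h]
  obtain ⟨h1, h2, h3, h4, h5, h6⟩ := h.choose_spec
  exact ⟨h1, h2, h3, h4, h5, h6⟩

theorem genW_neg {R : V → V → V → Prop} {x y z w : V}
    (h : ¬∃ p, x ≠ y ∧ z ≠ w ∧ lineOf R x y ≠ lineOf R z w ∧
      p ∈ lineOf R x y ∧ p ∈ lineOf R z w ∧ p ∉ ({x, y, z, w} : Set V)) :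
    genW R x y z w = x := by
  unfold genW
  rw [dif_neg h]

/-- `genW` always satisfies the determination axiom. -/
theorem genW_det (R : V → V → V → Prop) (x y z w : V) :
    (x ≠ y ∧ z ≠ w ∧ lineOf R x y ≠ lineOf R z w ∧
      genW R x y z w ∈ lineOf R x y ∧ genW R x y z w ∈ lineOf R z w ∧
      genW R x y z w ∉ ({x, y, z, w} : Set V)) ∨
    (genW R x y z w = x ∧ ¬ ∃ p, x ≠ y ∧ z ≠ w ∧ lineOf R x y ≠ lineOf R z w ∧
      p ∈ lineOf R x y ∧ p ∈ lineOf R z w ∧ p ∉ ({x, y, z, w} : Set V)) := by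
  by_cases h : ∃ p, x ≠ y ∧ z ≠ w ∧ lineOf R x y ≠ lineOf R z w ∧
      p ∈ lineOf R x y ∧ p ∈ lineOf R z w ∧ p ∉ ({x, y, z, w} : Set V)
  · exact Or.inl (genW_pos h)
  · exact Or.inr ⟨genW_neg h, h⟩

end GenW

section Amal

variable {V : Type*}

/-- The merged line through two points of the common part. -/
def mlineB (B C : WM V) (a b : V) : Set V := lineOf B.R a b ∪ lineOf C.R a b

/-- The relation of the free amalgam. -/
def amalR (B C A : WM V) : V → V → V → Prop := fun x y z =>
  x ≠ y ∧ x ≠ z ∧ y ≠ z ∧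
  (B.R x y z ∨ C.R x y z ∨ ∃ a b, a ∈ A.carrier ∧ b ∈ A.carrier ∧ a ≠ b ∧
    x ∈ mlineB B C a b ∧ y ∈ mlineB B C a b ∧ z ∈ mlineB B C a b)

/-- The lines of the free amalgam. -/
def IsDL (B C A : WM V) (ℓ : Set V) : Prop :=
  (∃ a b, a ≠ b ∧ a ∈ B.carrier ∧ b ∈ B.carrier ∧ ℓ = lineOf B.R a b ∧
    ¬∃ u v, u ∈ A.carrier ∧ v ∈ A.carrier ∧ u ≠ v ∧ u ∈ ℓ ∧ v ∈ ℓ) ∨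
  (∃ a b, a ≠ b ∧ a ∈ C.carrier ∧ b ∈ C.carrier ∧ ℓ = lineOf C.R a b ∧
    ¬∃ u v, u ∈ A.carrier ∧ v ∈ A.carrier ∧ u ≠ v ∧ u ∈ ℓ ∧ v ∈ ℓ) ∨
  (∃ a b, a ∈ A.carrier ∧ b ∈ A.carrier ∧ a ≠ b ∧ ℓ = mlineB B C a b)

/-- Hypotheses for amalgamation. -/
structure AmalHyp (B C A : WM V) : Prop where
  subB : Sub A B
  subC : Sub A C
  inter : B.carrier ∩ C.carrier ⊆ A.carrier

theorem AmalHyp.swap {B C A : WM V} (h : AmalHyp B C A) : AmalHyp C B A :=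
  ⟨h.subC, h.subB, fun x hx => h.inter ⟨hx.2, hx.1⟩⟩

theorem mlineB_comm (B C : WM V) (a b : V) : mlineB B C a b = mlineB C B a b :=
  Set.union_comm _ _

theorem amalR_comm_mp {B C A : WM V} {x y z : V} (h : amalR B C A x y z) :
    amalR C B A x y z := by
  obtain ⟨h1, h2, h3, hB | hC | ⟨a, b, ha, hb, hab, hx, hy, hz⟩⟩ := h
  · exact ⟨h1, h2, h3, Or.inr (Or.inl hB)⟩
  · exact ⟨h1, h2, h3, Or.inl hC⟩
  · refine ⟨h1, h2, h3, Or.inr (Or.inr ⟨a, b, ha, hb, hab, ?_, ?_, ?_⟩)⟩ <;>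
      rw [← mlineB_comm] <;> assumption

theorem amalR_comm (B C A : WM V) : amalR B C A = amalR C B A := by
  funext x y z
  exact propext ⟨amalR_comm_mp, amalR_comm_mp⟩

theorem IsDL_comm {B C A : WM V} {ℓ : Set V} (h : IsDL B C A ℓ) : IsDL C B A ℓ := by
  rcases h with h | h | ⟨a, b, ha, hb, hab, rfl⟩
  · exact Or.inr (Or.inl h)
  · exact Or.inl h
  · exact Or.inr (Or.inr ⟨a, b, ha, hb, hab, (mlineB_comm B C a b)⟩)

variable {B C A : WM V}

theorem mlineB_subset (hA : A.carrier ⊆ B.carrier) (hA' : A.carrier ⊆ C.carrier)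
    {a b : V} (ha : a ∈ A.carrier) (hb : b ∈ A.carrier) :
    mlineB B C a b ⊆ B.carrier ∪ C.carrier := by
  rintro u (hu | hu)
  · exact Or.inl (B.mem_lineOf_carrier (hA ha) (hA hb) hu)
  · exact Or.inr (C.mem_lineOf_carrier (hA' ha) (hA' hb) hu)

theorem crossLine (h : AmalHyp B C A) {a b z : V} (ha : a ∈ A.carrier) (hb : b ∈ A.carrier)
    (hz : z ∈ A.carrier) (hzl : z ∈ lineOf B.R a b) : z ∈ lineOf C.R a b := by
  rcases mem_lineOf.1 hzl with rfl | rfl | hR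
  · exact left_mem_lineOf _ _
  · exact right_mem_lineOf _ _
  · exact R_mem_lineOf ((h.subC.rel a ha b hb z hz).1 ((h.subB.rel a ha b hb z hz).2 hR))

/-- Trace of a `C`-line on `B`: any point of `B` on a `C`-line through two points of `A`
lies in `A` and on the corresponding `B`-line. -/
theorem traceB (h : AmalHyp B C A) {a b z : V} (ha : a ∈ A.carrier) (hb : b ∈ A.carrier)
    (hzl : z ∈ lineOf C.R a b) (hzB : z ∈ B.carrier) :
    z ∈ A.carrier ∧ z ∈ lineOf B.R a b := by
  have hzC : z ∈ C.carrier := C.mem_lineOf_carrier (h.subC.sub ha) (h.subC.sub hb) hzl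
  have hzA : z ∈ A.carrier := h.inter ⟨hzB, hzC⟩
  exact ⟨hzA, crossLine h.swap ha hb hzA hzl⟩

theorem mlineB_inter_B (h : AmalHyp B C A) {a b : V} (ha : a ∈ A.carrier) (hb : b ∈ A.carrier) :
    mlineB B C a b ∩ B.carrier = lineOf B.R a b := by
  apply Set.Subset.antisymm
  · rintro u ⟨hu | hu, huB⟩
    · exact hu
    · exact (traceB h ha hb hu huB).2
  · intro u hu
    exact ⟨Or.inl hu, B.mem_lineOf_carrier (h.subB.sub ha) (h.subB.sub hb) hu⟩

/-- Two anchored `B`-lines meet only inside `A`. -/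
theorem anchorB (h : AmalHyp B C A) {a b c d z : V} (ha : a ∈ A.carrier) (hb : b ∈ A.carrier)
    (hc : c ∈ A.carrier) (hd : d ∈ A.carrier) (hab : a ≠ b) (hcd : c ≠ d)
    (hne : lineOf B.R a b ≠ lineOf B.R c d)
    (hz1 : z ∈ lineOf B.R a b) (hz2 : z ∈ lineOf B.R c d) : z ∈ A.carrier := by
  by_cases hz4 : z ∈ ({a, b, c, d} : Set V)
  · rcases hz4 with rfl | rfl | rfl | rfl
    · exact ha
    · exact hb
    · exact hc
    · exact hd
  · have := B.wedge_eq_point (h.subB.sub ha) (h.subB.sub hb) (h.subB.sub hc) (h.subB.sub hd)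
      hab hcd hne hz1 hz2 hz4
    rw [← this, ← h.subB.wedge a ha b hb c hc d hd]
    exact A.wedge_mem a b c d ha hb hc hd

/-- Equal `B`-lines through anchors give equal merged lines. -/
theorem mline_eq_of_lineB (h : AmalHyp B C A) {a b c d : V} (ha : a ∈ A.carrier)
    (hb : b ∈ A.carrier) (hc : c ∈ A.carrier) (hd : d ∈ A.carrier) (hab : a ≠ b) (hcd : c ≠ d)
    (he : lineOf B.R a b = lineOf B.R c d) : mlineB B C a b = mlineB B C c d := by
  have hcl : c ∈ lineOf B.R a b := he ▸ left_mem_lineOf _ _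
  have hdl : d ∈ lineOf B.R a b := he ▸ right_mem_lineOf _ _
  have hcl' : c ∈ lineOf C.R a b := crossLine h ha hb hc hcl
  have hdl' : d ∈ lineOf C.R a b := crossLine h ha hb hd hdl
  have heC : lineOf C.R c d = lineOf C.R a b := C.lineOf_eq hab hcd hcl' hdl'
  unfold mlineB
  rw [he, heC]

theorem lineB_subset_amal {x y : V} : lineOf B.R x y ⊆ lineOf (amalR B C A) x y := by
  intro u hu
  rcases mem_lineOf.1 hu with rfl | rfl | hR
  · exact left_mem_lineOf _ _
  · exact right_mem_lineOf _ _
  · obtain ⟨d1, d2, d3⟩ := B.irrefl _ _ _ hR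
    exact R_mem_lineOf ⟨d1, d2, d3, Or.inl hR⟩

theorem lineC_subset_amal {x y : V} : lineOf C.R x y ⊆ lineOf (amalR B C A) x y := by
  intro u hu
  rcases mem_lineOf.1 hu with rfl | rfl | hR
  · exact left_mem_lineOf _ _
  · exact right_mem_lineOf _ _
  · obtain ⟨d1, d2, d3⟩ := C.irrefl _ _ _ hR
    exact R_mem_lineOf ⟨d1, d2, d3, Or.inr (Or.inl hR)⟩

/-- Every related triple lies on an amalgam line. -/
theorem isDL_of_R (h : AmalHyp B C A) {x y z : V} (hR : amalR B C A x y z) :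
    ∃ ℓ, IsDL B C A ℓ ∧ x ∈ ℓ ∧ y ∈ ℓ ∧ z ∈ ℓ := by
  obtain ⟨hxy, hxz, hyz, hR⟩ := hR
  have main : ∀ (M : WM V), M.R x y z →
      (∀ a' b' c', M.R a' b' c' → amalR B C A a' b' c' ∨ True) →
      (M = B ∨ M = C) → ∃ ℓ, IsDL B C A ℓ ∧ x ∈ ℓ ∧ y ∈ ℓ ∧ z ∈ ℓ := by
    intro M hM _ hBC
    by_cases hanch : ∃ u v, u ∈ A.carrier ∧ v ∈ A.carrier ∧ u ≠ v ∧
        u ∈ lineOf M.R x y ∧ v ∈ lineOf M.R x y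
    · obtain ⟨u, v, huA, hvA, huv, hul, hvl⟩ := hanch
      have hle : lineOf M.R u v = lineOf M.R x y := M.lineOf_eq hxy huv hul hvl
      have hxm : x ∈ lineOf M.R u v := hle ▸ left_mem_lineOf _ _
      have hym : y ∈ lineOf M.R u v := hle ▸ right_mem_lineOf _ _
      have hzm : z ∈ lineOf M.R u v := hle ▸ R_mem_lineOf hM
      refine ⟨mlineB B C u v, Or.inr (Or.inr ⟨u, v, huA, hvA, huv, rfl⟩), ?_, ?_, ?_⟩
      · rcases hBC with rfl | rfl
        · exact Or.inl hxm
        · exact Or.inr hxm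
      · rcases hBC with rfl | rfl
        · exact Or.inl hym
        · exact Or.inr hym
      · rcases hBC with rfl | rfl
        · exact Or.inl hzm
        · exact Or.inr hzm
    · have hxc := (M.R_mem _ _ _ hM).1
      have hyc := (M.R_mem _ _ _ hM).2.1
      refine ⟨lineOf M.R x y, ?_, left_mem_lineOf _ _, right_mem_lineOf _ _, R_mem_lineOf hM⟩
      rcases hBC with rfl | rfl
      · exact Or.inl ⟨x, y, hxy, hxc, hyc, rfl, hanch⟩
      · exact Or.inr (Or.inl ⟨x, y, hxy, hxc, hyc, rfl, hanch⟩)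
  rcases hR with hB | hC | ⟨a, b, haA, hbA, hab, hxm, hym, hzm⟩
  · exact main B hB (fun _ _ _ _ => Or.inr trivial) (Or.inl rfl)
  · exact main C hC (fun _ _ _ _ => Or.inr trivial) (Or.inr rfl)
  · exact ⟨mlineB B C a b, Or.inr (Or.inr ⟨a, b, haA, hbA, hab, rfl⟩), hxm, hym, hzm⟩

/-- Any distinct triple on an amalgam line is related. -/
theorem R_of_DL (h : AmalHyp B C A) {ℓ : Set V} (hDL : IsDL B C A ℓ) {x y z : V}
    (hx : x ∈ ℓ) (hy : y ∈ ℓ) (hz : z ∈ ℓ) (hxy : x ≠ y) (hxz : x ≠ z) (hyz : y ≠ z) :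
    amalR B C A x y z := by
  refine ⟨hxy, hxz, hyz, ?_⟩
  rcases hDL with ⟨a, b, hab, -, -, rfl, -⟩ | ⟨a, b, hab, -, -, rfl, -⟩ |
    ⟨a, b, haA, hbA, hab, rfl⟩
  · exact Or.inl (B.line_trip hab hx hy hz hxy hxz hyz)
  · exact Or.inr (Or.inl (C.line_trip hab hx hy hz hxy hxz hyz))
  · exact Or.inr (Or.inr ⟨a, b, haA, hbA, hab, hx, hy, hz⟩)

/-- `B`-type lines lie inside the carrier of `B`. -/
theorem DL_B_subset {a b : V} (ha : a ∈ B.carrier) (hb : b ∈ B.carrier) :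
    lineOf B.R a b ⊆ B.carrier := B.lineOf_subset_carrier ha hb

/-- Uniqueness: a `B`-type (unanchored) line equals any amalgam line sharing two points. -/
theorem DL_unique_B (h : AmalHyp B C A) {a b : V} {ℓ₂ : Set V} {x y : V}
    (hab : a ≠ b) (haB : a ∈ B.carrier) (hbB : b ∈ B.carrier)
    (hanch : ¬∃ u v, u ∈ A.carrier ∧ v ∈ A.carrier ∧ u ≠ v ∧
      u ∈ lineOf B.R a b ∧ v ∈ lineOf B.R a b)
    (hDL2 : IsDL B C A ℓ₂) (hx1 : x ∈ lineOf B.R a b) (hy1 : y ∈ lineOf B.R a b)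
    (hx2 : x ∈ ℓ₂) (hy2 : y ∈ ℓ₂) (hxy : x ≠ y) : lineOf B.R a b = ℓ₂ := by
  rcases hDL2 with ⟨c, d, hcd, hcB, hdB, rfl, -⟩ | ⟨c, d, hcd, hcC, hdC, rfl, -⟩ |
    ⟨c, d, hcA, hdA, hcd, rfl⟩
  · exact B.lineOf_eq_of_two_mem hab hcd hxy hx1 hy1 hx2 hy2
  · -- x, y lie in both carriers, hence in A: contradiction with unanchoredness
    have hxA : x ∈ A.carrier := h.inter ⟨B.mem_lineOf_carrier haB hbB hx1,
      C.mem_lineOf_carrier hcC hdC hx2⟩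
    have hyA : y ∈ A.carrier := h.inter ⟨B.mem_lineOf_carrier haB hbB hy1,
      C.mem_lineOf_carrier hcC hdC hy2⟩
    exact absurd ⟨x, y, hxA, hyA, hxy, hx1, hy1⟩ hanch
  · -- merged line: its B-trace is a B-line sharing two points with our line
    have hxB : x ∈ B.carrier := B.mem_lineOf_carrier haB hbB hx1
    have hyB : y ∈ B.carrier := B.mem_lineOf_carrier haB hbB hy1
    have hx2' : x ∈ lineOf B.R c d := by
      rw [← mlineB_inter_B h hcA hdA]; exact ⟨hx2, hxB⟩
    have hy2' : y ∈ lineOf B.R c d := by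
      rw [← mlineB_inter_B h hcA hdA]; exact ⟨hy2, hyB⟩
    have he : lineOf B.R a b = lineOf B.R c d :=
      B.lineOf_eq_of_two_mem hab hcd hxy hx1 hy1 hx2' hy2'
    exfalso
    exact hanch ⟨c, d, hcA, hdA, hcd, he ▸ left_mem_lineOf _ _, he ▸ right_mem_lineOf _ _⟩

/-- Uniqueness for two merged lines, given a common point in `B`. -/
theorem DL_unique_M (h : AmalHyp B C A) {a b c d x y : V}
    (haA : a ∈ A.carrier) (hbA : b ∈ A.carrier) (hcA : c ∈ A.carrier) (hdA : d ∈ A.carrier)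
    (hab : a ≠ b) (hcd : c ≠ d)
    (hx1 : x ∈ mlineB B C a b) (hy1 : y ∈ mlineB B C a b)
    (hx2 : x ∈ mlineB B C c d) (hy2 : y ∈ mlineB B C c d)
    (hxy : x ≠ y) (hxB : x ∈ B.carrier) : mlineB B C a b = mlineB B C c d := by
  have hx1' : x ∈ lineOf B.R a b := by rw [← mlineB_inter_B h haA hbA]; exact ⟨hx1, hxB⟩
  have hx2' : x ∈ lineOf B.R c d := by rw [← mlineB_inter_B h hcA hdA]; exact ⟨hx2, hxB⟩
  by_cases he : lineOf B.R a b = lineOf B.R c d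
  · exact mline_eq_of_lineB h haA hbA hcA hdA hab hcd he
  · have hxA : x ∈ A.carrier := anchorB h haA hbA hcA hdA hab hcd he hx1' hx2'
    by_cases hyB : y ∈ B.carrier
    · have hy1' : y ∈ lineOf B.R a b := by rw [← mlineB_inter_B h haA hbA]; exact ⟨hy1, hyB⟩
      have hy2' : y ∈ lineOf B.R c d := by rw [← mlineB_inter_B h hcA hdA]; exact ⟨hy2, hyB⟩
      exact absurd (B.lineOf_eq_of_two_mem hab hcd hxy hx1' hy1' hx2' hy2') he
    · -- y lies on the C-parts
      have hy1' : y ∈ lineOf C.R a b := by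
        rcases hy1 with hy | hy
        · exact absurd (B.mem_lineOf_carrier (h.subB.sub haA) (h.subB.sub hbA) hy) hyB
        · exact hy
      have hy2' : y ∈ lineOf C.R c d := by
        rcases hy2 with hy | hy
        · exact absurd (B.mem_lineOf_carrier (h.subB.sub hcA) (h.subB.sub hdA) hy) hyB
        · exact hy
      have hx1'' : x ∈ lineOf C.R a b := crossLine h haA hbA hxA hx1'
      have hx2'' : x ∈ lineOf C.R c d := crossLine h hcA hdA hxA hx2'
      have heC : lineOf C.R a b = lineOf C.R c d :=
        C.lineOf_eq_of_two_mem hab hcd hxy hx1'' hy1' hx2'' hy2'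
      have := mline_eq_of_lineB h.swap haA hbA hcA hdA hab hcd heC
      rw [mlineB_comm B C a b, mlineB_comm B C c d]
      exact this

/-- Two amalgam lines sharing two distinct points coincide. -/
theorem DL_unique (h : AmalHyp B C A) {ℓ₁ ℓ₂ : Set V} (h1 : IsDL B C A ℓ₁)
    (h2 : IsDL B C A ℓ₂) {x y : V} (hx1 : x ∈ ℓ₁) (hy1 : y ∈ ℓ₁) (hx2 : x ∈ ℓ₂)
    (hy2 : y ∈ ℓ₂) (hxy : x ≠ y) : ℓ₁ = ℓ₂ := by
  rcases h1 with ⟨a, b, hab, haB, hbB, rfl, hanch⟩ | ⟨a, b, hab, haC, hbC, rfl, hanch⟩ |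
    ⟨a, b, haA, hbA, hab, rfl⟩
  · exact DL_unique_B h hab haB hbB hanch h2 hx1 hy1 hx2 hy2 hxy
  · exact DL_unique_B h.swap hab haC hbC hanch (IsDL_comm h2) hx1 hy1 hx2 hy2 hxy
  · rcases h2 with ⟨c, d, hcd, hcB, hdB, rfl, hanch⟩ | ⟨c, d, hcd, hcC, hdC, rfl, hanch⟩ |
      ⟨c, d, hcA, hdA, hcd, rfl⟩
    · exact (DL_unique_B h hcd hcB hdB hanch (Or.inr (Or.inr ⟨a, b, haA, hbA, hab, rfl⟩))
        hx2 hy2 hx1 hy1 hxy).symm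
    · have := (DL_unique_B h.swap hcd hcC hdC hanch
        (IsDL_comm (Or.inr (Or.inr ⟨a, b, haA, hbA, hab, rfl⟩))) hx2 hy2 hx1 hy1 hxy).symm
      exact this
    · rcases mlineB_subset h.subB.sub h.subC.sub haA hbA hx1 with hxB | hxC
      · exact DL_unique_M h haA hbA hcA hdA hab hcd hx1 hy1 hx2 hy2 hxy hxB
      · have := DL_unique_M h.swap haA hbA hcA hdA hab hcd
          ((mlineB_comm B C a b) ▸ hx1) ((mlineB_comm B C a b) ▸ hy1)
          ((mlineB_comm B C c d) ▸ hx2) ((mlineB_comm B C c d) ▸ hy2) hxy hxC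
        rw [mlineB_comm B C a b, mlineB_comm B C c d]
        exact this

end Amal
section Amal2

variable {V : Type*} {B C A : WM V}

/-- The free amalgam of `B` and `C` over `A`. -/
noncomputable def amalWM (h : AmalHyp B C A) : WM V where
  carrier := B.carrier ∪ C.carrier
  R := amalR B C A
  wedge := genW (amalR B C A)
  R_mem x y z hR := by
    obtain ⟨-, -, -, hB | hC | ⟨a, b, ha, hb, hab, hx, hy, hz⟩⟩ := hR
    · obtain ⟨h1, h2, h3⟩ := B.R_mem _ _ _ hB
      exact ⟨Or.inl h1, Or.inl h2, Or.inl h3⟩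
    · obtain ⟨h1, h2, h3⟩ := C.R_mem _ _ _ hC
      exact ⟨Or.inr h1, Or.inr h2, Or.inr h3⟩
    · exact ⟨mlineB_subset h.subB.sub h.subC.sub ha hb hx,
        mlineB_subset h.subB.sub h.subC.sub ha hb hy,
        mlineB_subset h.subB.sub h.subC.sub ha hb hz⟩
  wedge_mem x y z w hx hy hz hw := by
    by_cases hc : ∃ p, x ≠ y ∧ z ≠ w ∧
        lineOf (amalR B C A) x y ≠ lineOf (amalR B C A) z w ∧
        p ∈ lineOf (amalR B C A) x y ∧ p ∈ lineOf (amalR B C A) z w ∧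
        p ∉ ({x, y, z, w} : Set V)
    · obtain ⟨-, -, -, hp1, -, -⟩ := genW_pos hc
      rcases mem_lineOf.1 hp1 with hp | hp | hp
      · rw [hp]; exact hx
      · rw [hp]; exact hy
      · obtain ⟨-, -, -, hB | hC | ⟨a, b, ha, hb, hab, -, -, hm⟩⟩ := hp
        · exact Or.inl (B.R_mem _ _ _ hB).2.2
        · exact Or.inr (C.R_mem _ _ _ hC).2.2
        · exact mlineB_subset h.subB.sub h.subC.sub ha hb hm
    · rw [genW_neg hc]; exact hx
  irrefl _ _ _ hR := ⟨hR.1, hR.2.1, hR.2.2.1⟩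
  symm_swap x y z hR := by
    obtain ⟨h1, h2, h3, hB | hC | ⟨a, b, ha, hb, hab, hx, hy, hz⟩⟩ := hR
    · exact ⟨h1.symm, h3, h2, Or.inl (B.symm_swap _ _ _ hB)⟩
    · exact ⟨h1.symm, h3, h2, Or.inr (Or.inl (C.symm_swap _ _ _ hC))⟩
    · exact ⟨h1.symm, h3, h2, Or.inr (Or.inr ⟨a, b, ha, hb, hab, hy, hx, hz⟩)⟩
  symm_rot x y z hR := by
    obtain ⟨h1, h2, h3, hB | hC | ⟨a, b, ha, hb, hab, hx, hy, hz⟩⟩ := hR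
    · exact ⟨h3, h1.symm, h2.symm, Or.inl (B.symm_rot _ _ _ hB)⟩
    · exact ⟨h3, h1.symm, h2.symm, Or.inr (Or.inl (C.symm_rot _ _ _ hC))⟩
    · exact ⟨h3, h1.symm, h2.symm, Or.inr (Or.inr ⟨a, b, ha, hb, hab, hy, hz, hx⟩)⟩
  exchange a b c d h1 h2 x y z hx hy hz hxy hxz hyz := by
    obtain ⟨ℓ₁, hDL1, ha1, hb1, hc1⟩ := isDL_of_R h h1
    obtain ⟨ℓ₂, hDL2, ha2, hb2, hd2⟩ := isDL_of_R h h2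
    have he : ℓ₁ = ℓ₂ := DL_unique h hDL1 hDL2 ha1 hb1 ha2 hb2 h1.1
    have hmem : ∀ u ∈ ({a, b, c, d} : Set V), u ∈ ℓ₁ := by
      intro u hu
      rcases hu with rfl | rfl | rfl | rfl
      · exact ha1
      · exact hb1
      · exact hc1
      · exact he ▸ hd2
    exact R_of_DL h hDL1 (hmem x hx) (hmem y hy) (hmem z hz) hxy hxz hyz
  wedge_det x y z w _ _ _ _ := genW_det (amalR B C A) x y z w

theorem amal_carrier (h : AmalHyp B C A) :
    (amalWM h).carrier = B.carrier ∪ C.carrier := rfl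

theorem amal_R (h : AmalHyp B C A) : (amalWM h).R = amalR B C A := rfl

/-- The amalgam relation restricted to `B` is the relation of `B`. -/
theorem amalR_restrict_B (h : AmalHyp B C A) {x y z : V} (hx : x ∈ B.carrier)
    (hy : y ∈ B.carrier) (hz : z ∈ B.carrier) : amalR B C A x y z ↔ B.R x y z := by
  constructor
  · rintro ⟨h1, h2, h3, hB | hC | ⟨a, b, ha, hb, hab, hxm, hym, hzm⟩⟩
    · exact hB
    · have hxA : x ∈ A.carrier := h.inter ⟨hx, (C.R_mem _ _ _ hC).1⟩
      have hyA : y ∈ A.carrier := h.inter ⟨hy, (C.R_mem _ _ _ hC).2.1⟩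
      have hzA : z ∈ A.carrier := h.inter ⟨hz, (C.R_mem _ _ _ hC).2.2⟩
      exact (h.subB.rel x hxA y hyA z hzA).1 ((h.subC.rel x hxA y hyA z hzA).2 hC)
    · have hx' : x ∈ lineOf B.R a b := by rw [← mlineB_inter_B h ha hb]; exact ⟨hxm, hx⟩
      have hy' : y ∈ lineOf B.R a b := by rw [← mlineB_inter_B h ha hb]; exact ⟨hym, hy⟩
      have hz' : z ∈ lineOf B.R a b := by rw [← mlineB_inter_B h ha hb]; exact ⟨hzm, hz⟩
      exact B.line_trip hab hx' hy' hz' h1 h2 h3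
  · intro hB
    obtain ⟨d1, d2, d3⟩ := B.irrefl _ _ _ hB
    exact ⟨d1, d2, d3, Or.inl hB⟩

theorem amal_lineOf_B (h : AmalHyp B C A) {x y : V} (hx : x ∈ B.carrier) (hy : y ∈ B.carrier) :
    lineOf (amalR B C A) x y ∩ B.carrier = lineOf B.R x y := by
  apply Set.Subset.antisymm
  · rintro u ⟨hu, huB⟩
    rcases mem_lineOf.1 hu with rfl | rfl | hR
    · exact left_mem_lineOf _ _
    · exact right_mem_lineOf _ _
    · exact R_mem_lineOf ((amalR_restrict_B h hx hy huB).1 hR)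
  · intro u hu
    exact ⟨lineB_subset_amal hu, B.mem_lineOf_carrier hx hy hu⟩

/-- Equality of `B`-lines forces equality of amalgam lines. -/
theorem amal_lineOf_eq (h : AmalHyp B C A) {x y z w : V} (hx : x ∈ B.carrier)
    (hy : y ∈ B.carrier) (hz : z ∈ B.carrier) (hw : w ∈ B.carrier) (hxy : x ≠ y) (hzw : z ≠ w)
    (he : lineOf B.R x y = lineOf B.R z w) :
    lineOf (amalR B C A) x y = lineOf (amalR B C A) z w := by
  have main : ∀ x y z w : V, x ∈ B.carrier → y ∈ B.carrier → z ∈ B.carrier → w ∈ B.carrier →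
      x ≠ y → z ≠ w → lineOf B.R x y = lineOf B.R z w →
      lineOf (amalR B C A) x y ⊆ lineOf (amalR B C A) z w := by
    clear hx hy hz hw hxy hzw he x y z w
    intro x y z w hx hy hz hw hxy hzw he u hu
    have hzl : z ∈ lineOf B.R x y := he ▸ left_mem_lineOf _ _
    have hwl : w ∈ lineOf B.R x y := he ▸ right_mem_lineOf _ _
    rcases mem_lineOf.1 hu with he' | he' | hR
    · rw [he']
      refine lineB_subset_amal ?_
      rw [← he]
      exact left_mem_lineOf _ _
    · rw [he']
      refine lineB_subset_amal ?_
      rw [← he]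
      exact right_mem_lineOf _ _
    · -- amalR x y u
      obtain ⟨ℓ, hDL, hxL, hyL, huL⟩ := isDL_of_R h hR
      -- z, w ∈ ℓ
      have hzL : z ∈ ℓ := by
        rcases mem_lineOf.1 hzl with rfl | rfl | hz'
        · exact hxL
        · exact hyL
        · obtain ⟨ℓ', hDL', hxL', hyL', hzL'⟩ :=
            isDL_of_R h ((amalR_restrict_B h hx hy (B.R_mem _ _ _ hz').2.2).2 hz')
          rw [DL_unique h hDL hDL' hxL hyL hxL' hyL' hxy]
          exact hzL'
      have hwL : w ∈ ℓ := by
        rcases mem_lineOf.1 hwl with rfl | rfl | hw'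
        · exact hxL
        · exact hyL
        · obtain ⟨ℓ', hDL', hxL', hyL', hwL'⟩ :=
            isDL_of_R h ((amalR_restrict_B h hx hy (B.R_mem _ _ _ hw').2.2).2 hw')
          rw [DL_unique h hDL hDL' hxL hyL hxL' hyL' hxy]
          exact hwL'
      rcases eq_or_ne u z with rfl | huz
      · exact left_mem_lineOf _ _
      rcases eq_or_ne u w with rfl | huw
      · exact right_mem_lineOf _ _
      exact R_mem_lineOf (R_of_DL h hDL hzL hwL huL hzw (Ne.symm huz) (Ne.symm huw))
  exact Set.Subset.antisymm (main x y z w hx hy hz hw hxy hzw he)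
    (main z w x y hz hw hx hy hzw hxy he.symm)

theorem amal_sub_B (h : AmalHyp B C A) : Sub B (amalWM h) where
  sub := Set.subset_union_left
  rel x hx y hy z hz := ((amalR_restrict_B h hx hy hz).symm : _)
  wedge x hx y hy z hz w hw := by
    show B.wedge x y z w = genW (amalR B C A) x y z w
    rcases B.wedge_det x y z w hx hy hz hw with ⟨hxy, hzw, hne, hw1, hw2, hw4⟩ | ⟨hwx, hno⟩
    · -- the B-wedge point is also the amalgam wedge point
      have hBw : B.wedge x y z w ∈ B.carrier := B.wedge_mem x y z w hx hy hz hw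
      have hane : lineOf (amalR B C A) x y ≠ lineOf (amalR B C A) z w := by
        intro e
        have hz' : z ∈ lineOf (amalR B C A) x y := e ▸ left_mem_lineOf _ _
        have hw' : w ∈ lineOf (amalR B C A) x y := e ▸ right_mem_lineOf _ _
        have hz'' : z ∈ lineOf B.R x y := by rw [← amal_lineOf_B h hx hy]; exact ⟨hz', hz⟩
        have hw'' : w ∈ lineOf B.R x y := by rw [← amal_lineOf_B h hx hy]; exact ⟨hw', hw⟩
        exact hne (B.lineOf_eq hxy hzw hz'' hw'').symm
      have hcond : ∃ p, x ≠ y ∧ z ≠ w ∧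
          lineOf (amalR B C A) x y ≠ lineOf (amalR B C A) z w ∧
          p ∈ lineOf (amalR B C A) x y ∧ p ∈ lineOf (amalR B C A) z w ∧
          p ∉ ({x, y, z, w} : Set V) :=
        ⟨B.wedge x y z w, hxy, hzw, hane, lineB_subset_amal hw1, lineB_subset_amal hw2, hw4⟩
      obtain ⟨-, -, -, hg1, hg2, hg4⟩ := genW_pos hcond
      by_contra hne'
      exact hane (WM.lineOf_eq_of_two_mem (amalWM h) hxy hzw hne' (lineB_subset_amal hw1) hg1
        (lineB_subset_amal hw2) hg2)
    · -- no B-intersection: show there is no amalgam intersection either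
      rw [hwx]
      refine (genW_neg ?_).symm
      rintro ⟨p, hxy, hzw, hane, hp1, hp2, hp4⟩
      have hBne : lineOf B.R x y ≠ lineOf B.R z w := by
        intro e
        exact hane (amal_lineOf_eq h hx hy hz hw hxy hzw e)
      have hpB : p ∈ B.carrier := by
        by_contra hpB
        -- p ∉ B: then p lies on merged lines whose C-parts coincide, forcing equal B-lines
        have hpx : p ≠ x := fun e => hpB (e ▸ hx)
        have hpy : p ≠ y := fun e => hpB (e ▸ hy)
        have hpz : p ≠ z := fun e => hpB (e ▸ hz)
        have hpw : p ≠ w := fun e => hpB (e ▸ hw)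
        have hR1 : amalR B C A x y p := by
          rcases mem_lineOf.1 hp1 with e | e | hR
          · exact absurd e hpx
          · exact absurd e hpy
          · exact hR
        have hR2 : amalR B C A z w p := by
          rcases mem_lineOf.1 hp2 with e | e | hR
          · exact absurd e hpz
          · exact absurd e hpw
          · exact hR
        obtain ⟨ℓ₁, hDL1, hx1, hy1, hp1'⟩ := isDL_of_R h hR1
        obtain ⟨ℓ₂, hDL2, hz2, hw2', hp2'⟩ := isDL_of_R h hR2
        -- ℓ₁ must be merged
        have hM1 : ∃ a b, a ∈ A.carrier ∧ b ∈ A.carrier ∧ a ≠ b ∧ ℓ₁ = mlineB B C a b := by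
          rcases hDL1 with ⟨a, b, hab, haB, hbB, rfl, -⟩ | ⟨a, b, hab, haC, hbC, rfl, hanch⟩ |
            hM
          · exact absurd (B.mem_lineOf_carrier haB hbB hp1') hpB
          · exact absurd ⟨x, y, h.inter ⟨hx, C.mem_lineOf_carrier haC hbC hx1⟩,
              h.inter ⟨hy, C.mem_lineOf_carrier haC hbC hy1⟩, hxy, hx1, hy1⟩ hanch
          · exact hM
        have hM2 : ∃ a b, a ∈ A.carrier ∧ b ∈ A.carrier ∧ a ≠ b ∧ ℓ₂ = mlineB B C a b := by
          rcases hDL2 with ⟨a, b, hab, haB, hbB, rfl, -⟩ | ⟨a, b, hab, haC, hbC, rfl, hanch⟩ |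
            hM
          · exact absurd (B.mem_lineOf_carrier haB hbB hp2') hpB
          · exact absurd ⟨z, w, h.inter ⟨hz, C.mem_lineOf_carrier haC hbC hz2⟩,
              h.inter ⟨hw, C.mem_lineOf_carrier haC hbC hw2'⟩, hzw, hz2, hw2'⟩ hanch
          · exact hM
        obtain ⟨a, b, haA, hbA, hab, rfl⟩ := hM1
        obtain ⟨c, d, hcA, hdA, hcd, rfl⟩ := hM2
        -- p is on both C-parts
        have hpC1 : p ∈ lineOf C.R a b := by
          rcases hp1' with hp | hp
          · exact absurd (B.mem_lineOf_carrier (h.subB.sub haA) (h.subB.sub hbA) hp) hpB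
          · exact hp
        have hpC2 : p ∈ lineOf C.R c d := by
          rcases hp2' with hp | hp
          · exact absurd (B.mem_lineOf_carrier (h.subB.sub hcA) (h.subB.sub hdA) hp) hpB
          · exact hp
        have heC : lineOf C.R a b = lineOf C.R c d := by
          by_contra heC
          exact hpB (h.subB.sub (anchorB h.swap haA hbA hcA hdA hab hcd heC hpC1 hpC2))
        have hml : mlineB B C a b = mlineB B C c d := by
          have := mline_eq_of_lineB h.swap haA hbA hcA hdA hab hcd heC
          rw [mlineB_comm B C a b, mlineB_comm B C c d]
          exact this
        -- then x, y, z, w all lie on one B-line, contradicting distinctness of B-lines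
        have hx' : x ∈ lineOf B.R a b := by rw [← mlineB_inter_B h haA hbA]; exact ⟨hx1, hx⟩
        have hy' : y ∈ lineOf B.R a b := by rw [← mlineB_inter_B h haA hbA]; exact ⟨hy1, hy⟩
        have hz' : z ∈ lineOf B.R a b := by
          rw [← mlineB_inter_B h haA hbA]; exact ⟨hml ▸ hz2, hz⟩
        have hw' : w ∈ lineOf B.R a b := by
          rw [← mlineB_inter_B h haA hbA]; exact ⟨hml ▸ hw2', hw⟩
        exact hBne ((B.lineOf_eq hab hxy hx' hy').trans (B.lineOf_eq hab hzw hz' hw').symm)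
      -- now p ∈ B, giving a B-witness and contradicting hno
      have hp1' : p ∈ lineOf B.R x y := by rw [← amal_lineOf_B h hx hy]; exact ⟨hp1, hpB⟩
      have hp2' : p ∈ lineOf B.R z w := by rw [← amal_lineOf_B h hz hw]; exact ⟨hp2, hpB⟩
      exact hno ⟨p, hxy, hzw, hBne, hp1', hp2', hp4⟩

end Amal2
section Amal3

variable {V : Type*} {B C A : WM V}

theorem WM.ext' {M N : WM V} (h1 : M.carrier = N.carrier) (h2 : M.R = N.R)
    (h3 : M.wedge = N.wedge) : M = N := by
  cases M; cases N
  cases h1; cases h2; cases h3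
  rfl

theorem amalWM_comm (h : AmalHyp B C A) : amalWM h = amalWM h.swap :=
  WM.ext' (Set.union_comm _ _) (amalR_comm B C A) (congrArg genW (amalR_comm B C A))

theorem amal_sub_C (h : AmalHyp B C A) : Sub C (amalWM h) := by
  rw [amalWM_comm h]
  exact amal_sub_B h.swap

theorem amalR_restrict_C (h : AmalHyp B C A) {x y z : V} (hx : x ∈ C.carrier)
    (hy : y ∈ C.carrier) (hz : z ∈ C.carrier) : amalR B C A x y z ↔ C.R x y z := by
  rw [show amalR B C A = amalR C B A from amalR_comm B C A]
  exact amalR_restrict_B h.swap hx hy hz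

/-- The amalgam omits `M_P` whenever both factors do. -/
theorem amal_omits (h : AmalHyp B C A) (P : ProjPlane) (hBP : Omits B P) (hCP : Omits C P) :
    Omits (amalWM h) P := by
  rintro ⟨e, einj, emem, erel⟩
  have erel' : ∀ a b c, P.Rmat a b c ↔ amalR B C A (e a) (e b) (e c) := erel
  have emem' : ∀ p, e p ∈ B.carrier ∪ C.carrier := emem
  -- Main claim: the image lies in B or in C
  have main : (∀ p, e p ∈ B.carrier) ∨ (∀ p, e p ∈ C.carrier) := by
    by_contra hcon
    push_neg at hcon
    obtain ⟨⟨u, huB⟩, v, hvC⟩ := hcon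
    have huC : e u ∈ C.carrier := (emem' u).resolve_left huB
    have hvB : e v ∈ B.carrier := (emem' v).resolve_right hvC
    have hvu : v ≠ u := fun ee => huB (ee ▸ hvB)
    -- Cross lemma
    have cross : ∀ u' v' : P.Point, e u' ∈ B.carrier → e u' ∉ C.carrier →
        e v' ∈ C.carrier → e v' ∉ B.carrier →
        ∃ a b, a ∈ A.carrier ∧ b ∈ A.carrier ∧ a ≠ b ∧ e u' ∈ mlineB B C a b ∧
          e v' ∈ mlineB B C a b ∧
          ∀ w, e w ∈ mlineB B C a b → w = u' ∨ w = v' ∨ P.Rmat u' v' w := by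
      intro u' v' h1 h2 h3 h4
      have hne : u' ≠ v' := fun ee => h4 (ee ▸ h1)
      obtain ⟨w₀, hw0u, hw0v, hRmat⟩ := P.exists_third u' v' hne
      have hamal : amalR B C A (e u') (e v') (e w₀) := (erel' u' v' w₀).1 hRmat
      obtain ⟨ℓ, hDL, hm1, hm2, hm3⟩ := isDL_of_R h hamal
      rcases hDL with ⟨a, b, hab, haB, hbB, rfl, -⟩ | ⟨a, b, hab, haC, hbC, rfl, -⟩ |
        ⟨a, b, haA, hbA, hab, rfl⟩
      · exact absurd (B.mem_lineOf_carrier haB hbB hm2) h4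
      · exact absurd (C.mem_lineOf_carrier haC hbC hm1) h2
      · refine ⟨a, b, haA, hbA, hab, hm1, hm2, ?_⟩
        intro w hw
        rcases eq_or_ne w u' with rfl | hwu
        · exact Or.inl rfl
        rcases eq_or_ne w v' with rfl | hwv
        · exact Or.inr (Or.inl rfl)
        refine Or.inr (Or.inr ((erel' u' v' w).2 ?_))
        exact R_of_DL h (Or.inr (Or.inr ⟨a, b, haA, hbA, hab, rfl⟩)) hm1 hm2 hw
          (einj.ne hne) (einj.ne (Ne.symm hwu)) (einj.ne (Ne.symm hwv))
    obtain ⟨a₀, b₀, ha₀, hb₀, hab₀, hm_v, hm_u, hline₀⟩ := cross v u hvB hvC huC huB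
    have hv1 : e v ∈ lineOf B.R a₀ b₀ := by
      rw [← mlineB_inter_B h ha₀ hb₀]; exact ⟨hm_v, hvB⟩
    have hu1 : e u ∈ lineOf C.R a₀ b₀ := by
      have : e u ∈ mlineB C B a₀ b₀ ∩ C.carrier := ⟨(mlineB_comm B C a₀ b₀) ▸ hm_u, huC⟩
      rwa [mlineB_inter_B h.swap ha₀ hb₀] at this
    set lP := P.lp hvu with hlP
    have hlineP : ∀ w, e w ∈ mlineB B C a₀ b₀ → P.incid w lP := by
      intro w hw
      rcases hline₀ w hw with rfl | rfl | hR
      · exact P.incid_lp_left hvu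
      · exact P.incid_lp_right hvu
      · exact P.incid_lp_of_Rmat hR hvu
    -- every C∖B point is on lP
    have claimC : ∀ q, e q ∈ C.carrier → e q ∉ B.carrier → P.incid q lP := by
      intro q hq1 hq2
      obtain ⟨c, d, hc, hd, hcd, hm_v', hm_q, -⟩ := cross v q hvB hvC hq1 hq2
      have hv2 : e v ∈ lineOf B.R c d := by
        rw [← mlineB_inter_B h hc hd]; exact ⟨hm_v', hvB⟩
      have heq : lineOf B.R a₀ b₀ = lineOf B.R c d := by
        by_contra hne2
        exact hvC (h.subC.sub (anchorB h ha₀ hb₀ hc hd hab₀ hcd hne2 hv1 hv2))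
      have hml := mline_eq_of_lineB h ha₀ hb₀ hc hd hab₀ hcd heq
      exact hlineP q (hml ▸ hm_q)
    -- every B∖C point is on lP
    have claimB : ∀ q, e q ∈ B.carrier → e q ∉ C.carrier → P.incid q lP := by
      intro q hq1 hq2
      obtain ⟨c, d, hc, hd, hcd, hm_q, hm_u', -⟩ := cross q u hq1 hq2 huC huB
      have hu2 : e u ∈ lineOf C.R c d := by
        have : e u ∈ mlineB C B c d ∩ C.carrier := ⟨(mlineB_comm B C c d) ▸ hm_u', huC⟩
        rwa [mlineB_inter_B h.swap hc hd] at this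
      have heqC : lineOf C.R a₀ b₀ = lineOf C.R c d := by
        by_contra hne2
        exact huB (h.subB.sub (anchorB h.swap ha₀ hb₀ hc hd hab₀ hcd hne2 hu1 hu2))
      have hml : mlineB B C a₀ b₀ = mlineB B C c d := by
        have := mline_eq_of_lineB h.swap ha₀ hb₀ hc hd hab₀ hcd heqC
        rw [mlineB_comm B C a₀ b₀, mlineB_comm B C c d]
        exact this
      exact hlineP q (hml ▸ hm_q)
    -- final contradiction using a second line through v
    obtain ⟨x, y, hxy, hxv, hyv, hxl, hyl, hRvxy⟩ := P.exists_two_off v lP (P.incid_lp_left hvu)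
    have exA : ∀ w : P.Point, ¬ P.incid w lP → e w ∈ A.carrier := by
      intro w hwl
      rcases emem' w with hw | hw
      · by_cases hw2 : e w ∈ C.carrier
        · exact h.inter ⟨hw, hw2⟩
        · exact absurd (claimB w hw hw2) hwl
      · by_cases hw2 : e w ∈ B.carrier
        · exact h.inter ⟨hw2, hw⟩
        · exact absurd (claimC w hw hw2) hwl
    have hxA : e x ∈ A.carrier := exA x hxl
    have hyA : e y ∈ A.carrier := exA y hyl
    have hamal : amalR B C A (e v) (e x) (e y) := (erel' v x y).1 hRvxy
    obtain ⟨ℓ, hDL, hm1, hm2, hm3⟩ := isDL_of_R h hamal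
    have hexy : e x ≠ e y := einj.ne hxy
    -- v, x, y lie on a common B-line
    have hv_L1 : e v ∈ lineOf B.R (e x) (e y) := by
      rcases hDL with ⟨s, t, hst, hsB, htB, rfl, -⟩ | ⟨s, t, hst, hsC, htC, rfl, -⟩ |
        ⟨s, t, hsA, htA, hst, rfl⟩
      · rw [B.lineOf_eq hst hexy hm2 hm3]
        exact hm1
      · exact absurd (C.mem_lineOf_carrier hsC htC hm1) hvC
      · have hx' : e x ∈ lineOf B.R s t := by
          rw [← mlineB_inter_B h hsA htA]; exact ⟨hm2, h.subB.sub hxA⟩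
        have hy' : e y ∈ lineOf B.R s t := by
          rw [← mlineB_inter_B h hsA htA]; exact ⟨hm3, h.subB.sub hyA⟩
        have hv' : e v ∈ lineOf B.R s t := by
          rw [← mlineB_inter_B h hsA htA]; exact ⟨hm1, hvB⟩
        rw [B.lineOf_eq hst hexy hx' hy']
        exact hv'
    have hL12 : lineOf B.R (e x) (e y) ≠ lineOf B.R a₀ b₀ := by
      intro ee
      have : e x ∈ mlineB B C a₀ b₀ := Or.inl (ee ▸ left_mem_lineOf _ _)
      exact hxl (hlineP x this)
    exact hvC (h.subC.sub (anchorB h hxA hyA ha₀ hb₀ hexy hab₀ hL12 hv_L1 hv1))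
  -- transfer the copy into B or C
  rcases main with hall | hall
  · exact hBP ⟨e, einj, hall, fun a b c => (erel' a b c).trans
      (amalR_restrict_B h (hall a) (hall b) (hall c))⟩
  · exact hCP ⟨e, einj, hall, fun a b c => (erel' a b c).trans
      (amalR_restrict_C h (hall a) (hall b) (hall c))⟩

end Amal3
/-! ### Building blocks: trivial structures, fresh points, universality codes -/

section Blocks

theorem lineOf_false {V : Type*} (a b : V) :
    lineOf (fun _ _ _ => False) a b = ({a, b} : Set V) := by
  ext x
  rw [mem_lineOf]
  simp [Set.mem_insert_iff]

/-- The structure with no collinearity on a given carrier. -/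
def trivWM {V : Type*} (s : Set V) : WM V where
  carrier := s
  R _ _ _ := False
  wedge a _ _ _ := a
  R_mem _ _ _ h := h.elim
  wedge_mem _ _ _ _ ha _ _ _ := ha
  irrefl _ _ _ h := h.elim
  symm_swap _ _ _ h := h.elim
  symm_rot _ _ _ h := h.elim
  exchange _ _ _ _ h := h.elim
  wedge_det a b c d _ _ _ _ := by
    right
    refine ⟨rfl, ?_⟩
    rintro ⟨p, hab, hcd, -, hp1, hp2, hp4⟩
    rw [lineOf_false] at hp1 hp2
    rcases hp1 with rfl | rfl
    · exact hp4 (Set.mem_insert _ _)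
    · exact hp4 (Set.mem_insert_of_mem _ (Set.mem_insert _ _))

theorem triv_omits {V : Type*} (s : Set V) (P : ProjPlane) : Omits (trivWM s) P := by
  rintro ⟨e, -, -, erel⟩
  obtain ⟨u, v, w, hR⟩ := P.exists_Rmat
  exact (erel u v w).1 hR

theorem empty_sub {V : Type*} (M : WM V) : Sub (trivWM (∅ : Set V)) M where
  sub := Set.empty_subset _
  rel a ha := ha.elim
  wedge a ha := ha.elim

/-- Adjoining a fresh free point. -/
theorem add_fresh (P : ProjPlane) (B : WM ℕ) (hfin : B.carrier.Finite) (hBP : Omits B P)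
    (n : ℕ) : ∃ B' : WM ℕ, Sub B B' ∧ B'.carrier.Finite ∧ Omits B' P ∧ n ∈ B'.carrier := by
  by_cases hn : n ∈ B.carrier
  · exact ⟨B, Sub.refl B, hfin, hBP, hn⟩
  · have hAH : AmalHyp B (trivWM {n}) (trivWM (∅ : Set ℕ)) :=
      ⟨empty_sub B, empty_sub _, fun x hx => absurd (hx.2 ▸ hx.1 : x ∈ B.carrier)
        (by rcases hx.2 with rfl; exact hn)⟩
    refine ⟨amalWM hAH, amal_sub_B hAH, ?_, amal_omits hAH P hBP (triv_omits _ P), ?_⟩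
    · rw [amal_carrier]
      exact hfin.union (Set.finite_singleton n)
    · rw [amal_carrier]
      exact Or.inr rfl

/-- Codes for finite structures. -/
abbrev TaskU : Type := ℕ × Finset (ℕ × ℕ × ℕ)

/-- A structure matches a code. -/
def Matches (N : WM ℕ) (c : TaskU) : Prop :=
  N.carrier = {x | x < c.1} ∧ ∀ a b d, N.R a b d ↔ (a, b, d) ∈ c.2

/-- Handling a universality task. -/
theorem handleU (P : ProjPlane) (B : WM ℕ) (hfin : B.carrier.Finite) (hBP : Omits B P)
    (c : TaskU) : ∃ B' : WM ℕ, Sub B B' ∧ B'.carrier.Finite ∧ Omits B' P ∧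
      (∀ N : WM ℕ, Matches N c → Omits N P → ∃ f : ℕ → ℕ, IsEmb N B' f) := by
  by_cases hOK : ∃ N : WM ℕ, Omits N P ∧ Matches N c
  · obtain ⟨N, hNP, hcar, hR⟩ := hOK
    obtain ⟨mb, hmb⟩ := hfin.bddAbove
    set NB := mb + 1 with hNB
    have hbound : ∀ y ∈ B.carrier, y < NB := fun y hy => Nat.lt_succ_of_le (hmb hy)
    have hinj : Set.InjOn (fun x => x + NB) N.carrier := fun x _ y _ e => by
      dsimp only at e; omega
    set C := mapWM N (fun x => x + NB) hinj with hC
    have hint : B.carrier ∩ C.carrier ⊆ (trivWM (∅ : Set ℕ)).carrier := by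
      rintro x ⟨hxB, t, -, rfl⟩
      have := hbound _ hxB
      dsimp only at this
      omega
    have hAH : AmalHyp B C (trivWM (∅ : Set ℕ)) := ⟨empty_sub B, empty_sub C, hint⟩
    refine ⟨amalWM hAH, amal_sub_B hAH, ?_, amal_omits hAH P hBP
      (map_omits N _ hinj P hNP), ?_⟩
    · rw [amal_carrier]
      refine hfin.union ?_
      rw [map_carrier]
      refine Set.Finite.image _ ?_
      rw [hcar]
      exact Set.finite_Iio c.1
    · intro N' hN' hN'P
      have hR' : N'.R = N.R := by
        funext a b d
        exact propext ((hN'.2 a b d).trans (hR a b d).symm)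
      have hcar' : N'.carrier = N.carrier := hN'.1.trans hcar.symm
      refine ⟨(fun x => x + NB) ∘ id, ?_⟩
      exact (IsEmb.of_same hcar' hR').comp
        ((map_isEmb N _ hinj).comp (amal_sub_C hAH).isEmb)
  · exact ⟨B, Sub.refl B, hfin, hBP, fun N hN hNP => absurd ⟨N, hNP, hN⟩ hOK⟩

end Blocks
/-! ### Homogeneity tasks -/

section HBlock

/-- Domain encoded by a finite graph. -/
def sOf (F : Finset (ℕ × ℕ)) : Set ℕ := ↑(F.image Prod.fst)

/-- Partial map encoded by a finite graph. -/
def jOf (F : Finset (ℕ × ℕ)) (x : ℕ) : ℕ := (F.filter (fun p => p.1 = x)).sum Prod.snd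

theorem jOf_graph (s : Finset ℕ) (j : ℕ → ℕ) {x : ℕ} (hx : x ∈ s) :
    jOf (s.image (fun a => (a, j a))) x = j x := by
  unfold jOf
  have h : (s.image (fun a => (a, j a))).filter (fun p => p.1 = x) = {(x, j x)} := by
    ext p
    simp only [Finset.mem_filter, Finset.mem_image, Finset.mem_singleton]
    constructor
    · rintro ⟨⟨a, ha, rfl⟩, h2⟩
      dsimp only at h2
      subst h2
      rfl
    · rintro rfl
      exact ⟨⟨x, hx, rfl⟩, rfl⟩
  rw [h, Finset.sum_singleton]

theorem sOf_graph (s : Finset ℕ) (j : ℕ → ℕ) : sOf (s.image (fun a => (a, j a))) = ↑s := by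
  unfold sOf
  rw [Finset.image_image]
  simp

theorem restr_omits {V : Type*} (B : WM V) (s : Set V) (hs) (hcl) (P : ProjPlane)
    (hBP : Omits B P) : Omits (restrWM B s hs hcl) P := by
  rintro ⟨e, einj, emem, erel⟩
  exact hBP ⟨e, einj, fun p => hs (emem p), fun a b c => (erel a b c).trans
    ⟨fun h => h.2.2.2, fun h => ⟨emem a, emem b, emem c, h⟩⟩⟩

/-- The task `(F, m)` is ripe at `B` : `F` codes a partial isomorphism of `B` and `m ∈ B`. -/
def RipeH (B : WM ℕ) (F : Finset (ℕ × ℕ)) (m : ℕ) : Prop :=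
  sOf F ⊆ B.carrier ∧ (∀ x ∈ sOf F, jOf F x ∈ B.carrier) ∧ m ∈ B.carrier ∧
  Set.InjOn (jOf F) (sOf F) ∧
  (∀ a b c d, a ∈ sOf F → b ∈ sOf F → c ∈ sOf F → d ∈ sOf F →
    B.wedge a b c d ∈ sOf F) ∧
  (∀ a b c d, a ∈ sOf F → b ∈ sOf F → c ∈ sOf F → d ∈ sOf F →
    jOf F (B.wedge a b c d) = B.wedge (jOf F a) (jOf F b) (jOf F c) (jOf F d)) ∧
  (∀ a b c, a ∈ sOf F → b ∈ sOf F → c ∈ sOf F →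
    (B.R a b c ↔ B.R (jOf F a) (jOf F b) (jOf F c)))

/-- Guarantee provided by handling the task `(F, m)` from stage `B` into stage `D`. -/
def HGuar (B D : WM ℕ) (F : Finset (ℕ × ℕ)) (m : ℕ) : Prop :=
  RipeH B F m →
  ∃ j' : ℕ → ℕ,
    (∀ x ∈ sOf F, j' x = jOf F x) ∧
    Set.InjOn j' (wcl B (sOf F ∪ {m})) ∧
    (∀ x ∈ wcl B (sOf F ∪ {m}), j' x ∈ D.carrier) ∧
    (∀ a b c, a ∈ wcl B (sOf F ∪ {m}) → b ∈ wcl B (sOf F ∪ {m}) →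
      c ∈ wcl B (sOf F ∪ {m}) → (D.R a b c ↔ D.R (j' a) (j' b) (j' c))) ∧
    (∀ a b c d, a ∈ wcl B (sOf F ∪ {m}) → b ∈ wcl B (sOf F ∪ {m}) →
      c ∈ wcl B (sOf F ∪ {m}) → d ∈ wcl B (sOf F ∪ {m}) →
      j' (D.wedge a b c d) = D.wedge (j' a) (j' b) (j' c) (j' d))

theorem HGuar_mono {B D D' : WM ℕ} (hBD : Sub B D) (hDD : Sub D D')
    {F : Finset (ℕ × ℕ)} {m : ℕ} (hg : HGuar B D F m) : HGuar B D' F m := by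
  intro hripe
  obtain ⟨j', h1, h2, h3, h4, h5⟩ := hg hripe
  have hsm : sOf F ∪ {m} ⊆ B.carrier :=
    Set.union_subset hripe.1 (Set.singleton_subset_iff.2 hripe.2.2.1)
  have hwsub : wcl B (sOf F ∪ {m}) ⊆ D.carrier :=
    fun x hx => hBD.sub (wcl_subset_carrier B hsm hx)
  refine ⟨j', h1, h2, fun x hx => hDD.sub (h3 x hx), ?_, ?_⟩
  · intro a b c ha hb hc
    rw [← hDD.rel a (hwsub ha) b (hwsub hb) c (hwsub hc),
      ← hDD.rel _ (h3 a ha) _ (h3 b hb) _ (h3 c hc)]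
    exact h4 a b c ha hb hc
  · intro a b c d ha hb hc hd
    rw [← hDD.wedge a (hwsub ha) b (hwsub hb) c (hwsub hc) d (hwsub hd),
      ← hDD.wedge _ (h3 a ha) _ (h3 b hb) _ (h3 c hc) _ (h3 d hd)]
    exact h5 a b c d ha hb hc hd

/-- Handling a homogeneity task. -/
theorem handleH (P : ProjPlane) (B : WM ℕ) (hfin : B.carrier.Finite) (hBP : Omits B P)
    (F : Finset (ℕ × ℕ)) (m : ℕ) :
    ∃ D : WM ℕ, Sub B D ∧ D.carrier.Finite ∧ Omits D P ∧ HGuar B D F m := by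
  by_cases hR : RipeH B F m
  swap
  · exact ⟨B, Sub.refl B, hfin, hBP, fun hripe => absurd hripe hR⟩
  obtain ⟨hsub, hjmem, hm, hinj, hclos, hwcomm, hriff⟩ := hR
  set s : Set ℕ := sOf F with hs_def
  set j : ℕ → ℕ := jOf F with hj_def
  have hsm : s ∪ {m} ⊆ B.carrier := Set.union_subset hsub (Set.singleton_subset_iff.2 hm)
  set s' : Set ℕ := wcl B (s ∪ {m}) with hs'_def
  have hs'sub : s' ⊆ B.carrier := wcl_subset_carrier B hsm
  have hs'cl : ∀ a b c d, a ∈ s' → b ∈ s' → c ∈ s' → d ∈ s' → B.wedge a b c d ∈ s' :=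
    fun a b c d ha hb hc hd => wcl_closed B a b c d ha hb hc hd
  have hss' : s ⊆ s' := Set.subset_union_left.trans (subset_wcl B)
  set t : Set ℕ := j '' s with ht_def
  have htsub : t ⊆ B.carrier := by rintro x ⟨a, ha, rfl⟩; exact hjmem a ha
  have htcl : ∀ a b c d, a ∈ t → b ∈ t → c ∈ t → d ∈ t → B.wedge a b c d ∈ t := by
    rintro _ _ _ _ ⟨a, ha, rfl⟩ ⟨b, hb, rfl⟩ ⟨c, hc, rfl⟩ ⟨d, hd, rfl⟩
    rw [← hwcomm a b c d ha hb hc hd]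
    exact ⟨B.wedge a b c d, hclos a b c d ha hb hc hd, rfl⟩
  set At : WM ℕ := restrWM B t htsub htcl with hAt_def
  set S' : WM ℕ := restrWM B s' hs'sub hs'cl with hS'_def
  have hAtsub : Sub At B := restr_sub B t htsub htcl
  have hS'sub : Sub S' B := restr_sub B s' hs'sub hs'cl
  obtain ⟨mb, hmb⟩ := hfin.bddAbove
  set NB : ℕ := mb + 1 with hNB_def
  have hbound : ∀ y ∈ B.carrier, y < NB := fun y hy => Nat.lt_succ_of_le (hmb hy)
  set φ : ℕ → ℕ := fun x => if x ∈ F.image Prod.fst then j x else x + NB with hφ_def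
  have hφs : ∀ x ∈ s, φ x = j x := by
    intro x hx
    exact if_pos hx
  have hφout : ∀ x, x ∉ s → φ x = x + NB := by
    intro x hx
    exact if_neg hx
  have hφinj : Set.InjOn φ s' := by
    intro x hx y hy e
    by_cases hxs : x ∈ s <;> by_cases hys : y ∈ s
    · rw [hφs x hxs, hφs y hys] at e
      exact hinj hxs hys e
    · rw [hφs x hxs, hφout y hys] at e
      have := hbound _ (hjmem x hxs)
      omega
    · rw [hφout x hxs, hφs y hys] at e
      have := hbound _ (hjmem y hys)
      omega
    · rw [hφout x hxs, hφout y hys] at e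
      omega
  have hφS' : Set.InjOn φ S'.carrier := hφinj
  set C : WM ℕ := mapWM S' φ hφS' with hC_def
  have hCcar : C.carrier = φ '' s' := rfl
  have hint : B.carrier ∩ C.carrier ⊆ At.carrier := by
    rintro x ⟨hxB, a, ha, rfl⟩
    by_cases has : a ∈ s
    · rw [hφs a has]
      exact ⟨a, has, rfl⟩
    · rw [hφout a has] at hxB
      have := hbound _ hxB
      omega
  have hsubAC : Sub At C := by
    constructor
    · rintro x ⟨a, ha, rfl⟩
      exact ⟨a, hss' ha, hφs a ha⟩
    · rintro x hx y hy z hz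
      obtain ⟨a, ha, rfl⟩ := hx
      obtain ⟨b, hb, rfl⟩ := hy
      obtain ⟨c, hc, rfl⟩ := hz
      refine Iff.trans (hAtsub.rel _ ⟨a, ha, rfl⟩ _ ⟨b, hb, rfl⟩ _ ⟨c, hc, rfl⟩) ?_
      refine Iff.trans (hriff a b c ha hb hc).symm ?_
      refine Iff.trans (hS'sub.rel a (hss' ha) b (hss' hb) c (hss' hc)).symm ?_
      have h := map_rel_iff S' φ hφS' (show a ∈ S'.carrier from hss' ha)
        (show b ∈ S'.carrier from hss' hb) (show c ∈ S'.carrier from hss' hc)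
      rw [hφs a ha, hφs b hb, hφs c hc] at h
      exact h.symm
    · rintro x hx y hy z hz w hw
      obtain ⟨a, ha, rfl⟩ := hx
      obtain ⟨b, hb, rfl⟩ := hy
      obtain ⟨c, hc, rfl⟩ := hz
      obtain ⟨d, hd, rfl⟩ := hw
      have h1 := map_wedge S' φ hφS' (show a ∈ S'.carrier from hss' ha)
        (show b ∈ S'.carrier from hss' hb) (show c ∈ S'.carrier from hss' hc)
        (show d ∈ S'.carrier from hss' hd)
      rw [hφs a ha, hφs b hb, hφs c hc, hφs d hd] at h1
      have h2 : S'.wedge a b c d = B.wedge a b c d :=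
        hS'sub.wedge a (hss' ha) b (hss' hb) c (hss' hc) d (hss' hd)
      have h3 : φ (B.wedge a b c d) = j (B.wedge a b c d) := hφs _ (hclos a b c d ha hb hc hd)
      calc At.wedge (j a) (j b) (j c) (j d)
          = B.wedge (j a) (j b) (j c) (j d) :=
            hAtsub.wedge _ ⟨a, ha, rfl⟩ _ ⟨b, hb, rfl⟩ _ ⟨c, hc, rfl⟩ _ ⟨d, hd, rfl⟩
        _ = j (B.wedge a b c d) := (hwcomm a b c d ha hb hc hd).symm
        _ = φ (B.wedge a b c d) := h3.symm
        _ = φ (S'.wedge a b c d) := by rw [h2]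
        _ = C.wedge (j a) (j b) (j c) (j d) := h1.symm
  have hAH : AmalHyp B C At := ⟨hAtsub, hsubAC, hint⟩
  have hCfin : C.carrier.Finite := by
    rw [hCcar]
    exact (wcl_finite B hsm hfin).image φ
  refine ⟨amalWM hAH, amal_sub_B hAH, ?_, amal_omits hAH P hBP
    (map_omits S' φ hφS' P (restr_omits B s' hs'sub hs'cl P hBP)), ?_⟩
  · rw [amal_carrier]
    exact hfin.union hCfin
  · intro _
    have hsubBD := amal_sub_B hAH
    have hsubCD := amal_sub_C hAH
    refine ⟨φ, hφs, hφinj, ?_, ?_, ?_⟩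
    · intro x hx
      exact hsubCD.sub ⟨x, hx, rfl⟩
    · intro a b c ha hb hc
      refine Iff.trans (hsubBD.rel a (hs'sub ha) b (hs'sub hb) c (hs'sub hc)).symm ?_
      refine Iff.trans (hS'sub.rel a ha b hb c hc).symm ?_
      refine Iff.trans (map_rel_iff S' φ hφS' (show a ∈ S'.carrier from ha)
        (show b ∈ S'.carrier from hb) (show c ∈ S'.carrier from hc)).symm ?_
      exact hsubCD.rel _ ⟨a, ha, rfl⟩ _ ⟨b, hb, rfl⟩ _ ⟨c, hc, rfl⟩
    · intro a b c d ha hb hc hd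
      have h1 : (amalWM hAH).wedge a b c d = B.wedge a b c d :=
        (hsubBD.wedge a (hs'sub ha) b (hs'sub hb) c (hs'sub hc) d (hs'sub hd)).symm
      have h2 : B.wedge a b c d = S'.wedge a b c d :=
        (hS'sub.wedge a ha b hb c hc d hd).symm
      have h3 : φ (S'.wedge a b c d) = C.wedge (φ a) (φ b) (φ c) (φ d) :=
        (map_wedge S' φ hφS' (show a ∈ S'.carrier from ha) (show b ∈ S'.carrier from hb)
          (show c ∈ S'.carrier from hc) (show d ∈ S'.carrier from hd)).symm
      have h4 : C.wedge (φ a) (φ b) (φ c) (φ d) = (amalWM hAH).wedge (φ a) (φ b) (φ c) (φ d) :=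
        hsubCD.wedge _ ⟨a, ha, rfl⟩ _ ⟨b, hb, rfl⟩ _ ⟨c, hc, rfl⟩ _ ⟨d, hd, rfl⟩
      rw [h1, h2, h3, h4]

end HBlock
/-! ### The generic chain and its limit -/

section Chain

/-- The type of tasks. -/
abbrev TaskT : Type := TaskU ⊕ (Finset (ℕ × ℕ) × ℕ)

/-- Decoding a task from a stage number. -/
def tdecode (n : ℕ) : Option TaskT := Encodable.decode (Nat.unpair n).2

theorem tdecode_pair (k : ℕ) (t : TaskT) :
    tdecode (Nat.pair k (Encodable.encode t)) = some t := by
  rw [tdecode, Nat.unpair_pair]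
  exact Encodable.encodek t

/-- Stage `n → n+1` handles the task coded by `n`. -/
def Handles (P : ProjPlane) (n : ℕ) (B D : WM ℕ) : Prop :=
  ∀ t : TaskT, tdecode n = some t →
    (∀ c : TaskU, t = Sum.inl c →
      ∀ N : WM ℕ, Matches N c → Omits N P → ∃ f : ℕ → ℕ, IsEmb N D f) ∧
    (∀ F m, t = Sum.inr (F, m) → HGuar B D F m)

theorem step_ex (P : ProjPlane) (n : ℕ) (B : WM ℕ) (hfin : B.carrier.Finite)
    (hBP : Omits B P) : ∃ D : WM ℕ, Sub B D ∧ D.carrier.Finite ∧ Omits D P ∧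
      n ∈ D.carrier ∧ Handles P n B D := by
  rcases ht : tdecode n with _ | t
  · obtain ⟨D, h1, h2, h3, h4⟩ := add_fresh P B hfin hBP n
    refine ⟨D, h1, h2, h3, h4, ?_⟩
    intro t' ht'
    rw [ht] at ht'
    cases ht'
  · cases t with
    | inl c =>
      obtain ⟨D₀, h1, h2, h3, hg⟩ := handleU P B hfin hBP c
      obtain ⟨D, k1, k2, k3, k4⟩ := add_fresh P D₀ h2 h3 n
      refine ⟨D, h1.trans k1, k2, k3, k4, ?_⟩
      intro t' ht'
      rw [ht] at ht'
      injection ht' with ht''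
      subst ht''
      constructor
      · rintro c' he N hN hNP
        rw [Sum.inl.injEq] at he
        subst he
        obtain ⟨f, hf⟩ := hg N hN hNP
        exact ⟨id ∘ f, hf.comp k1.isEmb⟩
      · rintro F m he
        exact absurd he (by simp)
    | inr p =>
      obtain ⟨F, m⟩ := p
      obtain ⟨D₀, h1, h2, h3, hg⟩ := handleH P B hfin hBP F m
      obtain ⟨D, k1, k2, k3, k4⟩ := add_fresh P D₀ h2 h3 n
      refine ⟨D, h1.trans k1, k2, k3, k4, ?_⟩
      intro t' ht'
      rw [ht] at ht'
      injection ht' with ht''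
      subst ht''
      constructor
      · rintro c' he
        exact absurd he (by simp)
      · rintro F' m' he
        rw [Sum.inr.injEq, Prod.mk.injEq] at he
        obtain ⟨rfl, rfl⟩ := he
        exact HGuar_mono h1 k1 (hg)

/-- The generic chain of finite stages. -/
noncomputable def chainS (P : ProjPlane) : ℕ → {B : WM ℕ // B.carrier.Finite ∧ Omits B P}
  | 0 => ⟨trivWM {0, 1, 2},
      (Set.finite_singleton 2).insert 1 |>.insert 0, triv_omits _ P⟩
  | n + 1 =>
      ⟨(step_ex P n (chainS P n).1 (chainS P n).2.1 (chainS P n).2.2).choose,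
        (step_ex P n (chainS P n).1 (chainS P n).2.1 (chainS P n).2.2).choose_spec.2.1,
        (step_ex P n (chainS P n).1 (chainS P n).2.1 (chainS P n).2.2).choose_spec.2.2.1⟩

/-- The generic chain. -/
noncomputable def chainW (P : ProjPlane) (n : ℕ) : WM ℕ := (chainS P n).1

theorem chain_fin (P : ProjPlane) (n : ℕ) : (chainW P n).carrier.Finite := (chainS P n).2.1

theorem chain_omits (P : ProjPlane) (n : ℕ) : Omits (chainW P n) P := (chainS P n).2.2

theorem chain_zero (P : ProjPlane) : chainW P 0 = trivWM {0, 1, 2} := rfl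

theorem chain_sub (P : ProjPlane) (n : ℕ) : Sub (chainW P n) (chainW P (n + 1)) :=
  (step_ex P n (chainS P n).1 (chainS P n).2.1 (chainS P n).2.2).choose_spec.1

theorem chain_mem (P : ProjPlane) (n : ℕ) : n ∈ (chainW P (n + 1)).carrier :=
  (step_ex P n (chainS P n).1 (chainS P n).2.1 (chainS P n).2.2).choose_spec.2.2.2.1

theorem chain_handles (P : ProjPlane) (n : ℕ) :
    Handles P n (chainW P n) (chainW P (n + 1)) :=
  (step_ex P n (chainS P n).1 (chainS P n).2.1 (chainS P n).2.2).choose_spec.2.2.2.2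

theorem chain_le (P : ProjPlane) {k m : ℕ} (h : k ≤ m) : Sub (chainW P k) (chainW P m) := by
  induction m with
  | zero => rw [Nat.le_zero.1 h]; exact Sub.refl _
  | succ m ih =>
    rcases Nat.lt_or_ge k (m + 1) with h' | h'
    · exact (ih (Nat.lt_succ_iff.1 h')).trans (chain_sub P m)
    · rw [Nat.le_antisymm h h']
      exact Sub.refl _

theorem chainR_mono (P : ProjPlane) {k m : ℕ} (h : k ≤ m) {a b c : ℕ}
    (hR : (chainW P k).R a b c) : (chainW P m).R a b c := by
  obtain ⟨ha, hb, hc⟩ := (chainW P k).R_mem _ _ _ hR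
  exact ((chain_le P h).rel a ha b hb c hc).1 hR

/-- The limit relation. -/
def limR (P : ProjPlane) : ℕ → ℕ → ℕ → Prop := fun a b c => ∃ n, (chainW P n).R a b c

/-- The limit structure. -/
noncomputable def limWM (P : ProjPlane) : WM ℕ where
  carrier := Set.univ
  R := limR P
  wedge := genW (limR P)
  R_mem _ _ _ _ := ⟨trivial, trivial, trivial⟩
  wedge_mem _ _ _ _ _ _ _ _ := trivial
  irrefl a b c h := (chainW P h.choose).irrefl a b c h.choose_spec
  symm_swap a b c h := ⟨h.choose, (chainW P h.choose).symm_swap a b c h.choose_spec⟩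
  symm_rot a b c h := ⟨h.choose, (chainW P h.choose).symm_rot a b c h.choose_spec⟩
  exchange a b c d h1 h2 x y z hx hy hz hxy hxz hyz := by
    obtain ⟨n1, h1⟩ := h1
    obtain ⟨n2, h2⟩ := h2
    exact ⟨max n1 n2, (chainW P (max n1 n2)).exchange a b c d
      (chainR_mono P (le_max_left _ _) h1) (chainR_mono P (le_max_right _ _) h2)
      x y z hx hy hz hxy hxz hyz⟩
  wedge_det a b c d _ _ _ _ := genW_det (limR P) a b c d

theorem lim_restrict (P : ProjPlane) {n : ℕ} {a b c : ℕ} (ha : a ∈ (chainW P n).carrier)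
    (hb : b ∈ (chainW P n).carrier) (hc : c ∈ (chainW P n).carrier) :
    limR P a b c ↔ (chainW P n).R a b c := by
  constructor
  · rintro ⟨k, h⟩
    exact ((chain_le P (le_max_right k n)).rel a ha b hb c hc).2
      (chainR_mono P (le_max_left k n) h)
  · exact fun h => ⟨n, h⟩

theorem lim_line_trace (P : ProjPlane) {n : ℕ} {a b : ℕ} (ha : a ∈ (chainW P n).carrier)
    (hb : b ∈ (chainW P n).carrier) :
    lineOf (limR P) a b ∩ (chainW P n).carrier = lineOf (chainW P n).R a b := by
  apply Set.Subset.antisymm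
  · rintro u ⟨hu, huc⟩
    rcases mem_lineOf.1 hu with rfl | rfl | h
    · exact left_mem_lineOf _ _
    · exact right_mem_lineOf _ _
    · exact R_mem_lineOf ((lim_restrict P ha hb huc).1 h)
  · intro u hu
    rcases mem_lineOf.1 hu with rfl | rfl | h
    · exact ⟨left_mem_lineOf _ _, ha⟩
    · exact ⟨right_mem_lineOf _ _, hb⟩
    · exact ⟨R_mem_lineOf ⟨n, h⟩, ((chainW P n).R_mem _ _ _ h).2.2⟩

theorem lim_line_mono (P : ProjPlane) {n : ℕ} {a b : ℕ} :
    lineOf (chainW P n).R a b ⊆ lineOf (limR P) a b := by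
  intro u hu
  rcases mem_lineOf.1 hu with rfl | rfl | h
  · exact left_mem_lineOf _ _
  · exact right_mem_lineOf _ _
  · exact R_mem_lineOf ⟨n, h⟩

theorem stage_line_mono (P : ProjPlane) {k m : ℕ} (h : k ≤ m) {a b : ℕ} :
    lineOf (chainW P k).R a b ⊆ lineOf (chainW P m).R a b := by
  intro u hu
  rcases mem_lineOf.1 hu with rfl | rfl | hR
  · exact left_mem_lineOf _ _
  · exact right_mem_lineOf _ _
  · exact R_mem_lineOf (chainR_mono P h hR)

theorem stage_lineeq_lim (P : ProjPlane) {n : ℕ} {x y z w : ℕ}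
    (hx : x ∈ (chainW P n).carrier) (hy : y ∈ (chainW P n).carrier)
    (hz : z ∈ (chainW P n).carrier) (hw : w ∈ (chainW P n).carrier)
    (hxy : x ≠ y) (hzw : z ≠ w)
    (he : lineOf (chainW P n).R x y = lineOf (chainW P n).R z w) :
    lineOf (limR P) x y = lineOf (limR P) z w := by
  have main : ∀ x y z w : ℕ, x ≠ y → z ≠ w →
      lineOf (chainW P n).R x y = lineOf (chainW P n).R z w →
      lineOf (limR P) x y ⊆ lineOf (limR P) z w := by
    intro x y z w hxy hzw he u hu
    rcases mem_lineOf.1 hu with rfl | rfl | h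
    · exact lim_line_mono P (he ▸ left_mem_lineOf _ _)
    · exact lim_line_mono P (he ▸ right_mem_lineOf _ _)
    · obtain ⟨k, hk⟩ := h
      set m := max k n with hm
      have hkm : (chainW P m).R x y u := chainR_mono P (le_max_left _ _) hk
      have hzl : z ∈ lineOf (chainW P m).R x y :=
        stage_line_mono P (le_max_right _ _) (he ▸ left_mem_lineOf _ _)
      have hwl : w ∈ lineOf (chainW P m).R x y :=
        stage_line_mono P (le_max_right _ _) (he ▸ right_mem_lineOf _ _)
      have := (chainW P m).lineOf_eq hxy hzw hzl hwl
      exact lim_line_mono P (this ▸ R_mem_lineOf hkm)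
  exact Set.Subset.antisymm (main x y z w hxy hzw he) (main z w x y hzw hxy he.symm)

theorem lim_sub (P : ProjPlane) (n : ℕ) : Sub (chainW P n) (limWM P) where
  sub := fun x _ => trivial
  rel a ha b hb c hc := (lim_restrict P ha hb hc).symm
  wedge a ha b hb c hc d hd := by
    show (chainW P n).wedge a b c d = genW (limR P) a b c d
    rcases (chainW P n).wedge_det a b c d ha hb hc hd with
      ⟨hab, hcd, hne, hw1, hw2, hw4⟩ | ⟨hwa, hno⟩
    · have hane : lineOf (limR P) a b ≠ lineOf (limR P) c d := by
        intro e
        have hc' : c ∈ lineOf (chainW P n).R a b := by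
          rw [← lim_line_trace P ha hb]
          exact ⟨e ▸ left_mem_lineOf _ _, hc⟩
        have hd' : d ∈ lineOf (chainW P n).R a b := by
          rw [← lim_line_trace P ha hb]
          exact ⟨e ▸ right_mem_lineOf _ _, hd⟩
        exact hne ((chainW P n).lineOf_eq hab hcd hc' hd').symm
      have hcond : ∃ p, a ≠ b ∧ c ≠ d ∧ lineOf (limR P) a b ≠ lineOf (limR P) c d ∧
          p ∈ lineOf (limR P) a b ∧ p ∈ lineOf (limR P) c d ∧ p ∉ ({a, b, c, d} : Set ℕ) :=
        ⟨(chainW P n).wedge a b c d, hab, hcd, hane, lim_line_mono P hw1, lim_line_mono P hw2,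
          hw4⟩
      obtain ⟨-, -, -, hg1, hg2, -⟩ := genW_pos hcond
      by_contra hne'
      exact hane ((limWM P).lineOf_eq_of_two_mem hab hcd hne' (lim_line_mono P hw1) hg1
        (lim_line_mono P hw2) hg2)
    · rw [hwa]
      refine (genW_neg ?_).symm
      rintro ⟨p, hab, hcd, hane, hp1, hp2, hp4⟩
      set m := max (p + 1) n with hm
      have hpm : p ∈ (chainW P m).carrier :=
        (chain_le P (le_max_left _ _)).sub (chain_mem P p)
      have ham : a ∈ (chainW P m).carrier := (chain_le P (le_max_right _ _)).sub ha
      have hbm : b ∈ (chainW P m).carrier := (chain_le P (le_max_right _ _)).sub hb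
      have hcm : c ∈ (chainW P m).carrier := (chain_le P (le_max_right _ _)).sub hc
      have hdm : d ∈ (chainW P m).carrier := (chain_le P (le_max_right _ _)).sub hd
      have hp1' : p ∈ lineOf (chainW P m).R a b := by
        rw [← lim_line_trace P ham hbm]
        exact ⟨hp1, hpm⟩
      have hp2' : p ∈ lineOf (chainW P m).R c d := by
        rw [← lim_line_trace P hcm hdm]
        exact ⟨hp2, hpm⟩
      have hmne : lineOf (chainW P m).R a b ≠ lineOf (chainW P m).R c d :=
        fun e => hane (stage_lineeq_lim P ham hbm hcm hdm hab hcd e)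
      rcases (chainW P m).wedge_det a b c d ham hbm hcm hdm with
        ⟨-, -, -, -, -, hw4'⟩ | ⟨-, hno'⟩
      · have heq : (chainW P m).wedge a b c d = (chainW P n).wedge a b c d :=
          ((chain_le P (le_max_right _ _)).wedge a ha b hb c hc d hd).symm
        rw [heq, hwa] at hw4'
        exact hw4' (Set.mem_insert _ _)
      · exact hno' ⟨p, hab, hcd, hmne, hp1', hp2', hp4⟩

end Chain
/-! ### Global properties of the limit -/

section Final1

theorem chain_cover (P : ProjPlane) (F : Finset ℕ) :
    ∃ n, ↑F ⊆ (chainW P n).carrier := by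
  classical
  induction F using Finset.induction_on with
  | empty => exact ⟨0, by simp⟩
  | @insert x F hx ih =>
    obtain ⟨n, hn⟩ := ih
    refine ⟨max (x + 1) n, ?_⟩
    rw [Finset.coe_insert, Set.insert_subset_iff]
    exact ⟨(chain_le P (le_max_left _ _)).sub (chain_mem P x),
      hn.trans (chain_le P (le_max_right _ _)).sub⟩

theorem chain_cover_set (P : ProjPlane) (s : Set ℕ) (hs : s.Finite) :
    ∃ n, s ⊆ (chainW P n).carrier := by
  obtain ⟨n, hn⟩ := chain_cover P hs.toFinset
  exact ⟨n, by rwa [Set.Finite.coe_toFinset] at hn⟩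

theorem lim_omits (P : ProjPlane) [Finite P.Point] : Omits (limWM P) P := by
  rintro ⟨e, einj, emem, erel⟩
  obtain ⟨n, hn⟩ := chain_cover_set P (Set.range e) (Set.finite_range e)
  have hmem : ∀ p, e p ∈ (chainW P n).carrier := fun p => hn ⟨p, rfl⟩
  exact chain_omits P n ⟨e, einj, hmem, fun a b c =>
    (erel a b c).trans (lim_restrict P (hmem a) (hmem b) (hmem c))⟩

theorem lim_rank3 (P : ProjPlane) : Rank3 (limWM P) := by
  refine ⟨0, trivial, 1, trivial, 2, trivial, by omega, by omega, by omega, ?_⟩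
  intro h
  have h0 : (0 : ℕ) ∈ (chainW P 0).carrier := by
    show (0 : ℕ) ∈ ({0, 1, 2} : Set ℕ)
    simp
  have h1 : (1 : ℕ) ∈ (chainW P 0).carrier := by
    show (1 : ℕ) ∈ ({0, 1, 2} : Set ℕ)
    simp
  have h2 : (2 : ℕ) ∈ (chainW P 0).carrier := by
    show (2 : ℕ) ∈ ({0, 1, 2} : Set ℕ)
    simp
  exact (lim_restrict P h0 h1 h2).1 h

theorem lim_universal (P : ProjPlane) (W : Type) (N : WM W) (hfin : N.carrier.Finite)
    (hNP : Omits N P) : ∃ f : W → ℕ, IsEmb N (limWM P) f := by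
  by_cases hne : N.carrier.Nonempty
  · have : Nonempty W := ⟨hne.choose⟩
    have hft : Fintype ↥N.carrier := hfin.fintype
    set k := Fintype.card ↥N.carrier with hk
    set eq := Fintype.equivFin ↥N.carrier with heq
    set f : W → ℕ := fun x => if h : x ∈ N.carrier then (eq ⟨x, h⟩ : ℕ) else 0 with hf
    have hfi : Set.InjOn f N.carrier := by
      intro x hx y hy hxy
      rw [hf] at hxy
      dsimp only at hxy
      rw [dif_pos hx, dif_pos hy] at hxy
      have h2 := eq.injective (Fin.val_injective hxy)
      exact congrArg Subtype.val h2
    have himg : f '' N.carrier = {x | x < k} := by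
      apply Set.Subset.antisymm
      · rintro y ⟨x, hx, rfl⟩
        rw [hf]
        dsimp only
        rw [dif_pos hx]
        exact (eq ⟨x, hx⟩).2
      · intro y hy
        refine ⟨(eq.symm ⟨y, hy⟩ : ↥N.carrier).1, (eq.symm ⟨y, hy⟩).2, ?_⟩
        rw [hf]
        dsimp only
        rw [dif_pos (eq.symm ⟨y, hy⟩).2]
        rw [Subtype.coe_eta, Equiv.apply_symm_apply]
    set N₁ := mapWM N f hfi with hN₁
    have hcar₁ : N₁.carrier = {x | x < k} := himg
    classical
    set r : Finset (ℕ × ℕ × ℕ) :=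
      ((Finset.range k) ×ˢ ((Finset.range k) ×ˢ (Finset.range k))).filter
        (fun p => N₁.R p.1 p.2.1 p.2.2) with hr
    have hmatch : Matches N₁ (k, r) := by
      refine ⟨hcar₁, fun a b d => ?_⟩
      constructor
      · intro h
        obtain ⟨ha, hb, hd⟩ := N₁.R_mem _ _ _ h
        rw [hcar₁] at ha hb hd
        refine Finset.mem_filter.2 ⟨?_, h⟩
        simp only [Finset.mem_product, Finset.mem_range]
        exact ⟨ha, hb, hd⟩
      · exact fun h => (Finset.mem_filter.1 h).2
    have hNP₁ : Omits N₁ P := map_omits N f hfi P hNP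
    set n := Nat.pair 0 (Encodable.encode (Sum.inl (k, r) : TaskT)) with hn
    have hdec : tdecode n = some (Sum.inl (k, r)) := tdecode_pair _ _
    obtain ⟨f₂, hf₂⟩ := ((chain_handles P n) _ hdec).1 (k, r) rfl N₁ hmatch hNP₁
    exact ⟨id ∘ (f₂ ∘ f), ((map_isEmb N f hfi).comp hf₂).comp (lim_sub P (n + 1)).isEmb⟩
  · rw [Set.not_nonempty_iff_eq_empty] at hne
    refine ⟨fun _ => 0, ?_, ?_, ?_, ?_⟩ <;>
      intro x hx <;> rw [hne] at hx <;> exact absurd hx (Set.notMem_empty x)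

end Final1
/-! ### Homogeneity of the limit -/

section Homog

open Function

/-- A finite partial isomorphism of the limit structure. -/
def PIso (P : ProjPlane) (s : Set ℕ) (j : ℕ → ℕ) : Prop :=
  s.Finite ∧
  (∀ a b c d, a ∈ s → b ∈ s → c ∈ s → d ∈ s → (limWM P).wedge a b c d ∈ s) ∧
  Set.InjOn j s ∧
  (∀ a b c, a ∈ s → b ∈ s → c ∈ s →
    ((limWM P).R a b c ↔ (limWM P).R (j a) (j b) (j c))) ∧
  (∀ a b c d, a ∈ s → b ∈ s → c ∈ s → d ∈ s →
    j ((limWM P).wedge a b c d) = (limWM P).wedge (j a) (j b) (j c) (j d))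

theorem pIso_symm (P : ProjPlane) {s : Set ℕ} {j : ℕ → ℕ} (h : PIso P s j) :
    PIso P (j '' s) (invFunOn j s) := by
  obtain ⟨hfin, hcl, hinj, hriff, hwcomm⟩ := h
  have hgj : ∀ x ∈ s, invFunOn j s (j x) = x := fun x hx => hinj.leftInvOn_invFunOn hx
  refine ⟨hfin.image j, ?_, ?_, ?_, ?_⟩
  · rintro _ _ _ _ ⟨a, ha, rfl⟩ ⟨b, hb, rfl⟩ ⟨c, hc, rfl⟩ ⟨d, hd, rfl⟩
    rw [← hwcomm a b c d ha hb hc hd]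
    exact ⟨_, hcl a b c d ha hb hc hd, rfl⟩
  · rintro _ ⟨a, ha, rfl⟩ _ ⟨b, hb, rfl⟩ e
    rw [hgj a ha, hgj b hb] at e
    rw [e]
  · rintro _ _ _ ⟨a, ha, rfl⟩ ⟨b, hb, rfl⟩ ⟨c, hc, rfl⟩
    rw [hgj a ha, hgj b hb, hgj c hc]
    exact (hriff a b c ha hb hc).symm
  · rintro _ _ _ _ ⟨a, ha, rfl⟩ ⟨b, hb, rfl⟩ ⟨c, hc, rfl⟩ ⟨d, hd, rfl⟩
    rw [hgj a ha, hgj b hb, hgj c hc, hgj d hd, ← hwcomm a b c d ha hb hc hd,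
      hgj _ (hcl a b c d ha hb hc hd)]

/-- The extension property of the limit. -/
theorem pIso_extend (P : ProjPlane) {s : Set ℕ} {j : ℕ → ℕ} (h : PIso P s j) (m : ℕ) :
    ∃ s' j', PIso P s' j' ∧ s ⊆ s' ∧ (∀ x ∈ s, j' x = j x) ∧ m ∈ s' := by
  classical
  obtain ⟨hfin, hcl, hinj, hriff, hwcomm⟩ := h
  obtain ⟨n₀, hn₀⟩ := chain_cover_set P (s ∪ j '' s ∪ {m})
    ((hfin.union (hfin.image j)).union (Set.finite_singleton m))
  set F := hfin.toFinset.image (fun a => (a, j a)) with hF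
  have hsOf : sOf F = s := by rw [hF, sOf_graph, Set.Finite.coe_toFinset]
  have hjOf : ∀ x ∈ s, jOf F x = j x := fun x hx =>
    jOf_graph _ _ (hfin.mem_toFinset.2 hx)
  set n := Nat.pair n₀ (Encodable.encode (Sum.inr (F, m) : TaskT)) with hn
  have hn₀n : n₀ ≤ n := Nat.left_le_pair _ _
  set B := chainW P n with hB
  have hsB : s ⊆ B.carrier := fun x hx =>
    (chain_le P hn₀n).sub (hn₀ (Or.inl (Or.inl hx)))
  have hjB : ∀ x ∈ s, j x ∈ B.carrier := fun x hx =>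
    (chain_le P hn₀n).sub (hn₀ (Or.inl (Or.inr ⟨x, hx, rfl⟩)))
  have hmB : m ∈ B.carrier := (chain_le P hn₀n).sub (hn₀ (Or.inr rfl))
  have hweq : ∀ a b c d : ℕ, a ∈ B.carrier → b ∈ B.carrier → c ∈ B.carrier →
      d ∈ B.carrier → B.wedge a b c d = (limWM P).wedge a b c d :=
    fun a b c d ha hb hc hd => (lim_sub P n).wedge a ha b hb c hc d hd
  have hreq : ∀ a b c : ℕ, a ∈ B.carrier → b ∈ B.carrier → c ∈ B.carrier →
      (B.R a b c ↔ (limWM P).R a b c) :=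
    fun a b c ha hb hc => (lim_sub P n).rel a ha b hb c hc
  have hripe : RipeH B F m := by
    refine ⟨?_, ?_, hmB, ?_, ?_, ?_, ?_⟩
    · rw [hsOf]; exact hsB
    · intro x hx
      rw [hsOf] at hx
      rw [hjOf x hx]
      exact hjB x hx
    · rw [hsOf]
      intro x hx y hy e
      rw [hjOf x hx, hjOf y hy] at e
      exact hinj hx hy e
    · intro a b c d ha hb hc hd
      rw [hsOf] at ha hb hc hd ⊢
      rw [hweq a b c d (hsB ha) (hsB hb) (hsB hc) (hsB hd)]
      exact hcl a b c d ha hb hc hd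
    · intro a b c d ha hb hc hd
      rw [hsOf] at ha hb hc hd
      rw [hweq a b c d (hsB ha) (hsB hb) (hsB hc) (hsB hd),
        hjOf _ (hcl a b c d ha hb hc hd), hjOf a ha, hjOf b hb, hjOf c hc, hjOf d hd,
        hweq _ _ _ _ (hjB a ha) (hjB b hb) (hjB c hc) (hjB d hd)]
      exact hwcomm a b c d ha hb hc hd
    · intro a b c ha hb hc
      rw [hsOf] at ha hb hc
      rw [hjOf a ha, hjOf b hb, hjOf c hc,
        hreq a b c (hsB ha) (hsB hb) (hsB hc),
        hreq _ _ _ (hjB a ha) (hjB b hb) (hjB c hc)]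
      exact hriff a b c ha hb hc
  obtain ⟨j', hj'1, hj'2, hj'3, hj'4, hj'5⟩ :=
    ((chain_handles P n) _ (tdecode_pair _ _)).2 F m rfl hripe
  set s' := wcl B (sOf F ∪ {m}) with hs'
  have hsmB : sOf F ∪ {m} ⊆ B.carrier := by
    rw [hsOf]
    exact Set.union_subset hsB (Set.singleton_subset_iff.2 hmB)
  have hs'B : s' ⊆ B.carrier := wcl_subset_carrier B hsmB
  have hs'D : s' ⊆ (chainW P (n + 1)).carrier := fun x hx => (chain_sub P n).sub (hs'B hx)
  have hweq' : ∀ a b c d : ℕ, a ∈ (chainW P (n+1)).carrier → b ∈ (chainW P (n+1)).carrier →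
      c ∈ (chainW P (n+1)).carrier → d ∈ (chainW P (n+1)).carrier →
      (chainW P (n+1)).wedge a b c d = (limWM P).wedge a b c d :=
    fun a b c d ha hb hc hd => (lim_sub P (n+1)).wedge a ha b hb c hc d hd
  have hreq' : ∀ a b c : ℕ, a ∈ (chainW P (n+1)).carrier → b ∈ (chainW P (n+1)).carrier →
      c ∈ (chainW P (n+1)).carrier →
      ((chainW P (n+1)).R a b c ↔ (limWM P).R a b c) :=
    fun a b c ha hb hc => (lim_sub P (n+1)).rel a ha b hb c hc
  refine ⟨s', j', ⟨wcl_finite B hsmB (chain_fin P n), ?_, hj'2, ?_, ?_⟩, ?_, ?_, ?_⟩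
  · intro a b c d ha hb hc hd
    rw [← hweq a b c d (hs'B ha) (hs'B hb) (hs'B hc) (hs'B hd)]
    exact wcl_closed B a b c d ha hb hc hd
  · intro a b c ha hb hc
    rw [← hreq' a b c (hs'D ha) (hs'D hb) (hs'D hc),
      ← hreq' _ _ _ (hj'3 a ha) (hj'3 b hb) (hj'3 c hc)]
    exact hj'4 a b c ha hb hc
  · intro a b c d ha hb hc hd
    rw [← hweq' a b c d (hs'D ha) (hs'D hb) (hs'D hc) (hs'D hd),
      ← hweq' _ _ _ _ (hj'3 a ha) (hj'3 b hb) (hj'3 c hc) (hj'3 d hd)]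
    exact hj'5 a b c d ha hb hc hd
  · intro x hx
    rw [hs']
    exact subset_wcl B (Or.inl (hsOf ▸ hx))
  · intro x hx
    rw [hj'1 x (hsOf ▸ hx), hjOf x hx]
  · exact subset_wcl B (Or.inr rfl)

/-- One back-and-forth step. -/
theorem bf_step (P : ProjPlane) {s : Set ℕ} {j : ℕ → ℕ} (h : PIso P s j) (n : ℕ) :
    ∃ s' j', PIso P s' j' ∧ s ⊆ s' ∧ (∀ x ∈ s, j' x = j x) ∧ n ∈ s' ∧ n ∈ j' '' s' := by
  obtain ⟨s2, j2, h2, hss2, heq2, hns2⟩ := pIso_extend P h n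
  obtain ⟨t3, g3, h3, ht23, heq3, hnt3⟩ := pIso_extend P (pIso_symm P h2) n
  have hj2inj : Set.InjOn j2 s2 := h2.2.2.1
  have hg3inj : Set.InjOn g3 t3 := h3.2.2.1
  have hgj2 : ∀ x ∈ s2, invFunOn j2 s2 (j2 x) = x := fun x hx => hj2inj.leftInvOn_invFunOn hx
  have key : ∀ x ∈ s2, g3 (j2 x) = x := by
    intro x hx
    rw [heq3 (j2 x) ⟨x, hx, rfl⟩]
    exact hgj2 x hx
  have hsub : s2 ⊆ g3 '' t3 := by
    intro x hx
    exact ⟨j2 x, ht23 ⟨x, hx, rfl⟩, key x hx⟩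
  refine ⟨g3 '' t3, invFunOn g3 t3, pIso_symm P h3, hss2.trans hsub, ?_, hsub hns2, ?_⟩
  · intro x hx
    have hx2 : x ∈ s2 := hss2 hx
    have e1 : g3 (j2 x) = x := key x hx2
    have e2 : invFunOn g3 t3 (g3 (j2 x)) = j2 x :=
      hg3inj.leftInvOn_invFunOn (ht23 ⟨x, hx2, rfl⟩)
    have e3 : invFunOn g3 t3 x = j2 x := by
      conv_lhs => rw [← e1]
      exact e2
    exact e3.trans (heq2 x hx)
  · exact ⟨g3 n, ⟨n, hnt3, rfl⟩, hg3inj.leftInvOn_invFunOn hnt3⟩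

/-- The back-and-forth sequence. -/
noncomputable def bfSeq (P : ProjPlane) (s₀ : Set ℕ) (j₀ : ℕ → ℕ) (h₀ : PIso P s₀ j₀) :
    ℕ → Σ' (s : Set ℕ) (j : ℕ → ℕ), PIso P s j
  | 0 => ⟨s₀, j₀, h₀⟩
  | n + 1 =>
    ⟨(bf_step P (bfSeq P s₀ j₀ h₀ n).2.2 n).choose,
      (bf_step P (bfSeq P s₀ j₀ h₀ n).2.2 n).choose_spec.choose,
      (bf_step P (bfSeq P s₀ j₀ h₀ n).2.2 n).choose_spec.choose_spec.1⟩

variable {P : ProjPlane} {s₀ : Set ℕ} {j₀ : ℕ → ℕ} {h₀ : PIso P s₀ j₀}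

theorem bfSeq_spec (n : ℕ) :
    (bfSeq P s₀ j₀ h₀ n).1 ⊆ (bfSeq P s₀ j₀ h₀ (n + 1)).1 ∧
    (∀ x ∈ (bfSeq P s₀ j₀ h₀ n).1,
      (bfSeq P s₀ j₀ h₀ (n + 1)).2.1 x = (bfSeq P s₀ j₀ h₀ n).2.1 x) ∧
    n ∈ (bfSeq P s₀ j₀ h₀ (n + 1)).1 ∧
    n ∈ (bfSeq P s₀ j₀ h₀ (n + 1)).2.1 '' (bfSeq P s₀ j₀ h₀ (n + 1)).1 := by
  obtain ⟨h1, h2, h3, h4⟩ :=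
    (bf_step P (bfSeq P s₀ j₀ h₀ n).2.2 n).choose_spec.choose_spec.2
  exact ⟨h1, h2, h3, h4⟩

theorem bfSeq_mono {k m : ℕ} (h : k ≤ m) :
    (bfSeq P s₀ j₀ h₀ k).1 ⊆ (bfSeq P s₀ j₀ h₀ m).1 := by
  induction m with
  | zero => rw [Nat.le_zero.1 h]
  | succ m ih =>
    rcases Nat.lt_or_ge k (m + 1) with h' | h'
    · exact (ih (Nat.lt_succ_iff.1 h')).trans (bfSeq_spec m).1
    · rw [Nat.le_antisymm h h']

theorem bfSeq_eq_mono {k m : ℕ} (h : k ≤ m) :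
    ∀ x ∈ (bfSeq P s₀ j₀ h₀ k).1,
      (bfSeq P s₀ j₀ h₀ m).2.1 x = (bfSeq P s₀ j₀ h₀ k).2.1 x := by
  induction m with
  | zero => rw [Nat.le_zero.1 h]; exact fun x _ => rfl
  | succ m ih =>
    rcases Nat.lt_or_ge k (m + 1) with h' | h'
    · intro x hx
      rw [(bfSeq_spec m).2.1 x (bfSeq_mono (Nat.lt_succ_iff.1 h') hx)]
      exact ih (Nat.lt_succ_iff.1 h') x hx
    · rw [Nat.le_antisymm h h']
      exact fun x _ => rfl

/-- The limit automorphism. -/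
noncomputable def bfLim (P : ProjPlane) (s₀ : Set ℕ) (j₀ : ℕ → ℕ) (h₀ : PIso P s₀ j₀) :
    ℕ → ℕ := fun x => (bfSeq P s₀ j₀ h₀ (x + 1)).2.1 x

theorem bfLim_eq {m x : ℕ} (hx : x ∈ (bfSeq P s₀ j₀ h₀ m).1) :
    bfLim P s₀ j₀ h₀ x = (bfSeq P s₀ j₀ h₀ m).2.1 x := by
  set M := max m (x + 1) with hM
  have h1 : (bfSeq P s₀ j₀ h₀ M).2.1 x = (bfSeq P s₀ j₀ h₀ m).2.1 x :=
    bfSeq_eq_mono (le_max_left _ _) x hx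
  have h2 : (bfSeq P s₀ j₀ h₀ M).2.1 x = (bfSeq P s₀ j₀ h₀ (x + 1)).2.1 x :=
    bfSeq_eq_mono (le_max_right _ _) x
      ((bfSeq_spec x).2.2.1)
  rw [bfLim, ← h2, h1]

theorem bfLim_mem (x : ℕ) : x ∈ (bfSeq P s₀ j₀ h₀ (x + 1)).1 := (bfSeq_spec x).2.2.1

theorem bfLim_isAut (P : ProjPlane) (s₀ : Set ℕ) (j₀ : ℕ → ℕ) (h₀ : PIso P s₀ j₀) :
    IsAut (limWM P) (bfLim P s₀ j₀ h₀) := by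
  have hmem4 : ∀ x y z w : ℕ, ∃ m, x ∈ (bfSeq P s₀ j₀ h₀ m).1 ∧ y ∈ (bfSeq P s₀ j₀ h₀ m).1 ∧
      z ∈ (bfSeq P s₀ j₀ h₀ m).1 ∧ w ∈ (bfSeq P s₀ j₀ h₀ m).1 := by
    intro x y z w
    refine ⟨max (max (x+1) (y+1)) (max (z+1) (w+1)), ?_, ?_, ?_, ?_⟩
    · exact bfSeq_mono (le_trans (le_max_left _ _) (le_max_left _ _)) (bfLim_mem x)
    · exact bfSeq_mono (le_trans (le_max_right _ _) (le_max_left _ _)) (bfLim_mem y)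
    · exact bfSeq_mono (le_trans (le_max_left _ _) (le_max_right _ _)) (bfLim_mem z)
    · exact bfSeq_mono (le_trans (le_max_right _ _) (le_max_right _ _)) (bfLim_mem w)
  refine ⟨⟨fun x _ => trivial, ?_, ?_⟩, ?_, ?_⟩
  · -- injective on univ
    intro x _ y _ e
    obtain ⟨m, hx, hy, -, -⟩ := hmem4 x y 0 0
    rw [bfLim_eq hx, bfLim_eq hy] at e
    exact (bfSeq P s₀ j₀ h₀ m).2.2.2.2.1 hx hy e
  · -- surjective onto univ
    intro y _
    obtain ⟨x, hx, hjx⟩ := (bfSeq_spec y).2.2.2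
    exact ⟨x, trivial, by rw [bfLim_eq hx]; exact hjx⟩
  · intro a _ b _ c _
    obtain ⟨m, ha, hb, hc, -⟩ := hmem4 a b c 0
    rw [bfLim_eq ha, bfLim_eq hb, bfLim_eq hc]
    exact (bfSeq P s₀ j₀ h₀ m).2.2.2.2.2.1 a b c ha hb hc
  · intro a _ b _ c _ d _
    obtain ⟨m, ha, hb, hc, hd⟩ := hmem4 a b c d
    have hw : (limWM P).wedge a b c d ∈ (bfSeq P s₀ j₀ h₀ m).1 :=
      (bfSeq P s₀ j₀ h₀ m).2.2.2.1 a b c d ha hb hc hd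
    rw [bfLim_eq ha, bfLim_eq hb, bfLim_eq hc, bfLim_eq hd, bfLim_eq hw]
    exact (bfSeq P s₀ j₀ h₀ m).2.2.2.2.2.2 a b c d ha hb hc hd

end Homog
/-! ### Main theorem -/

/-- for a finite projective plane `P` there is a countably infinite simple
∧-matroid of rank 3 omitting `M_P`, universal for finite simple ∧-matroids of rank ≤ 3
omitting `M_P`, and homogeneous. -/
theorem universal_homogeneous_omitting_exists (P : ProjPlane)
    [Finite P.Point] [Finite P.Line] :
    ∃ (V : Type) (M : WM V), Countable V ∧ Infinite V ∧ M.carrier = Set.univ ∧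
      Rank3 M ∧ Omits M P ∧
      (∀ (W : Type) (N : WM W), N.carrier.Finite → Omits N P →
        ∃ f : W → V, IsEmb N M f) ∧
      (∀ A B : WM V, Sub A M → Sub B M → A.carrier.Finite → B.carrier.Finite →
        ∀ f : V → V, IsIso A B f →
          ∃ g : V → V, IsAut M g ∧ ∀ x ∈ A.carrier, g x = f x) := by
  refine ⟨ℕ, limWM P, inferInstance, inferInstance, rfl, lim_rank3 P, lim_omits P,
    fun W N hfin hNP => lim_universal P W N hfin hNP, ?_⟩
  intro A B hA hB hfA hfB f hf
  have he := hf.1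
  have p₀ : PIso P A.carrier f := by
    refine ⟨hfA, ?_, ?_, ?_, ?_⟩
    · intro a b c d ha hb hc hd
      rw [← hA.wedge a ha b hb c hc d hd]
      exact A.wedge_mem a b c d ha hb hc hd
    · exact fun x hx y hy e => he.inj x hx y hy e
    · intro a b c ha hb hc
      exact ((hA.rel a ha b hb c hc).symm.trans (he.rel a ha b hb c hc)).trans
        (hB.rel _ (he.maps a ha) _ (he.maps b hb) _ (he.maps c hc))
    · intro a b c d ha hb hc hd
      rw [← hA.wedge a ha b hb c hc d hd, he.wedge a ha b hb c hc d hd,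
        hB.wedge _ (he.maps a ha) _ (he.maps b hb) _ (he.maps c hc) _ (he.maps d hd)]
  exact ⟨bfLim P A.carrier f p₀, bfLim_isAut P A.carrier f p₀,
    fun x hx => bfLim_eq (m := 0) hx⟩
end PaoliniMatroids
end

section
/- For every natural number n there exists a finite simple ∧-matroid M(n) of rank 3 with exactly 6 + (n+1) elements together with 6 distinct points p1, …, p6 ∈ M(n) such that the smallest substructure of M(n) (i.e. subset closed under the ∧-function) containing {p1, …, p6} equals all of M(n); moreover, M(n) contains no projective plane, i.e. no subset of M(n) with the induced ternary relation is the matroid of collinear triples of a projective plane. -/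
namespace PaoliniMatroids

open Function Set

/-- The substructure generated by `X` in `M`: the smallest subset of the ambient type
containing `X` and closed under the ∧-function of `M`. -/
def wclosure {V : Type*} (M : WM V) (X : Set V) : Set V :=
  ⋂₀ {S : Set V | X ⊆ S ∧ ∀ a b c d, a ∈ S → b ∈ S → c ∈ S → d ∈ S → M.wedge a b c d ∈ S}

section Construction

def inA (j t : ℕ) : Prop := t = j % 2 ∨ t = j + 3 ∨ t = j + 4
def inB (j t : ℕ) : Prop := t = 2 + j / 2 % 2 ∨ t = j + 2 ∨ t = j + 4

def Rn (n : ℕ) (a b c : ℕ) : Prop :=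
  a ≠ b ∧ a ≠ c ∧ b ≠ c ∧ ∃ j, 2 ≤ j ∧ j ≤ n + 2 ∧
    ((inA j a ∧ inA j b ∧ inA j c) ∨ (inB j a ∧ inB j b ∧ inB j c))

def Cond (n a b c d p : ℕ) : Prop :=
  a ≠ b ∧ c ≠ d ∧ lineOf (Rn n) a b ≠ lineOf (Rn n) c d ∧
  p ∈ lineOf (Rn n) a b ∧ p ∈ lineOf (Rn n) c d ∧ p ∉ ({a, b, c, d} : Set ℕ)

open Classical in
noncomputable def wdg (n a b c d : ℕ) : ℕ :=
  if h : ∃ p, Cond n a b c d p then h.choose else a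

lemma Rn_lt {n a b c : ℕ} (h : Rn n a b c) : a < n + 7 ∧ b < n + 7 ∧ c < n + 7 := by
  obtain ⟨-, -, -, j, hj1, hj2, hc | hc⟩ := h <;> simp only [inA, inB] at hc <;> omega

lemma Rn_info {n a b c : ℕ} (h : Rn n a b c) :
    ¬(a ≤ 3 ∧ b ≤ 3) ∧ ((a ≤ 3 ∨ b ≤ 3) → 4 ≤ c) ∧
      ((4 ≤ a ∧ 4 ≤ b) → c ≤ 3 ∧ a ≤ b + 2 ∧ b ≤ a + 2) := by
  obtain ⟨hab, hac, hbc, j, hj1, hj2, hc | hc⟩ := h <;> simp only [inA, inB] at hc <;>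
    exact ⟨by omega, by omega, by omega⟩

lemma mem_lineA {n j t : ℕ} (h2 : 2 ≤ j) (hn : j ≤ n + 2) :
    t ∈ lineOf (Rn n) (j % 2) (j + 3) ↔ inA j t := by
  simp only [lineOf, Set.mem_union, Set.mem_insert_iff, Set.mem_singleton_iff,
    Set.mem_setOf_eq]
  constructor
  · rintro ((ht | ht) | ht)
    · exact Or.inl ht
    · exact Or.inr (Or.inl ht)
    · obtain ⟨h1, h2', h3, j₀, hj1, hj2, hc | hc⟩ := ht <;>
        simp only [inA, inB] at hc ⊢ <;> omega
  · rintro (ht | ht | ht)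
    · exact Or.inl (Or.inl ht)
    · exact Or.inl (Or.inr ht)
    · subst ht
      exact Or.inr ⟨by omega, by omega, by omega, j, h2, hn,
        Or.inl ⟨Or.inl rfl, Or.inr (Or.inl rfl), Or.inr (Or.inr rfl)⟩⟩

lemma mem_lineB {n j t : ℕ} (h2 : 2 ≤ j) (hn : j ≤ n + 2) :
    t ∈ lineOf (Rn n) (2 + j / 2 % 2) (j + 2) ↔ inB j t := by
  simp only [lineOf, Set.mem_union, Set.mem_insert_iff, Set.mem_singleton_iff,
    Set.mem_setOf_eq]
  constructor
  · rintro ((ht | ht) | ht)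
    · exact Or.inl ht
    · exact Or.inr (Or.inl ht)
    · obtain ⟨h1, h2', h3, j₀, hj1, hj2, hc | hc⟩ := ht <;>
        simp only [inA, inB] at hc ⊢ <;> omega
  · rintro (ht | ht | ht)
    · exact Or.inl (Or.inl ht)
    · exact Or.inl (Or.inr ht)
    · subst ht
      exact Or.inr ⟨by omega, by omega, by omega, j, h2, hn,
        Or.inr ⟨Or.inl rfl, Or.inr (Or.inl rfl), Or.inr (Or.inr rfl)⟩⟩

lemma wdg_eq {n j : ℕ} (h2 : 2 ≤ j) (hn : j ≤ n + 2) :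
    wdg n (j % 2) (j + 3) (2 + j / 2 % 2) (j + 2) = j + 4 := by
  have hcond : Cond n (j % 2) (j + 3) (2 + j / 2 % 2) (j + 2) (j + 4) := by
    refine ⟨by omega, by omega, ?_, ?_, ?_, ?_⟩
    · intro heq
      have hm : (j % 2) ∈ lineOf (Rn n) (j % 2) (j + 3) := Or.inl (Or.inl rfl)
      rw [heq] at hm
      have := (mem_lineB h2 hn).mp hm
      simp only [inB] at this; omega
    · exact (mem_lineA h2 hn).mpr (Or.inr (Or.inr rfl))
    · exact (mem_lineB h2 hn).mpr (Or.inr (Or.inr rfl))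
    · simp only [Set.mem_insert_iff, Set.mem_singleton_iff]; omega
  have hex : ∃ p, Cond n (j % 2) (j + 3) (2 + j / 2 % 2) (j + 2) p := ⟨_, hcond⟩
  rw [wdg]; rw [dif_pos hex]
  obtain ⟨-, -, -, hp1, -, hp4⟩ := hex.choose_spec
  have h1 := (mem_lineA h2 hn).mp hp1
  simp only [Set.mem_insert_iff, Set.mem_singleton_iff] at hp4
  simp only [inA] at h1
  omega

noncomputable def Mn (n : ℕ) : WM ℕ where
  carrier := ↑(Finset.range (n + 7))
  R := Rn n
  wedge := wdg n
  R_mem := by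
    intro a b c h
    have := Rn_lt h
    simp only [Finset.coe_range, Set.mem_Iio]
    omega
  wedge_mem := by
    intro a b c d ha hb hc hd
    rw [wdg]
    split_ifs with h
    · obtain ⟨-, -, -, hp1, -, hp4⟩ := h.choose_spec
      simp only [Set.mem_insert_iff, Set.mem_singleton_iff] at hp4
      rcases hp1 with (hp | hp) | hp
      · rw [hp]; exact ha
      · rw [hp]; exact hb
      · have := Rn_lt hp
        simp only [Finset.coe_range, Set.mem_Iio]
        omega
    · exact ha
  irrefl := fun a b c h => ⟨h.1, h.2.1, h.2.2.1⟩
  symm_swap := by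
    intro a b c h
    obtain ⟨h1, h2, h3, j, hj1, hj2, hc | hc⟩ := h
    · exact ⟨fun hba => h1 hba.symm, h3, h2, j, hj1, hj2, Or.inl ⟨hc.2.1, hc.1, hc.2.2⟩⟩
    · exact ⟨fun hba => h1 hba.symm, h3, h2, j, hj1, hj2, Or.inr ⟨hc.2.1, hc.1, hc.2.2⟩⟩
  symm_rot := by
    intro a b c h
    obtain ⟨h1, h2, h3, j, hj1, hj2, hc | hc⟩ := h
    · exact ⟨h3, fun e => h1 e.symm, fun e => h2 e.symm, j, hj1, hj2,
        Or.inl ⟨hc.2.1, hc.2.2, hc.1⟩⟩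
    · exact ⟨h3, fun e => h1 e.symm, fun e => h2 e.symm, j, hj1, hj2,
        Or.inr ⟨hc.2.1, hc.2.2, hc.1⟩⟩
  exchange := by
    intro a b c d h1 h2 x y z hx hy hz hxy hxz hyz
    obtain ⟨hab, hac, hbc, j, hj1, hj2, hc1⟩ := h1
    obtain ⟨-, had, hbd, j', hj1', hj2', hc2⟩ := h2
    have key : ∃ i, 2 ≤ i ∧ i ≤ n + 2 ∧
        ((inA i a ∧ inA i b ∧ inA i c ∧ inA i d) ∨
         (inB i a ∧ inB i b ∧ inB i c ∧ inB i d)) := by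
      rcases hc1 with ⟨ha1, hb1, hcl⟩ | ⟨ha1, hb1, hcl⟩ <;>
        rcases hc2 with ⟨ha2, hb2, hdl⟩ | ⟨ha2, hb2, hdl⟩
      · have hjj : j = j' := by simp only [inA] at ha1 hb1 ha2 hb2; omega
        subst hjj; exact ⟨j, hj1, hj2, Or.inl ⟨ha1, hb1, hcl, hdl⟩⟩
      · exfalso; simp only [inA, inB] at ha1 hb1 ha2 hb2; omega
      · exfalso; simp only [inA, inB] at ha1 hb1 ha2 hb2; omega
      · have hjj : j = j' := by simp only [inB] at ha1 hb1 ha2 hb2; omega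
        subst hjj; exact ⟨j, hj1, hj2, Or.inr ⟨ha1, hb1, hcl, hdl⟩⟩
    obtain ⟨i, hi1, hi2, hline⟩ := key
    simp only [Set.mem_insert_iff, Set.mem_singleton_iff] at hx hy hz
    refine ⟨hxy, hxz, hyz, i, hi1, hi2, ?_⟩
    rcases hline with ⟨pa, pb, pc, pd⟩ | ⟨pa, pb, pc, pd⟩
    · exact Or.inl ⟨by rcases hx with rfl | rfl | rfl | rfl <;> assumption,
        by rcases hy with rfl | rfl | rfl | rfl <;> assumption,
        by rcases hz with rfl | rfl | rfl | rfl <;> assumption⟩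
    · exact Or.inr ⟨by rcases hx with rfl | rfl | rfl | rfl <;> assumption,
        by rcases hy with rfl | rfl | rfl | rfl <;> assumption,
        by rcases hz with rfl | rfl | rfl | rfl <;> assumption⟩
  wedge_det := by
    intro a b c d ha hb hc hd
    show (a ≠ b ∧ c ≠ d ∧ lineOf (Rn n) a b ≠ lineOf (Rn n) c d ∧
        wdg n a b c d ∈ lineOf (Rn n) a b ∧ wdg n a b c d ∈ lineOf (Rn n) c d ∧
        wdg n a b c d ∉ ({a, b, c, d} : Set ℕ)) ∨ _
    rw [wdg]
    split_ifs with h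
    · exact Or.inl h.choose_spec
    · exact Or.inr ⟨rfl, h⟩

end Construction
/-- for every `n` there is a finite simple ∧-matroid of rank 3 with exactly
`6 + (n+1)` elements which is generated (as a substructure, i.e. under the ∧-function) by
6 distinct points, and which contains no projective plane. -/
theorem generated_by_six_points (n : ℕ) :
    ∃ (V : Type) (M : WM V) (p : Fin 6 → V),
      M.carrier.Finite ∧ M.carrier.ncard = 6 + (n + 1) ∧ Rank3 M ∧
      Function.Injective p ∧ (∀ i, p i ∈ M.carrier) ∧
      wclosure M (Set.range p) = M.carrier ∧
      ∀ P : ProjPlane, Omits M P := by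
  refine ⟨ℕ, Mn n, ![0, 1, 2, 3, 4, 5], ?_, ?_, ?_, ?_, ?_, ?_, ?_⟩
  · exact (Finset.range (n + 7)).finite_toSet
  · show (↑(Finset.range (n + 7)) : Set ℕ).ncard = 6 + (n + 1)
    rw [Set.ncard_coe_finset, Finset.card_range]
    omega
  · refine ⟨0, ?_, 1, ?_, 2, ?_, by omega, by omega, by omega, ?_⟩
    · show (0 : ℕ) ∈ (↑(Finset.range (n + 7)) : Set ℕ)
      simp
    · show (1 : ℕ) ∈ (↑(Finset.range (n + 7)) : Set ℕ)
      simp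
    · show (2 : ℕ) ∈ (↑(Finset.range (n + 7)) : Set ℕ)
      simp
    · intro h
      exact (Rn_info h).1 ⟨by omega, by omega⟩
  · decide
  · intro i
    show _ ∈ (↑(Finset.range (n + 7)) : Set ℕ)
    simp only [Finset.coe_range, Set.mem_Iio]
    have hval : (![0, 1, 2, 3, 4, 5] : Fin 6 → ℕ) i ≤ 5 := by fin_cases i <;> decide
    omega
  · have hrange : ∀ m : ℕ, m ≤ 5 → m ∈ Set.range ![0, 1, 2, 3, 4, 5] := by
      intro m hm
      interval_cases m
      · exact ⟨0, rfl⟩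
      · exact ⟨1, rfl⟩
      · exact ⟨2, rfl⟩
      · exact ⟨3, rfl⟩
      · exact ⟨4, rfl⟩
      · exact ⟨5, rfl⟩
    apply subset_antisymm
    · apply Set.sInter_subset_of_mem
      refine ⟨?_, fun a b c d ha hb hc hd => (Mn n).wedge_mem a b c d ha hb hc hd⟩
      rintro t ⟨i, rfl⟩
      show _ ∈ (↑(Finset.range (n + 7)) : Set ℕ)
      simp only [Finset.coe_range, Set.mem_Iio]
      have hval : (![0, 1, 2, 3, 4, 5] : Fin 6 → ℕ) i ≤ 5 := by fin_cases i <;> decide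
      omega
    · intro k hk
      have hk' : k < n + 7 := by
        simpa only [Mn, Finset.coe_range, Set.mem_Iio] using hk
      rw [wclosure, Set.mem_sInter]
      rintro S ⟨hS1, hS2⟩
      clear hk
      induction k using Nat.strong_induction_on with
      | _ k ih =>
        by_cases h5 : k ≤ 5
        · exact hS1 (hrange k h5)
        · have hj1 : 2 ≤ k - 4 := by omega
          have hj2 : k - 4 ≤ n + 2 := by omega
          have hw := wdg_eq (n := n) hj1 hj2
          have hk4 : (k - 4) + 4 = k := by omega
          rw [hk4] at hw
          have m1 : (k - 4) % 2 ∈ S := hS1 (hrange _ (by omega))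
          have m2 : (k - 4) + 3 ∈ S := by
            rcases Nat.lt_or_ge ((k - 4) + 3) 6 with h | h
            · exact hS1 (hrange _ (by omega))
            · exact ih ((k - 4) + 3) (by omega) (by omega)
          have m3 : 2 + (k - 4) / 2 % 2 ∈ S := hS1 (hrange _ (by omega))
          have m4 : (k - 4) + 2 ∈ S := by
            rcases Nat.lt_or_ge ((k - 4) + 2) 6 with h | h
            · exact hS1 (hrange _ (by omega))
            · exact ih ((k - 4) + 2) (by omega) (by omega)
          rw [← hw]
          exact hS2 _ _ _ _ m1 m2 m3 m4
  · rintro P ⟨e, einj, emem, erel⟩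
    obtain ⟨p1, p2, p3, p4, h12, h13, h14, h23, h24, h34, hnc⟩ := P.nondeg
    obtain ⟨l12, ⟨i121, i122⟩, -⟩ := P.unique_line p1 p2 h12
    obtain ⟨l34, ⟨i343, i344⟩, -⟩ := P.unique_line p3 p4 h34
    obtain ⟨l13, ⟨i131, i133⟩, -⟩ := P.unique_line p1 p3 h13
    obtain ⟨l24, ⟨i242, i244⟩, -⟩ := P.unique_line p2 p4 h24
    obtain ⟨l14, ⟨i141, i144⟩, -⟩ := P.unique_line p1 p4 h14
    obtain ⟨l23, ⟨i232, i233⟩, -⟩ := P.unique_line p2 p3 h23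
    have hne_x : l12 ≠ l34 := by
      intro h; subst h
      exact (hnc l12).1 ⟨i121, i122, i343⟩
    have hne_y : l13 ≠ l24 := by
      intro h; subst h
      exact (hnc l13).2.2.1 ⟨i131, i133, i244⟩
    have hne_z : l14 ≠ l23 := by
      intro h; subst h
      exact (hnc l14).2.1 ⟨i141, i232, i144⟩
    obtain ⟨x, ⟨hx1, hx2⟩, -⟩ := P.unique_point l12 l34 hne_x
    obtain ⟨y, ⟨hy1, hy2⟩, -⟩ := P.unique_point l13 l24 hne_y
    obtain ⟨z, ⟨hz1, hz2⟩, -⟩ := P.unique_point l14 l23 hne_z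
    have hx_p1 : p1 ≠ x := fun h => (hnc l34).2.2.1 ⟨h ▸ hx2, i343, i344⟩
    have hx_p2 : p2 ≠ x := fun h => (hnc l34).2.2.2 ⟨h ▸ hx2, i343, i344⟩
    have hx_p3 : p3 ≠ x := fun h => (hnc l12).1 ⟨i121, i122, h ▸ hx1⟩
    have hx_p4 : p4 ≠ x := fun h => (hnc l12).2.1 ⟨i121, i122, h ▸ hx1⟩
    have hy_p1 : p1 ≠ y := fun h => (hnc l24).2.1 ⟨h ▸ hy2, i242, i244⟩
    have hy_p3 : p3 ≠ y := fun h => (hnc l24).2.2.2 ⟨i242, h ▸ hy2, i244⟩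
    have hy_p2 : p2 ≠ y := fun h => (hnc l13).1 ⟨i131, h ▸ hy1, i133⟩
    have hy_p4 : p4 ≠ y := fun h => (hnc l13).2.2.1 ⟨i131, i133, h ▸ hy1⟩
    have hz_p1 : p1 ≠ z := fun h => (hnc l23).1 ⟨h ▸ hz2, i232, i233⟩
    have hz_p4 : p4 ≠ z := fun h => (hnc l23).2.2.2 ⟨i232, i233, h ▸ hz2⟩
    have hz_p2 : p2 ≠ z := fun h => (hnc l14).2.1 ⟨i141, h ▸ hz1, i144⟩
    have hz_p3 : p3 ≠ z := fun h => (hnc l14).2.2.1 ⟨i141, h ▸ hz1, i144⟩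
    have F1 : Rn n (e p1) (e p2) (e x) :=
      (erel p1 p2 x).mp ⟨h12, hx_p1, hx_p2, l12, i121, i122, hx1⟩
    have F2 : Rn n (e p3) (e p4) (e x) :=
      (erel p3 p4 x).mp ⟨h34, hx_p3, hx_p4, l34, i343, i344, hx2⟩
    have F3 : Rn n (e p1) (e p3) (e y) :=
      (erel p1 p3 y).mp ⟨h13, hy_p1, hy_p3, l13, i131, i133, hy1⟩
    have F4 : Rn n (e p2) (e p4) (e y) :=
      (erel p2 p4 y).mp ⟨h24, hy_p2, hy_p4, l24, i242, i244, hy2⟩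
    have F5 : Rn n (e p1) (e p4) (e z) :=
      (erel p1 p4 z).mp ⟨h14, hz_p1, hz_p4, l14, i141, i144, hz1⟩
    have F6 : Rn n (e p2) (e p3) (e z) :=
      (erel p2 p3 z).mp ⟨h23, hz_p2, hz_p3, l23, i232, i233, hz2⟩
    have I1 := Rn_info F1
    have I2 := Rn_info F2
    have I3 := Rn_info F3
    have I4 := Rn_info F4
    have I5 := Rn_info F5
    have I6 := Rn_info F6
    have d12 := F1.1
    have d34 := F2.1
    have d13 := F3.1
    have d24 := F4.1
    have d14 := F5.1
    have d23 := F6.1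
    omega

end PaoliniMatroids
end

section
/- Let M_* be a countably infinite simple ∧-matroid of rank 3 that embeds every finite simple ∧-matroid of rank ≤ 3 and in which every isomorphism between finite substructures extends to an automorphism. Then the complete first-order theory of M_*, in the language with one ternary relation symbol R and one 4-ary function symbol ∧, is not ℵ0-categorical: there exist two countable models of this theory that are not isomorphic. -/
namespace PaoliniMatroids

open Function Set

/-- The single 4-ary function symbol (for ∧) of the language of simple ∧-matroids. -/
inductive matroidFun : ℕ → Type
  | wedge : matroidFun 4

/-- The single ternary relation symbol (for `R`) of the language of simple ∧-matroids. -/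
inductive matroidRel : ℕ → Type
  | dep : matroidRel 3

/-- The first-order language with one ternary relation symbol and one 4-ary function symbol. -/
def matroidLang : FirstOrder.Language := ⟨matroidFun, matroidRel⟩

/-- A simple ∧-matroid with domain the whole ambient type, viewed as a first-order
structure in `matroidLang`. -/
def wmStructure {V : Type*} (M : WM V) : matroidLang.Structure V where
  funMap | .wedge => fun x => M.wedge (x 0) (x 1) (x 2) (x 3)
  RelMap | .dep => fun x => M.R (x 0) (x 1) (x 2)

open FirstOrder



/- ### Auxiliary development for the proof ### -/

namespace Branch

abbrev P : Type := ℕ ⊕ ℕ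
variable (σ : ℕ → Bool) (N : ℕ)
def T : ℕ := 20 * N + 20

inductive Ln : Type
  | A (k : ℕ) | B (k : ℕ) | S1 (i : ℕ) | S2 (i : ℕ)

def onL : P → Ln → Prop
  | Sum.inl j, .A k => j = k ∨ j + 1 = k ∨ j + 4 = k
  | Sum.inr _, .A _ => False
  | Sum.inl j, .B k => j = k ∨ j + 2 = k ∨ j + 7 = k
  | Sum.inr _, .B _ => False
  | Sum.inl j, .S1 i => j = 20*i+20 ∨ j = 20*i+14
  | Sum.inr i', .S1 i => i' = i
  | Sum.inl j, .S2 i => j = 20*i+19 ∨ j = 20*i+11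
  | Sum.inr i', .S2 i => i' = i

def active : Ln → Prop
  | .A k => 7 ≤ k ∧ k ≤ T N
  | .B k => 7 ≤ k ∧ k ≤ T N
  | .S1 i => i < N ∧ σ i = true
  | .S2 i => i < N ∧ σ i = true

def carr : Set P := {x | match x with
  | Sum.inl k => k ≤ T N
  | Sum.inr i => i < N ∧ σ i = true}

lemma carr_finite : (carr σ N).Finite := by
  apply Set.Finite.subset (((Set.finite_Iic (T N)).image Sum.inl).union
    ((Set.finite_Iio N).image Sum.inr))
  rintro (k | i) h
  · exact Set.mem_union_left _ ⟨k, h, rfl⟩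
  · exact Set.mem_union_right _ ⟨i, h.1, rfl⟩

lemma mem_carr_of_onL {ℓ : Ln} (hact : active σ N ℓ) {x : P} (hx : onL x ℓ) :
    x ∈ carr σ N := by
  cases ℓ <;> rcases x with j | i <;>
    simp_all [onL, active, carr, T] <;> omega

lemma unique_line {ℓ₁ ℓ₂ : Ln} (h1 : active σ N ℓ₁) (h2 : active σ N ℓ₂)
    {x y : P} (hxy : x ≠ y) (hx1 : onL x ℓ₁) (hy1 : onL y ℓ₁)
    (hx2 : onL x ℓ₂) (hy2 : onL y ℓ₂) : ℓ₁ = ℓ₂ := by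
  cases ℓ₁ <;> cases ℓ₂ <;>
    rcases x with j | i <;> rcases y with j' | i' <;>
    simp_all [onL, active] <;> omega

/-- the collinearity relation of the branch matroid -/
def Rt (x y z : P) : Prop :=
  x ≠ y ∧ x ≠ z ∧ y ≠ z ∧ ∃ ℓ, active σ N ℓ ∧ onL x ℓ ∧ onL y ℓ ∧ onL z ℓ

lemma mem_lineOf_iff {x y z : P} :
    z ∈ lineOf (Rt σ N) x y ↔ z = x ∨ z = y ∨ Rt σ N x y z := by
  simp [lineOf, Set.mem_insert_iff, Set.mem_setOf_eq, or_assoc]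

lemma lineOf_eq_of_line {x y : P} (hxy : x ≠ y) {ℓ : Ln} (hact : active σ N ℓ)
    (hx : onL x ℓ) (hy : onL y ℓ) : lineOf (Rt σ N) x y = {z | onL z ℓ} := by
  ext z
  rw [Set.mem_setOf_eq, mem_lineOf_iff]
  constructor
  · rintro (rfl | rfl | hz)
    · exact hx
    · exact hy
    · obtain ⟨_, _, _, ℓ', hact', hx', hy', hz'⟩ := hz
      rwa [unique_line σ N hact hact' hxy hx hy hx' hy']
  · intro hz
    rcases eq_or_ne z x with rfl | hzx
    · exact Or.inl rfl
    rcases eq_or_ne z y with rfl | hzy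
    · exact Or.inr (Or.inl rfl)
    · exact Or.inr (Or.inr ⟨hxy, (Ne.symm hzx), (Ne.symm hzy), ℓ, hact, hx, hy, hz⟩)

lemma lineOf_eq_pair {x y : P} (hxy : x ≠ y)
    (h : ¬ ∃ ℓ, active σ N ℓ ∧ onL x ℓ ∧ onL y ℓ) :
    lineOf (Rt σ N) x y = {x, y} := by
  ext z
  rw [mem_lineOf_iff]
  constructor
  · rintro (rfl | rfl | hz)
    · exact Or.inl rfl
    · exact Or.inr rfl
    · obtain ⟨_, _, _, ℓ, hact, hx, hy, _⟩ := hz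
      exact absurd ⟨ℓ, hact, hx, hy⟩ h
  · rintro (rfl | rfl)
    · exact Or.inl rfl
    · exact Or.inr (Or.inl rfl)

open Classical in
/-- the wedge condition -/
def wcond (a b c d : P) : Prop :=
  a ≠ b ∧ c ≠ d ∧ lineOf (Rt σ N) a b ≠ lineOf (Rt σ N) c d ∧
    ∃ p, p ∈ lineOf (Rt σ N) a b ∧ p ∈ lineOf (Rt σ N) c d ∧ p ∉ ({a, b, c, d} : Set P)

open Classical in
noncomputable def wdg (a b c d : P) : P :=
  if h : wcond σ N a b c d then h.2.2.2.choose else a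

lemma wdg_spec {a b c d : P} (h : wcond σ N a b c d) :
    wdg σ N a b c d ∈ lineOf (Rt σ N) a b ∧ wdg σ N a b c d ∈ lineOf (Rt σ N) c d ∧
      wdg σ N a b c d ∉ ({a, b, c, d} : Set P) := by
  rw [wdg, dif_pos h]
  exact h.2.2.2.choose_spec

lemma wdg_eq_of_not {a b c d : P} (h : ¬ wcond σ N a b c d) : wdg σ N a b c d = a := by
  rw [wdg, dif_neg h]

noncomputable def wM : WM P where
  carrier := carr σ N
  R := Rt σ N
  wedge := wdg σ N
  R_mem := by
    rintro a b c ⟨_, _, _, ℓ, hact, ha, hb, hc⟩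
    exact ⟨mem_carr_of_onL σ N hact ha, mem_carr_of_onL σ N hact hb,
      mem_carr_of_onL σ N hact hc⟩
  wedge_mem := by
    intro a b c d ha hb hc hd
    by_cases h : wcond σ N a b c d
    · obtain ⟨h1, _, _⟩ := wdg_spec σ N h
      rw [mem_lineOf_iff] at h1
      rcases h1 with h1 | h1 | hr
      · rw [h1]; exact ha
      · rw [h1]; exact hb
      · obtain ⟨_, _, _, ℓ, hact, _, _, hp⟩ := hr
        exact mem_carr_of_onL σ N hact hp
    · rw [wdg_eq_of_not σ N h]; exact ha
  irrefl := fun a b c h => ⟨h.1, h.2.1, h.2.2.1⟩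
  symm_swap := by
    rintro a b c ⟨h1, h2, h3, ℓ, hact, ha, hb, hc⟩
    exact ⟨h1.symm, h3, h2, ℓ, hact, hb, ha, hc⟩
  symm_rot := by
    rintro a b c ⟨h1, h2, h3, ℓ, hact, ha, hb, hc⟩
    exact ⟨h3, h1.symm, h2.symm, ℓ, hact, hb, hc, ha⟩
  exchange := by
    rintro a b c d ⟨hab, _, _, ℓ, hact, ha, hb, hc⟩ ⟨_, _, _, ℓ', hact', ha', hb', hd⟩
    have : ℓ = ℓ' := unique_line σ N hact hact' hab ha hb ha' hb'
    subst this
    intro x y z hx hy hz hxy hxz hyz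
    have hon : ∀ w, w ∈ ({a, b, c, d} : Set P) → onL w ℓ := by
      rintro w (rfl | rfl | rfl | rfl)
      exacts [ha, hb, hc, hd]
    exact ⟨hxy, hxz, hyz, ℓ, hact, hon x hx, hon y hy, hon z hz⟩
  wedge_det := by
    intro a b c d _ _ _ _
    by_cases h : wcond σ N a b c d
    · obtain ⟨h1, h2, h3⟩ := wdg_spec σ N h
      exact Or.inl ⟨h.1, h.2.1, h.2.2.1, h1, h2, h3⟩
    · refine Or.inr ⟨wdg_eq_of_not σ N h, ?_⟩
      rintro ⟨p, hab, hcd, hll, hp1, hp2, hp3⟩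
      exact h ⟨hab, hcd, hll, p, hp1, hp2, hp3⟩

lemma line_of_pairA {a : ℕ} {ℓ : Ln} (h1 : onL (Sum.inl (a+6)) ℓ)
    (h2 : onL (Sum.inl (a+3)) ℓ) : ℓ = Ln.A (a+7) := by
  cases ℓ <;> simp_all [onL] <;> omega

lemma line_of_pairB {a : ℕ} {ℓ : Ln} (h1 : onL (Sum.inl (a+5)) ℓ)
    (h2 : onL (Sum.inl a) ℓ) : ℓ = Ln.B (a+7) := by
  cases ℓ <;> simp_all [onL] <;> omega

lemma line_of_pairS1 {i : ℕ} {ℓ : Ln} (h1 : onL (Sum.inl (20*i+20)) ℓ)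
    (h2 : onL (Sum.inl (20*i+14)) ℓ) : ℓ = Ln.S1 i := by
  cases ℓ <;> simp_all [onL] <;> omega

lemma line_of_pairS2 {i : ℕ} {ℓ : Ln} (h1 : onL (Sum.inl (20*i+19)) ℓ)
    (h2 : onL (Sum.inl (20*i+11)) ℓ) : ℓ = Ln.S2 i := by
  cases ℓ <;> simp_all [onL] <;> omega

lemma spine_wedge (a : ℕ) (h7 : a + 7 ≤ T N) :
    wdg σ N (Sum.inl (a+6)) (Sum.inl (a+3)) (Sum.inl (a+5)) (Sum.inl a) = Sum.inl (a+7) := by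
  have hactA : active σ N (Ln.A (a+7)) := ⟨by omega, h7⟩
  have hactB : active σ N (Ln.B (a+7)) := ⟨by omega, h7⟩
  have hne1 : (Sum.inl (a+6) : P) ≠ Sum.inl (a+3) := by simp
  have hne2 : (Sum.inl (a+5) : P) ≠ Sum.inl a := by simp
  have hA1 : onL (Sum.inl (a+6)) (Ln.A (a+7)) := by simp [onL]
  have hA2 : onL (Sum.inl (a+3)) (Ln.A (a+7)) := by simp [onL]
  have hB1 : onL (Sum.inl (a+5)) (Ln.B (a+7)) := by simp [onL]
  have hB2 : onL (Sum.inl a) (Ln.B (a+7)) := by simp [onL]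
  have hLA : lineOf (Rt σ N) (Sum.inl (a+6)) (Sum.inl (a+3)) = {z | onL z (Ln.A (a+7))} :=
    lineOf_eq_of_line σ N hne1 hactA hA1 hA2
  have hLB : lineOf (Rt σ N) (Sum.inl (a+5)) (Sum.inl a) = {z | onL z (Ln.B (a+7))} :=
    lineOf_eq_of_line σ N hne2 hactB hB1 hB2
  have hll : lineOf (Rt σ N) (Sum.inl (a+6)) (Sum.inl (a+3)) ≠
      lineOf (Rt σ N) (Sum.inl (a+5)) (Sum.inl a) := by
    rw [hLA, hLB]
    intro hEq
    have : (Sum.inl (a+6) : P) ∈ {z | onL z (Ln.B (a+7))} := hEq ▸ hA1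
    rw [Set.mem_setOf_eq] at this
    simp [onL] at this
  have hcond : wcond σ N (Sum.inl (a+6)) (Sum.inl (a+3)) (Sum.inl (a+5)) (Sum.inl a) := by
    refine ⟨hne1, hne2, hll, Sum.inl (a+7), ?_, ?_, ?_⟩
    · rw [hLA]; simp [onL]
    · rw [hLB]; simp [onL]
    · simp only [Set.mem_insert_iff, Set.mem_singleton_iff]
      push_neg
      refine ⟨by simp, by simp, by simp, by simp⟩
  obtain ⟨hp1, hp2, _⟩ := wdg_spec σ N hcond
  rw [hLA, Set.mem_setOf_eq] at hp1
  rw [hLB, Set.mem_setOf_eq] at hp2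
  rcases hw : wdg σ N (Sum.inl (a+6)) (Sum.inl (a+3)) (Sum.inl (a+5)) (Sum.inl a) with j | i <;>
    rw [hw] at hp1 hp2 <;> simp_all [onL] <;> omega

lemma switch_on (i : ℕ) (hi : i < N) (hσ : σ i = true) :
    wdg σ N (Sum.inl (20*i+20)) (Sum.inl (20*i+14)) (Sum.inl (20*i+19)) (Sum.inl (20*i+11)) =
      Sum.inr i := by
  have hactA : active σ N (Ln.S1 i) := ⟨hi, hσ⟩
  have hactB : active σ N (Ln.S2 i) := ⟨hi, hσ⟩
  have hne1 : (Sum.inl (20*i+20) : P) ≠ Sum.inl (20*i+14) := by simp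
  have hne2 : (Sum.inl (20*i+19) : P) ≠ Sum.inl (20*i+11) := by simp
  have hA1 : onL (Sum.inl (20*i+20)) (Ln.S1 i) := by simp [onL]
  have hA2 : onL (Sum.inl (20*i+14)) (Ln.S1 i) := by simp [onL]
  have hB1 : onL (Sum.inl (20*i+19)) (Ln.S2 i) := by simp [onL]
  have hB2 : onL (Sum.inl (20*i+11)) (Ln.S2 i) := by simp [onL]
  have hLA : lineOf (Rt σ N) (Sum.inl (20*i+20)) (Sum.inl (20*i+14)) = {z | onL z (Ln.S1 i)} :=
    lineOf_eq_of_line σ N hne1 hactA hA1 hA2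
  have hLB : lineOf (Rt σ N) (Sum.inl (20*i+19)) (Sum.inl (20*i+11)) = {z | onL z (Ln.S2 i)} :=
    lineOf_eq_of_line σ N hne2 hactB hB1 hB2
  have hll : lineOf (Rt σ N) (Sum.inl (20*i+20)) (Sum.inl (20*i+14)) ≠
      lineOf (Rt σ N) (Sum.inl (20*i+19)) (Sum.inl (20*i+11)) := by
    rw [hLA, hLB]
    intro hEq
    have : (Sum.inl (20*i+20) : P) ∈ {z | onL z (Ln.S2 i)} := hEq ▸ hA1
    rw [Set.mem_setOf_eq] at this
    simp [onL] at this
  have hcond : wcond σ N (Sum.inl (20*i+20)) (Sum.inl (20*i+14)) (Sum.inl (20*i+19))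
      (Sum.inl (20*i+11)) := by
    refine ⟨hne1, hne2, hll, Sum.inr i, ?_, ?_, ?_⟩
    · rw [hLA]; simp [onL]
    · rw [hLB]; simp [onL]
    · simp only [Set.mem_insert_iff, Set.mem_singleton_iff]
      push_neg
      refine ⟨by simp, by simp, by simp, by simp⟩
  obtain ⟨hp1, hp2, _⟩ := wdg_spec σ N hcond
  rw [hLA, Set.mem_setOf_eq] at hp1
  rw [hLB, Set.mem_setOf_eq] at hp2
  rcases hw : wdg σ N (Sum.inl (20*i+20)) (Sum.inl (20*i+14)) (Sum.inl (20*i+19))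
      (Sum.inl (20*i+11)) with j | i' <;>
    rw [hw] at hp1 hp2 <;> simp_all [onL] <;> omega

lemma switch_off (i : ℕ) (h : ¬ (i < N ∧ σ i = true)) :
    wdg σ N (Sum.inl (20*i+20)) (Sum.inl (20*i+14)) (Sum.inl (20*i+19)) (Sum.inl (20*i+11)) =
      Sum.inl (20*i+20) := by
  apply wdg_eq_of_not
  rintro ⟨hab, hcd, hll, p, hp1, hp2, hp3⟩
  have hnoline : ¬ ∃ ℓ, active σ N ℓ ∧ onL (Sum.inl (20*i+20)) ℓ ∧
      onL (Sum.inl (20*i+14)) ℓ := by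
    rintro ⟨ℓ, hact, h1, h2⟩
    rw [line_of_pairS1 h1 h2] at hact
    exact h hact
  rw [lineOf_eq_pair σ N hab hnoline] at hp1
  rcases hp1 with rfl | rfl
  · exact hp3 (Or.inl rfl)
  · exact hp3 (Or.inr (Or.inl rfl))

end Branch

namespace Branch

/-- the term naming the k-th spine point -/
def tau : ℕ → matroidLang.Term (Fin 7)
  | k =>
    if h : k < 7 then FirstOrder.Language.Term.var ⟨k, h⟩
    else
      FirstOrder.Language.Term.func matroidFun.wedge
        ![tau (k-1), tau (k-4), tau (k-2), tau (k-7)]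
  decreasing_by all_goals omega

/-- the term for the i-th switch wedge -/
def switchTerm (i : ℕ) : matroidLang.Term (Fin 7) :=
  FirstOrder.Language.Term.func matroidFun.wedge
    ![tau (20*i+20), tau (20*i+14), tau (20*i+19), tau (20*i+11)]

/-- the i-th switch formula (b = branch bit) -/
def Fml (i : ℕ) (b : Bool) : matroidLang.Formula (Fin 7) :=
  if b then (FirstOrder.Language.Term.equal (switchTerm i) (tau (20*i+20))).not
  else FirstOrder.Language.Term.equal (switchTerm i) (tau (20*i+20))

end Branch

namespace Branch

section Realize

variable {V : Type} (M : WM V)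

/-- term realization in `V` w.r.t. the `wmStructure` -/
def real (v : Fin 7 → V) (t : matroidLang.Term (Fin 7)) : V :=
  @FirstOrder.Language.Term.realize matroidLang V (wmStructure M) (Fin 7) v t

/-- formula realization in `V` w.r.t. the `wmStructure` -/
def frml (v : Fin 7 → V) (φ : matroidLang.Formula (Fin 7)) : Prop :=
  @FirstOrder.Language.Formula.Realize matroidLang V (wmStructure M) (Fin 7) φ v

lemma real_var (v : Fin 7 → V) (j : Fin 7) :
    real M v (FirstOrder.Language.Term.var j) = v j := rfl

lemma real_wedge (v : Fin 7 → V) (t0 t1 t2 t3 : matroidLang.Term (Fin 7)) :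
    real M v (FirstOrder.Language.Term.func matroidFun.wedge ![t0, t1, t2, t3]) =
      M.wedge (real M v t0) (real M v t1) (real M v t2) (real M v t3) := by
  simp only [real, FirstOrder.Language.Term.realize]
  rfl

lemma frml_equal (v : Fin 7 → V) (t1 t2 : matroidLang.Term (Fin 7)) :
    frml M v (FirstOrder.Language.Term.equal t1 t2) ↔ real M v t1 = real M v t2 := by
  letI := wmStructure M
  exact FirstOrder.Language.Formula.realize_equal

lemma frml_not (v : Fin 7 → V) (φ : matroidLang.Formula (Fin 7)) :
    frml M v φ.not ↔ ¬ frml M v φ := by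
  letI := wmStructure M
  exact FirstOrder.Language.Formula.realize_not

variable (σ : ℕ → Bool) (N : ℕ) {f : P → V} (hf : IsEmb (wM σ N) M f)

lemma inl_mem_carr {k : ℕ} (h : k ≤ T N) : (Sum.inl k : P) ∈ (wM σ N).carrier := h

include hf in
lemma realize_tau : ∀ k, k ≤ T N →
    real M (fun j => f (Sum.inl (j : ℕ))) (tau k) = f (Sum.inl k) := by
  intro k
  induction k using Nat.strong_induction_on with
  | _ k ih =>
    intro hk
    by_cases h7 : k < 7
    · rw [tau, dif_pos h7, real_var]
    · push_neg at h7
      obtain ⟨a, rfl⟩ : ∃ a, k = a + 7 := ⟨k - 7, by omega⟩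
      rw [tau, dif_neg (by omega)]
      have e1 : a + 7 - 1 = a + 6 := by omega
      have e2 : a + 7 - 4 = a + 3 := by omega
      have e3 : a + 7 - 2 = a + 5 := by omega
      have e4 : a + 7 - 7 = a := by omega
      rw [e1, e2, e3, e4, real_wedge,
        ih (a+6) (by omega) (by omega), ih (a+3) (by omega) (by omega),
        ih (a+5) (by omega) (by omega), ih a (by omega) (by omega),
        ← hf.wedge _ (inl_mem_carr σ N (by omega)) _ (inl_mem_carr σ N (by omega))
          _ (inl_mem_carr σ N (by omega)) _ (inl_mem_carr σ N (by omega))]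
      show f ((wM σ N).wedge _ _ _ _) = _
      rw [show (wM σ N).wedge (Sum.inl (a+6)) (Sum.inl (a+3)) (Sum.inl (a+5)) (Sum.inl a)
          = wdg σ N (Sum.inl (a+6)) (Sum.inl (a+3)) (Sum.inl (a+5)) (Sum.inl a) from rfl,
        spine_wedge σ N a hk]

include hf in
lemma realize_switchTerm (i : ℕ) (hi : i < N) :
    real M (fun j => f (Sum.inl (j : ℕ))) (switchTerm i) =
      f (wdg σ N (Sum.inl (20*i+20)) (Sum.inl (20*i+14)) (Sum.inl (20*i+19))
        (Sum.inl (20*i+11))) := by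
  have hT : 20*i+20 ≤ T N := by simp [T]; omega
  rw [switchTerm, real_wedge,
    realize_tau M σ N hf _ hT, realize_tau M σ N hf _ (by simp [T]; omega),
    realize_tau M σ N hf _ (by simp [T]; omega), realize_tau M σ N hf _ (by simp [T]; omega),
    ← hf.wedge _ (inl_mem_carr σ N hT) _ (inl_mem_carr σ N (by simp [T]; omega))
      _ (inl_mem_carr σ N (by simp [T]; omega)) _ (inl_mem_carr σ N (by simp [T]; omega))]
  rfl

include hf in
lemma realize_Fml (i : ℕ) (hi : i < N) :
    frml M (fun j => f (Sum.inl (j : ℕ))) (Fml i (σ i)) := by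
  have hT : 20*i+20 ≤ T N := by simp [T]; omega
  have htau := realize_tau M σ N hf (20*i+20) hT
  have hsw := realize_switchTerm M σ N hf i hi
  cases hσ : σ i with
  | false =>
    rw [Fml, if_neg (by simp), frml_equal, hsw, htau, switch_off σ N i (by simp [hσ])]
  | true =>
    rw [Fml, if_pos (by simp), frml_not, frml_equal, hsw, htau, switch_on σ N i hi hσ]
    intro hEq
    have := hf.inj _ (show (Sum.inr i : P) ∈ carr σ N from ⟨hi, hσ⟩) _
      (inl_mem_carr σ N hT) hEq
    simp at this

end Realize

end Branch

instance : Subsingleton (Σ l, matroidFun l) := by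
  constructor
  rintro ⟨_, a⟩ ⟨_, b⟩
  cases a; cases b; rfl

instance : Subsingleton (Σ l, matroidRel l) := by
  constructor
  rintro ⟨_, a⟩ ⟨_, b⟩
  cases a; cases b; rfl

instance : Countable matroidLang.Symbols :=
  haveI h1 : Countable ((l : ℕ) × matroidLang.Functions l) :=
    inferInstanceAs (Countable (Σ l, matroidFun l))
  haveI h2 : Countable ((l : ℕ) × matroidLang.Relations l) :=
    inferInstanceAs (Countable (Σ l, matroidRel l))
  inferInstanceAs (Countable (((l : ℕ) × matroidLang.Functions l) ⊕
    ((l : ℕ) × matroidLang.Relations l)))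

lemma matroidLang_card_le : matroidLang.card ≤ Cardinal.aleph0 :=
  Cardinal.mk_le_aleph0

section Main

open FirstOrder FirstOrder.Language

variable {V : Type} [Countable V] [Infinite V] (M : WM V)

lemma exists_witness
    (hembed : ∀ (W : Type) (Nw : WM W), Nw.carrier.Finite → ∃ f : W → V, IsEmb Nw M f)
    (σ : ℕ → Bool) (N : ℕ) :
    ∃ v : Fin 7 → V, ∀ i < N, Branch.frml M v (Branch.Fml i (σ i)) := by
  obtain ⟨f, hf⟩ := hembed Branch.P (Branch.wM σ N) (Branch.carr_finite σ N)
  exact ⟨fun j => f (Sum.inl (j : ℕ)), fun i hi => Branch.realize_Fml M σ N hf i hi⟩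

lemma exists_omitted
    (hembed : ∀ (W : Type) (Nw : WM W), Nw.carrier.Finite → ∃ f : W → V, IsEmb Nw M f) :
    ∃ σ : ℕ → Bool, ¬ ∃ v : Fin 7 → V, ∀ i, Branch.frml M v (Branch.Fml i (σ i)) := by
  by_contra hcon
  push_neg at hcon
  choose w hw using hcon
  have hinj : Function.Injective w := by
    intro σ σ' hEq
    funext i
    by_contra hne
    have hcontra : ∀ v, Branch.frml M v (Branch.Fml i true) →
        Branch.frml M v (Branch.Fml i false) → False := by
      intro v h1 h2
      rw [Branch.Fml, if_pos rfl] at h1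
      rw [Branch.Fml, if_neg (by simp)] at h2
      exact (Branch.frml_not M v _).mp h1 h2
    have h1 := hw σ i
    have h2 := hw σ' i
    rw [hEq] at h1
    rcases hb : σ i with _ | _ <;> rcases hb' : σ' i with _ | _ <;>
        rw [hb] at h1 hne <;> rw [hb'] at h2 hne
    · exact hne rfl
    · exact hcontra _ h2 h1
    · exact hcontra _ h1 h2
    · exact hne rfl
  haveI : Countable (ℕ → Bool) := Function.Injective.countable hinj
  obtain ⟨g, hg⟩ := exists_surjective_nat (ℕ → Bool)
  obtain ⟨n, hn⟩ := hg (fun n => !(g n n))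
  have := congrFun hn n
  simp at this

end Main

/-- the complete first-order theory of the universal homogeneous simple
∧-matroid of rank 3 is not ℵ₀-categorical. -/
theorem not_aleph0_categorical (V : Type) [Countable V] [Infinite V] (M : WM V)
    (hcar : M.carrier = Set.univ) (hrk : Rank3 M)
    (hembed : ∀ (W : Type) (N : WM W), N.carrier.Finite → ∃ f : W → V, IsEmb N M f)
    (hhom : ∀ A B : WM V, Sub A M → Sub B M → A.carrier.Finite → B.carrier.Finite →
      ∀ f : V → V, IsIso A B f →
        ∃ g : V → V, IsAut M g ∧ ∀ x ∈ A.carrier, g x = f x) :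
    letI : matroidLang.Structure V := wmStructure M
    ∃ (W₁ W₂ : Type) (S₁ : matroidLang.Structure W₁) (S₂ : matroidLang.Structure W₂),
      Countable W₁ ∧ Countable W₂ ∧
      (letI := S₁; W₁ ⊨ matroidLang.completeTheory V) ∧
      (letI := S₂; W₂ ⊨ matroidLang.completeTheory V) ∧
      (letI := S₁; letI := S₂; IsEmpty (W₁ ≃[matroidLang] W₂)) := by
  letI : matroidLang.Structure V := wmStructure M
  classical
  -- choose a branch whose full switch-type is omitted in `V`
  obtain ⟨σ, hσ⟩ := exists_omitted M hembed
  -- an ultrapower of `V` realizing the full branch type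
  let u : Ultrafilter ℕ := Filter.hyperfilter ℕ
  letI iV : matroidLang.Structure V := wmStructure M
  letI : ∀ a : ℕ, matroidLang.Structure ((fun _ : ℕ => V) a) := fun _ => iV
  letI : ∀ a : ℕ, Nonempty ((fun _ : ℕ => V) a) := fun _ => inferInstance
  choose w hw using exists_witness M hembed σ
  let x : Fin 7 → (∀ _ : ℕ, V) := fun j a => w a j
  let Q := (u : Filter ℕ).Product (fun _ : ℕ => V)
  let xq : Fin 7 → Q :=
    fun j => @Quotient.mk' _ (Filter.productSetoid (u : Filter ℕ) (fun _ : ℕ => V)) (x j)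
  have hreal : ∀ i : ℕ, (Branch.Fml i (σ i)).Realize xq := by
    intro i
    have : ((Branch.Fml i (σ i)).Realize fun j =>
          (@Quotient.mk' _ (Filter.productSetoid (u : Filter ℕ) (fun _ : ℕ => V)) (x j) : Q)) ↔
        ∀ᶠ a in (u : Filter ℕ), (Branch.Fml i (σ i)).Realize fun j => x j a :=
      FirstOrder.Language.Ultraproduct.realize_formula_cast (Branch.Fml i (σ i)) x
    refine this.mpr ?_
    apply Filter.Eventually.filter_mono Nat.hyperfilter_le_atTop
    filter_upwards [Filter.eventually_ge_atTop (i + 1)] with a ha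
    exact hw a i (by omega)
  have hQT : Q ⊨ matroidLang.completeTheory V := by
    rw [FirstOrder.Language.Theory.model_iff]
    intro φ hφ
    rw [FirstOrder.Language.Ultraproduct.sentence_realize]
    exact Filter.Eventually.of_forall fun a => FirstOrder.Language.mem_completeTheory.mp hφ
  -- downward Löwenheim–Skolem within the ultrapower
  have hinfQ : Cardinal.aleph0 ≤ Cardinal.mk Q := by
    have hinj : Function.Injective
        (fun n : ℕ => (@Quotient.mk' _ (Filter.productSetoid (u : Filter ℕ) (fun _ : ℕ => V))
          (fun _ : ℕ => (Infinite.natEmbedding V) n) : Q)) := by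
      intro n n' h
      have h' := @Quotient.eq' _ (Filter.productSetoid (u : Filter ℕ) (fun _ : ℕ => V)) _ _ |>.mp h
      obtain ⟨a, ha⟩ := h'.exists
      exact (Infinite.natEmbedding V).injective ha
    haveI : Infinite Q := Infinite.of_injective _ hinj
    exact Cardinal.aleph0_le_mk Q
  obtain ⟨S, hS1, hS2⟩ := FirstOrder.Language.exists_elementarySubstructure_card_eq matroidLang
    (Set.range xq) (Cardinal.aleph0 : Cardinal.{0}) le_rfl
    (by
      first
      | (simp only [Cardinal.lift_id]
         exact (Cardinal.mk_le_aleph0_iff.mpr (Set.countable_range xq).to_subtype))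
      | exact (Cardinal.mk_le_aleph0_iff.mpr (Set.countable_range xq).to_subtype))
    (by first | simpa using matroidLang_card_le | exact matroidLang_card_le)
    (by first | simpa using hinfQ | exact hinfQ)
  haveI hScount : Countable S := by
    simp only [Cardinal.lift_id] at hS2
    exact Cardinal.mk_le_aleph0_iff.mp hS2.le
  -- the tuple realizing the branch type, inside `S`
  let ws : Fin 7 → S := fun j => ⟨xq j, hS1 ⟨j, rfl⟩⟩
  have hrealS : ∀ i : ℕ, (Branch.Fml i (σ i)).Realize ws := by
    intro i
    have hmap := S.subtype.map_formula (Branch.Fml i (σ i)) ws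
    have hco : (S.subtype : S → Q) ∘ ws = xq := by
      funext j
      rfl
    rw [hco] at hmap
    exact hmap.mp (hreal i)
  refine ⟨V, S, wmStructure M, inferInstance, inferInstance, hScount,
    inferInstance, (S.theory_model_iff (matroidLang.completeTheory V)).mpr hQT, ?_⟩
  constructor
  intro F
  apply hσ
  refine ⟨fun j => F.symm (ws j), fun i => ?_⟩
  have hmap := F.toElementaryEmbedding.map_formula (Branch.Fml i (σ i))
    (fun j => F.symm (ws j))
  have hco : (F.toElementaryEmbedding : V → S) ∘ (fun j => F.symm (ws j)) = ws := by
    funext j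
    exact F.apply_symm_apply (ws j)
  rw [hco] at hmap
  exact hmap.mp (hrealS i)
end PaoliniMatroids
end
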